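/- arXiv:1310.5206 — 10 statements merged into one kernel-verified Lean document; each statement's English description precedes it below -/
import Mathlib

section
/- For every c ∈ (0,1] and p ∈ (0,1] with f(c,p) ≤ 0 one has: ∂f/∂p(c,p) ≤ −√((K_M(c)−K_N(c))² + 4K_M(c)K_P(c)) < 0, ∂f/∂c(c,p) > 0, ∂g/∂p(c,p) = K_M(c) > 0, and ∂g/∂c(c,p) > 0. (This is the pointwise content of Lemma 3.1: at the radial stationary solution f(c_s(r),p_s(r)) = v_s(r)p_s'(r) ≤ 0 with 0 < c_s ≤ 1 and 0 < p_s ≤ 1, whence f_p* < 0, f_c* > 0, g_p* > 0, g_c* > 0.) -/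
open Set Real

/-- Lemma 3.1 (pointwise content): for `c ∈ (0,1]`, `p ∈ (0,1]` with `f(c,p) ≤ 0`,
the partial derivatives of `f` and `g` satisfy
`f_p ≤ -√((K_M-K_N)² + 4 K_M K_P) < 0`, `f_c > 0`, `g_p = K_M > 0`, `g_c > 0`. -/
theorem stmt_0
    (KB KD KP KQ KB' KD' KP' KQ' : ℝ → ℝ)
    (hKB : ∀ c ∈ Icc (0:ℝ) 1, HasDerivAt KB (KB' c) c)
    (hKD : ∀ c ∈ Icc (0:ℝ) 1, HasDerivAt KD (KD' c) c)
    (hKP : ∀ c ∈ Icc (0:ℝ) 1, HasDerivAt KP (KP' c) c)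
    (hKQ : ∀ c ∈ Icc (0:ℝ) 1, HasDerivAt KQ (KQ' c) c)
    (hKB' : ∀ c ∈ Icc (0:ℝ) 1, 0 < KB' c)
    (hKD' : ∀ c ∈ Icc (0:ℝ) 1, KD' c < 0)
    (hKP' : ∀ c ∈ Icc (0:ℝ) 1, 0 < KP' c)
    (hKQ' : ∀ c ∈ Icc (0:ℝ) 1, KQ' c < 0)
    (hKB0 : KB 0 = 0) (hKD1 : KD 1 = 0) (hKP0 : KP 0 = 0) (hKQ1 : KQ 1 = 0)
    (hKBD' : ∀ c ∈ Icc (0:ℝ) 1, 0 < KB' c + KD' c)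
    -- the combined rates and the nonlinearities
    (KM KN : ℝ → ℝ) (hKM : KM = fun c => KB c + KD c) (hKN : KN = fun c => KP c + KQ c)
    (f g fp fc gp gc : ℝ → ℝ → ℝ)
    (hf : f = fun c p => KP c + (KM c - KN c) * p - KM c * p ^ 2)
    (hg : g = fun c p => KM c * p - KD c)
    (hfp : fp = fun c p => KM c - KN c - 2 * KM c * p)
    (hfc : fc = fun c p => KP' c + ((KB' c + KD' c) - (KP' c + KQ' c)) * p
      - (KB' c + KD' c) * p ^ 2)
    (hgp : gp = fun c _p => KM c)
    (hgc : gc = fun c p => (KB' c + KD' c) * p - KD' c)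
    (c p : ℝ) (hc : c ∈ Ioc (0:ℝ) 1) (hp : p ∈ Ioc (0:ℝ) 1) (hfneg : f c p ≤ 0) :
    fp c p ≤ -Real.sqrt ((KM c - KN c) ^ 2 + 4 * KM c * KP c) ∧
    -Real.sqrt ((KM c - KN c) ^ 2 + 4 * KM c * KP c) < 0 ∧
    0 < fc c p ∧
    gp c p = KM c ∧ 0 < KM c ∧
    0 < gc c p := by

  obtain ⟨hc0, hc1⟩ := hc
  obtain ⟨hp0, hp1⟩ := hp
  have hcI : c ∈ Icc (0:ℝ) 1 := ⟨hc0.le, hc1⟩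
  have h0I : (0:ℝ) ∈ Icc (0:ℝ) 1 := by norm_num
  have h1I : (1:ℝ) ∈ Icc (0:ℝ) 1 := by norm_num
  have hconv : Convex ℝ (Icc (0:ℝ) 1) := convex_Icc 0 1
  have hmonoKB : StrictMonoOn KB (Icc 0 1) := by
    apply strictMonoOn_of_deriv_pos hconv
    · exact fun x hx => (hKB x hx).continuousAt.continuousWithinAt
    · intro x hx
      rw [interior_Icc] at hx
      rw [(hKB x (Ioo_subset_Icc_self hx)).deriv]
      exact hKB' x (Ioo_subset_Icc_self hx)
  have hmonoKP : StrictMonoOn KP (Icc 0 1) := by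
    apply strictMonoOn_of_deriv_pos hconv
    · exact fun x hx => (hKP x hx).continuousAt.continuousWithinAt
    · intro x hx
      rw [interior_Icc] at hx
      rw [(hKP x (Ioo_subset_Icc_self hx)).deriv]
      exact hKP' x (Ioo_subset_Icc_self hx)
  have hantiKD : StrictAntiOn KD (Icc 0 1) := by
    apply strictAntiOn_of_deriv_neg hconv
    · exact fun x hx => (hKD x hx).continuousAt.continuousWithinAt
    · intro x hx
      rw [interior_Icc] at hx
      rw [(hKD x (Ioo_subset_Icc_self hx)).deriv]
      exact hKD' x (Ioo_subset_Icc_self hx)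
  have hKBpos : 0 < KB c := by
    have := hmonoKB h0I hcI hc0
    rwa [hKB0] at this
  have hKPpos : 0 < KP c := by
    have := hmonoKP h0I hcI hc0
    rwa [hKP0] at this
  have hKDnn : 0 ≤ KD c := by
    rcases eq_or_lt_of_le hc1 with h | h
    · rw [h, hKD1]
    · have := hantiKD hcI h1I h
      rw [hKD1] at this
      linarith
  have hMpos : 0 < KM c := by rw [hKM]; dsimp; linarith
  subst hf hfp hfc hgp hgc
  dsimp only
  set M := KM c with hMdef
  set b := KM c - KN c with hbdef
  set P := KP c with hPdef
  have hfneg' : P + b * p - M * p ^ 2 ≤ 0 := hfneg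
  have hDpos : 0 < b ^ 2 + 4 * M * P := by nlinarith [sq_nonneg b, mul_pos hMpos hKPpos]
  have hpos : 0 ≤ 2 * M * p - b := by nlinarith [mul_pos hMpos hp0, mul_pos (mul_pos hMpos hp0) hp0]
  have hkey : b ^ 2 + 4 * M * P ≤ (2 * M * p - b) ^ 2 := by nlinarith [mul_pos hMpos hp0]
  have hsq : Real.sqrt (b ^ 2 + 4 * M * P) ≤ 2 * M * p - b := by
    calc Real.sqrt (b ^ 2 + 4 * M * P) ≤ Real.sqrt ((2 * M * p - b) ^ 2) :=
          Real.sqrt_le_sqrt hkey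
      _ = 2 * M * p - b := Real.sqrt_sq hpos
  have hsqrtpos : 0 < Real.sqrt (b ^ 2 + 4 * M * P) := Real.sqrt_pos.mpr hDpos
  refine ⟨by linarith, by linarith, ?_, rfl, hMpos, ?_⟩
  · nlinarith [mul_nonneg (hKP' c hcI).le (sub_nonneg.mpr hp1),
      mul_nonneg (mul_nonneg (hKBD' c hcI).le hp0.le) (sub_nonneg.mpr hp1),
      mul_pos (neg_pos.mpr (hKQ' c hcI)) hp0]
  · nlinarith [mul_pos (hKBD' c hcI) hp0, hKD' c hcI]
end

section
/- Let n ≥ 2 be an integer and assume k_B > k_D ≥ 2k_Q > 0, k_B > k_P, and k_B k_Q ≤ k_D k_P. Then for every c ∈ (0,1) the inequality K_M(c) − K_N(c) + (n+1)·√((K_M(c)−K_N(c))² + 4K_M(c)K_P(c)) > 2K_D(c) holds; equivalently, n[K_M(c)−K_N(c)] + 2K_D(c) < 2(n+1)K_M(c)α(c). (This is the key inequality proved in Lemma 3.2; applied at c = c_s(0) it shows θ = f_p*(0)/v_s'(0) > 2, hence p_s'(r) = (c_0+o(1))r as r → 0⁺.) -/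
/-!
Write `D = K_M − K_N` and `S = √(D² + 4 K_M K_P)`. Since `K_M K_P ≥ 0` we have `S ≥ |D|`, so for
`n ≥ 2` the left-hand side `D + (n+1) S` is at least `4D`. On the other hand `k_D ≥ 2k_Q` and
`k_B > k_P` give `K_D < 2D`. The second inequality is the first one rewritten, because
`2 K_M α = D + S`.
-/

open Set Real

theorem two_mul_lt_add_mul_sqrt {D M P K n : ℝ} (hn : 2 ≤ n) (hMP : 0 ≤ M * P)
    (hK : K < 2 * D) : 2 * K < D + (n + 1) * √(D ^ 2 + 4 * M * P) := by
  have hS : |D| ≤ √(D ^ 2 + 4 * M * P) := Real.abs_le_sqrt (by nlinarith)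
  have h3S : 3 * |D| ≤ (n + 1) * √(D ^ 2 + 4 * M * P) :=
    mul_le_mul (by linarith) hS (abs_nonneg D) (by linarith)
  linarith [le_abs_self D]

theorem lt_mul_div_two_mul_iff {D S M K n : ℝ} (hM : M ≠ 0) :
    n * D + 2 * K < 2 * (n + 1) * M * ((D + S) / (2 * M)) ↔ 2 * K < D + (n + 1) * S := by
  have h : 2 * (n + 1) * M * ((D + S) / (2 * M)) = (n + 1) * (D + S) := by
    field_simp
  rw [h]
  constructor <;> intro <;> linarith

section Rates

variable {kB kD kP kQ c : ℝ}

theorem mul_add_mul_one_sub_pos (hB : 0 < kB) (hD : 0 < kD) (hc : c ∈ Ioo (0 : ℝ) 1) :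
    0 < kB * c + kD * (1 - c) := by
  have := mul_pos hB hc.1
  have := mul_pos hD (sub_pos.2 hc.2)
  linarith

theorem KD_lt_two_mul_KM_sub_KN (hDQ : kD ≥ 2 * kQ) (hBP : kB > kP)
    (hc : c ∈ Ioo (0 : ℝ) 1) :
    kD * (1 - c) < 2 * (kB * c + kD * (1 - c) - (kP * c + kQ * (1 - c))) := by
  have := mul_pos (sub_pos.2 hBP) hc.1
  have := mul_le_mul_of_nonneg_right (sub_nonneg.2 hDQ) (sub_pos.2 hc.2).le
  nlinarith

end Rates

/-- Lemma 3.2 (key inequality): under `k_B > k_D ≥ 2k_Q > 0`, `k_B > k_P`,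
`k_B k_Q ≤ k_D k_P`, for every `c ∈ (0,1)` one has
`K_M(c) − K_N(c) + (n+1)√((K_M−K_N)² + 4 K_M K_P) > 2 K_D(c)`, equivalently
`n(K_M − K_N) + 2 K_D < 2(n+1) K_M α(c)`. -/
theorem stmt_1
    (n : ℕ) (hn : 2 ≤ n)
    (kB kD kP kQ : ℝ)
    (h1 : kB > kD) (h2 : kD ≥ 2 * kQ) (h3 : 0 < kQ) (h4 : kB > kP) (h5 : kB * kQ ≤ kD * kP)
    (KB KD KP KQ KM KN α : ℝ → ℝ)
    (hKB : KB = fun c => kB * c) (hKD : KD = fun c => kD * (1 - c))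
    (hKP : KP = fun c => kP * c) (hKQ : KQ = fun c => kQ * (1 - c))
    (hKM : KM = fun c => KB c + KD c) (hKN : KN = fun c => KP c + KQ c)
    (hα : α = fun c =>
      (KM c - KN c + Real.sqrt ((KM c - KN c) ^ 2 + 4 * KM c * KP c)) / (2 * KM c)) :
    ∀ c ∈ Ioo (0:ℝ) 1,
      KM c - KN c + (n + 1) * Real.sqrt ((KM c - KN c) ^ 2 + 4 * KM c * KP c) > 2 * KD c ∧
      n * (KM c - KN c) + 2 * KD c < 2 * (n + 1) * KM c * α c := by
  subst hα hKN hKM hKQ hKP hKD hKB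
  intro c hc
  have hkD : 0 < kD := by linarith
  have hkP : 0 < kP := pos_of_mul_pos_right (h5.trans_lt' (by nlinarith)) hkD.le
  have hKM := mul_add_mul_one_sub_pos (hkD.trans h1) hkD hc
  have hfirst := two_mul_lt_add_mul_sqrt (n := n) (by exact_mod_cast hn)
    (mul_pos hKM (mul_pos hkP hc.1)).le (KD_lt_two_mul_KM_sub_KN h2 h4 hc)
  exact ⟨hfirst, (lt_mul_div_two_mul_iff hKM.ne').2 hfirst⟩
end

section
/- Assume u ∈ C²([0,R_s];ℝ) satisfies u''(r) + ((n+2k−1)/r)u'(r) = q(r)u(r) for 0 < r < R_s, together with u'(0) = 0 and u(R_s) = 1. Then: (i) 0 < u(r) ≤ 1 for all r ∈ [0,R_s]; (ii) u'(r) = r^{−(n+2k−1)} ∫₀^r ρ^{n+2k−1} q(ρ) u(ρ) dρ for 0 < r ≤ R_s; (iii) 0 ≤ u'(r) ≤ C₀ r/(n+2k) for 0 ≤ r ≤ R_s; and (iv) 1 − (C₀R_s/(n+2k))(R_s−r) ≤ u(r) ≤ 1 for 0 ≤ r ≤ R_s. (Lemma 3.3, assertions (1) and (2), where q(r) = F'(c_s(r)).)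 -/
/-!
Multiplying the equation by `r ^ m` (here `m = n + 2k - 1`) turns it into `(r ^ m u')' = r ^ m q u`,
so, as `u' 0 = 0`, the flux `r ^ m u' r` is the integral of `ρ ^ m q u` over `[0, r]`.
A minimum principle gives `u > 0`: at a negative minimum the flux vanishes and then turns
negative, pushing `u` below its minimum; a zero minimum forces `u 0 = 0` and `0 ≤ u' ≤ K u`,
so `u ≡ 0` by Gronwall. Once `u > 0` the flux is nonnegative, so `u` increases up to
`u R = 1`; then `q u ≤ C₀` bounds the flux by `C₀ r ^ (m + 1) / (m + 1)`, and integrating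
`u' ≤ C₀ R / (m + 1)` over `[r, R]` gives the lower bound on `u`.
-/

open Set Real intervalIntegral

theorem monotoneOn_Icc_of_hasDerivAt_nonneg {f f' : ℝ → ℝ} {a b : ℝ}
    (hf : ∀ x ∈ Icc a b, HasDerivAt f (f' x) x) (hf' : ∀ x ∈ Ioo a b, 0 ≤ f' x) :
    MonotoneOn f (Icc a b) :=
  monotoneOn_of_hasDerivWithinAt_nonneg (convex_Icc a b)
    (fun x hx => (hf x hx).continuousAt.continuousWithinAt)
    (by simpa only [interior_Icc] using
      fun x hx => (hf x (Ioo_subset_Icc_self hx)).hasDerivWithinAt)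
    (by simpa only [interior_Icc] using hf')

/-- `u'' + (m / r) u'` is the radial Laplacian in `ℝ ^ (m + 1)`. -/
structure IsRadialSolution (m : ℕ) (R : ℝ) (q u u' u'' : ℝ → ℝ) : Prop where
  hasDerivAt : ∀ r ∈ Icc 0 R, HasDerivAt u (u' r) r
  hasDerivAt_deriv : ∀ r ∈ Icc 0 R, HasDerivAt u' (u'' r) r
  ode : ∀ r ∈ Ioo 0 R, u'' r + (m / r) * u' r = q r * u r
  deriv_zero : u' 0 = 0

namespace IsRadialSolution

variable {m : ℕ} {R : ℝ} {q u u' u'' : ℝ → ℝ}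

theorem continuousOn (hu : IsRadialSolution m R q u u' u'') : ContinuousOn u (Icc 0 R) :=
  fun r hr => (hu.hasDerivAt r hr).continuousAt.continuousWithinAt

theorem continuousOn_deriv (hu : IsRadialSolution m R q u u' u'') :
    ContinuousOn u' (Icc 0 R) :=
  fun r hr => (hu.hasDerivAt_deriv r hr).continuousAt.continuousWithinAt

theorem hasDerivAt_flux (hu : IsRadialSolution m R q u u' u'') {r : ℝ} (hr : r ∈ Ioo 0 R) :
    HasDerivAt (fun ρ => ρ ^ m * u' ρ) (r ^ m * q r * u r) r := by
  have hpow : (m : ℝ) * r ^ (m - 1) * r = m * r ^ m := by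
    cases m with
    | zero => simp
    | succ m => rw [Nat.add_sub_cancel, pow_succ]; ring
  refine ((hasDerivAt_pow m r).mul (hu.hasDerivAt_deriv r (Ioo_subset_Icc_self hr))).congr_deriv ?_
  rw [mul_assoc (r ^ m), ← hu.ode r hr]
  field_simp [hr.1.ne']
  linear_combination u' r * hpow

theorem flux_sub_flux (hu : IsRadialSolution m R q u u' u'') (hq : ContinuousOn q (Icc 0 R))
    {a b : ℝ} (ha : 0 ≤ a) (hab : a ≤ b) (hb : b ≤ R) :
    b ^ m * u' b - a ^ m * u' a = ∫ ρ in a..b, ρ ^ m * q ρ * u ρ := by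
  have hsub : Icc a b ⊆ Icc 0 R := Icc_subset_Icc ha hb
  refine (integral_eq_sub_of_hasDeriv_right_of_le hab
    ((continuousOn_pow m).mul (hu.continuousOn_deriv.mono hsub)) (fun x hx => ?_)
    ((((continuousOn_pow m).mul hq).mul hu.continuousOn).mono hsub
      |>.intervalIntegrable_of_Icc hab)).symm
  exact (hu.hasDerivAt_flux ⟨ha.trans_lt hx.1, hx.2.trans_le hb⟩).hasDerivWithinAt

theorem deriv_eq_integral_div (hu : IsRadialSolution m R q u u' u'')
    (hq : ContinuousOn q (Icc 0 R)) {r : ℝ} (hr : r ∈ Icc 0 R) :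
    u' r = (∫ ρ in (0:ℝ)..r, ρ ^ m * q ρ * u ρ) / r ^ m := by
  rcases hr.1.eq_or_lt with rfl | hr0
  · simp [hu.deriv_zero]
  rw [eq_div_iff (pow_pos hr0 m).ne', ← hu.flux_sub_flux hq le_rfl hr.1 hr.2, hu.deriv_zero]
  ring

theorem deriv_nonneg (hu : IsRadialSolution m R q u u' u'') (hq : ContinuousOn q (Icc 0 R))
    (hqu : ∀ r ∈ Icc 0 R, 0 ≤ q r * u r) {r : ℝ} (hr : r ∈ Icc 0 R) : 0 ≤ u' r := by
  rw [hu.deriv_eq_integral_div hq hr]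
  refine div_nonneg (integral_nonneg hr.1 fun ρ hρ => ?_) (pow_nonneg hr.1 m)
  rw [mul_assoc]
  exact mul_nonneg (pow_nonneg hρ.1 m) (hqu ρ ⟨hρ.1, hρ.2.trans hr.2⟩)

theorem monotoneOn (hu : IsRadialSolution m R q u u' u'') (hq : ContinuousOn q (Icc 0 R))
    (hqu : ∀ r ∈ Icc 0 R, 0 ≤ q r * u r) : MonotoneOn u (Icc 0 R) :=
  monotoneOn_Icc_of_hasDerivAt_nonneg hu.hasDerivAt
    fun _ hr => hu.deriv_nonneg hq hqu (Ioo_subset_Icc_self hr)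

theorem deriv_le (hu : IsRadialSolution m R q u u' u'') (hq : ContinuousOn q (Icc 0 R))
    {C r : ℝ} (hr : r ∈ Icc 0 R) (hC : ∀ ρ ∈ Icc 0 r, q ρ * u ρ ≤ C) :
    u' r ≤ C * r / (m + 1) := by
  rcases hr.1.eq_or_lt with rfl | hr0
  · simp [hu.deriv_zero]
  have hint : (∫ ρ in (0:ℝ)..r, ρ ^ m * q ρ * u ρ) ≤ ∫ ρ in (0:ℝ)..r, C * ρ ^ m := by
    refine integral_mono_on hr.1 ?_
      ((continuous_const.mul (continuous_pow m)).intervalIntegrable 0 r) fun ρ hρ => ?_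
    · exact ((((continuousOn_pow m).mul hq).mul hu.continuousOn).mono
        (Icc_subset_Icc le_rfl hr.2)).intervalIntegrable_of_Icc hr.1
    · rw [mul_assoc, mul_comm C]
      exact mul_le_mul_of_nonneg_left (hC ρ hρ) (pow_nonneg hρ.1 m)
  rw [integral_const_mul, integral_pow, zero_pow m.succ_ne_zero, sub_zero] at hint
  rw [hu.deriv_eq_integral_div hq hr, div_le_iff₀ (pow_pos hr0 m)]
  calc _ ≤ C * (r ^ (m + 1) / (m + 1)) := hint
    _ = C * r / (m + 1) * r ^ m := by ring

theorem eqOn_zero (hu : IsRadialSolution m R q u u' u'') (hq : ContinuousOn q (Icc 0 R))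
    (hq_nonneg : ∀ r ∈ Icc 0 R, 0 ≤ q r) (hu_nonneg : ∀ r ∈ Icc 0 R, 0 ≤ u r) (hu0 : u 0 = 0) :
    ∀ r ∈ Icc 0 R, u r = 0 := by
  obtain ⟨K, hK⟩ := isCompact_Icc.exists_bound_of_continuousOn hq
  -- `u` is nondecreasing, so `0 ≤ u' r ≤ K r u(r) / (m + 1)`: Gronwall applies.
  have hmono := hu.monotoneOn hq fun r hr => mul_nonneg (hq_nonneg r hr) (hu_nonneg r hr)
  have hbound : ∀ r ∈ Ico 0 R, ‖u' r‖ ≤ K * R * ‖u r‖ + 0 := by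
    intro r hr
    have hrI := Ico_subset_Icc_self hr
    have hle := hu.deriv_le hq hrI (C := K * u r) fun ρ hρ => by
      have hρI : ρ ∈ Icc 0 R := ⟨hρ.1, hρ.2.trans hr.2.le⟩
      exact mul_le_mul ((le_abs_self _).trans (hK ρ hρI)) (hmono hρI hrI hρ.2)
        (hu_nonneg ρ hρI) ((norm_nonneg _).trans (hK ρ hρI))
    have hK0 : 0 ≤ K := (norm_nonneg _).trans (hK r hrI)
    have hfrac : r / (m + 1) ≤ R := by
      rw [div_le_iff₀ (by positivity)]
      nlinarith [hr.1, hr.2, mul_nonneg (hr.1.trans hr.2.le) m.cast_nonneg]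
    rw [Real.norm_of_nonneg (hu.deriv_nonneg hq (fun ρ hρ => mul_nonneg (hq_nonneg ρ hρ)
      (hu_nonneg ρ hρ)) hrI), Real.norm_of_nonneg (hu_nonneg r hrI), add_zero]
    calc u' r ≤ K * u r * (r / (m + 1)) := by rwa [mul_div_assoc']
      _ ≤ K * u r * R := mul_le_mul_of_nonneg_left hfrac (mul_nonneg hK0 (hu_nonneg r hrI))
      _ = K * R * u r := by ring
  intro r hr
  have := norm_le_gronwallBound_of_norm_deriv_right_le (δ := 0) hu.continuousOn
    (fun x hx => (hu.hasDerivAt x (Ico_subset_Icc_self hx)).hasDerivWithinAt)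
    (by simp [hu0]) hbound r hr
  rwa [gronwallBound_ε0_δ0, norm_le_zero_iff] at this

theorem exists_lt_of_neg (hu : IsRadialSolution m R q u u' u'') (hq : ContinuousOn q (Icc 0 R))
    (hq_pos : ∀ r ∈ Icc 0 R, 0 < q r) {a : ℝ} (ha : a ∈ Ico 0 R) (hua : u a < 0)
    (hu'a : u' a = 0) : ∃ b ∈ Icc 0 R, u b < u a := by
  have hnhds : {x | u x < 0} ∩ Iic R ∈ nhdsWithin a (Ici a) :=
    mem_nhdsWithin_of_mem_nhds <| Filter.inter_mem
      ((hu.hasDerivAt a (Ico_subset_Icc_self ha)).continuousAt.preimage_mem_nhds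
        (Iio_mem_nhds hua)) (Iic_mem_nhds ha.2)
  obtain ⟨b, hab, hsub⟩ := mem_nhdsGE_iff_exists_Icc_subset.1 hnhds
  have hbR : b ≤ R := (hsub (right_mem_Icc.2 hab.le)).2
  have hderiv_neg : ∀ x ∈ Ioo a b, u' x < 0 := by
    intro x hx
    have hflux := hu.flux_sub_flux hq ha.1 hx.1.le (hx.2.le.trans hbR)
    rw [hu'a, mul_zero, sub_zero] at hflux
    have hint : 0 < ∫ ρ in a..x, -(ρ ^ m * q ρ * u ρ) := by
      refine intervalIntegral_pos_of_pos_on ?_ (fun ρ hρ => ?_) hx.1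
      · exact ((((continuousOn_pow m).mul hq).mul hu.continuousOn).neg.mono
          (Icc_subset_Icc ha.1 (hx.2.le.trans hbR))).intervalIntegrable_of_Icc hx.1.le
      · have hρ0 : 0 < ρ := ha.1.trans_lt hρ.1
        have huρ : u ρ < 0 := (hsub ⟨hρ.1.le, hρ.2.le.trans hx.2.le⟩).1
        have := mul_neg_of_pos_of_neg (mul_pos (pow_pos hρ0 m)
          (hq_pos ρ ⟨hρ0.le, hρ.2.le.trans (hx.2.le.trans hbR)⟩)) huρ
        linarith
    rw [integral_neg, ← hflux, neg_pos] at hint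
    exact neg_of_mul_neg_right hint (pow_nonneg (ha.1.trans hx.1.le) m)
  obtain ⟨c, hc, hslope⟩ := exists_hasDerivAt_eq_slope u u' hab
    (hu.continuousOn.mono (Icc_subset_Icc ha.1 hbR))
    (fun x hx => hu.hasDerivAt x ⟨ha.1.trans hx.1.le, hx.2.le.trans hbR⟩)
  have hdrop := (div_lt_iff₀ (sub_pos.2 hab)).1 (hslope ▸ hderiv_neg c hc)
  exact ⟨b, ⟨ha.1.trans hab.le, hbR⟩, by linarith⟩

theorem pos (hu : IsRadialSolution m R q u u' u'') (hq : ContinuousOn q (Icc 0 R))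
    (hq_pos : ∀ r ∈ Icc 0 R, 0 < q r) (huR : 0 < u R) : ∀ r ∈ Icc 0 R, 0 < u r := by
  intro r hr
  have hR : R ∈ Icc 0 R := right_mem_Icc.2 (hr.1.trans hr.2)
  obtain ⟨a, ha, hmin⟩ := isCompact_Icc.exists_isMinOn ⟨r, hr⟩ hu.continuousOn
  suffices 0 < u a from this.trans_le (hmin hr)
  by_contra! hle
  rcases hle.lt_or_eq with hneg | hzero
  · have haR : a < R := ha.2.lt_of_ne fun h => by rw [h] at hneg; linarith
    have hu'a : u' a = 0 := by
      rcases ha.1.eq_or_lt with rfl | ha0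
      · exact hu.deriv_zero
      · exact (hmin.isLocalMin (Icc_mem_nhds ha0 haR)).hasDerivAt_eq_zero (hu.hasDerivAt a ha)
    obtain ⟨b, hb, hlt⟩ := hu.exists_lt_of_neg hq hq_pos ⟨ha.1, haR⟩ hneg hu'a
    exact (hmin hb).not_gt hlt
  · have hu_nonneg : ∀ r ∈ Icc 0 R, 0 ≤ u r := fun r hr => hzero ▸ hmin hr
    have h0 : (0:ℝ) ∈ Icc 0 R := left_mem_Icc.2 hR.1
    have hu0 : u 0 = 0 := le_antisymm (hzero ▸ hu.monotoneOn hq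
      (fun r hr => mul_nonneg (hq_pos r hr).le (hu_nonneg r hr)) h0 ha ha.1) (hu_nonneg 0 h0)
    have := hu.eqOn_zero hq (fun r hr => (hq_pos r hr).le) hu_nonneg hu0 R hR
    linarith

end IsRadialSolution

theorem stmt_2_general
    (n k : ℕ) (hn : 2 ≤ n) (Rs C₀ : ℝ) (hRs : 0 < Rs) (hC₀ : 0 < C₀)
    (q : ℝ → ℝ) (hqcont : ContinuousOn q (Icc 0 Rs))
    (hq : ∀ r ∈ Icc (0:ℝ) Rs, 0 < q r ∧ q r ≤ C₀)
    (u u' u'' : ℝ → ℝ)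
    (hu' : ∀ r ∈ Icc (0:ℝ) Rs, HasDerivAt u (u' r) r)
    (hu'' : ∀ r ∈ Icc (0:ℝ) Rs, HasDerivAt u' (u'' r) r)
    (hode : ∀ r ∈ Ioo (0:ℝ) Rs, u'' r + ((n + 2 * k - 1 : ℝ) / r) * u' r = q r * u r)
    (hu'0 : u' 0 = 0) (huRs : u Rs = 1) :
    (∀ r ∈ Icc (0:ℝ) Rs, 0 < u r ∧ u r ≤ 1) ∧
    (∀ r ∈ Ioc (0:ℝ) Rs,
      u' r = (∫ ρ in (0:ℝ)..r, ρ ^ (n + 2 * k - 1) * q ρ * u ρ) / r ^ (n + 2 * k - 1)) ∧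
    (∀ r ∈ Icc (0:ℝ) Rs, 0 ≤ u' r ∧ u' r ≤ C₀ * r / (n + 2 * k)) ∧
    (∀ r ∈ Icc (0:ℝ) Rs, 1 - (C₀ * Rs / (n + 2 * k)) * (Rs - r) ≤ u r ∧ u r ≤ 1) := by
  have hm : ((n + 2 * k - 1 : ℕ) : ℝ) + 1 = n + 2 * k := by
    rw [Nat.cast_sub (by omega)]; push_cast; ring
  have hsol : IsRadialSolution (n + 2 * k - 1) Rs q u u' u'' :=
    ⟨hu', hu'', fun r hr => by rw [← hode r hr, ← hm, add_sub_cancel_right], hu'0⟩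
  have hRs_mem : Rs ∈ Icc 0 Rs := right_mem_Icc.2 hRs.le
  have hpos := hsol.pos hqcont (fun r hr => (hq r hr).1) (huRs ▸ one_pos)
  have hqu : ∀ r ∈ Icc 0 Rs, 0 ≤ q r * u r := fun r hr => (mul_pos (hq r hr).1 (hpos r hr)).le
  have hle_one : ∀ r ∈ Icc 0 Rs, u r ≤ 1 := fun r hr =>
    huRs ▸ hsol.monotoneOn hqcont hqu hr hRs_mem hr.2
  have hderiv_le : ∀ r ∈ Icc 0 Rs, u' r ≤ C₀ * r / (n + 2 * k) := fun r hr => hm ▸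
    hsol.deriv_le hqcont hr fun ρ hρ => by
      have hρI : ρ ∈ Icc 0 Rs := ⟨hρ.1, hρ.2.trans hr.2⟩
      nlinarith [hq ρ hρI, hle_one ρ hρI]
  have hslope : MonotoneOn (fun r => C₀ * Rs / (n + 2 * k) * r - u r) (Icc 0 Rs) :=
    monotoneOn_Icc_of_hasDerivAt_nonneg (fun r hr => ((hasDerivAt_id r).const_mul _).sub
      (hu' r hr)) fun r hr => by
        have hu'r := hderiv_le r (Ioo_subset_Icc_self hr)
        have hr_le : C₀ * r / (n + 2 * k) ≤ C₀ * Rs / (n + 2 * k) := by gcongr; exact hr.2.le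
        simp only [mul_one]; linarith
  refine ⟨fun r hr => ⟨hpos r hr, hle_one r hr⟩,
    fun r hr => hsol.deriv_eq_integral_div hqcont (Ioc_subset_Icc_self hr),
    fun r hr => ⟨hsol.deriv_nonneg hqcont hqu hr, hderiv_le r hr⟩,
    fun r hr => ⟨?_, hle_one r hr⟩⟩
  have := hslope hr hRs_mem hr.2
  simp only [huRs] at this
  linarith

/-- Lemma 3.3, assertions (1) and (2): if `u ∈ C²([0,R_s])` satisfies
`u'' + ((n+2k−1)/r) u' = q u` on `(0,R_s)` with `u'(0) = 0`, `u(R_s) = 1`, and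
`0 < q ≤ C₀`, then `0 < u ≤ 1`, the integral formula for `u'` holds,
`0 ≤ u' ≤ C₀ r/(n+2k)` and `1 − (C₀ R_s/(n+2k))(R_s − r) ≤ u ≤ 1` on `[0,R_s]`. -/
theorem stmt_2
    (n k : ℕ) (hn : 2 ≤ n) (Rs C₀ : ℝ) (hRs : 0 < Rs) (hC₀ : 0 < C₀)
    (q : ℝ → ℝ) (hqcont : ContinuousOn q (Icc 0 Rs))
    (hq : ∀ r ∈ Icc (0:ℝ) Rs, 0 < q r ∧ q r ≤ C₀)
    (u u' u'' : ℝ → ℝ)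
    (hu' : ∀ r ∈ Icc (0:ℝ) Rs, HasDerivAt u (u' r) r)
    (hu'' : ∀ r ∈ Icc (0:ℝ) Rs, HasDerivAt u' (u'' r) r)
    (hu''cont : ContinuousOn u'' (Icc 0 Rs))
    (hode : ∀ r ∈ Ioo (0:ℝ) Rs, u'' r + ((n + 2 * k - 1 : ℝ) / r) * u' r = q r * u r)
    (hu'0 : u' 0 = 0) (huRs : u Rs = 1) :
    (∀ r ∈ Icc (0:ℝ) Rs, 0 < u r ∧ u r ≤ 1) ∧
    (∀ r ∈ Ioc (0:ℝ) Rs,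
      u' r = (∫ ρ in (0:ℝ)..r, ρ ^ (n + 2 * k - 1) * q ρ * u ρ) / r ^ (n + 2 * k - 1)) ∧
    (∀ r ∈ Icc (0:ℝ) Rs, 0 ≤ u' r ∧ u' r ≤ C₀ * r / (n + 2 * k)) ∧
    (∀ r ∈ Icc (0:ℝ) Rs, 1 - (C₀ * Rs / (n + 2 * k)) * (Rs - r) ≤ u r ∧ u r ≤ 1) :=
  stmt_2_general n k hn Rs C₀ hRs hC₀ q hqcont hq u u' u'' hu' hu'' hode hu'0 huRs
end

section
/- Let k > l ≥ 0 be integers and suppose u_k, u_l ∈ C²([0,R_s];ℝ) satisfy u_k'' + ((n+2k−1)/r)u_k' = q u_k and u_l'' + ((n+2l−1)/r)u_l' = q u_l on (0,R_s), with u_k'(0) = u_l'(0) = 0 and u_k(R_s) = u_l(R_s) = 1. Then u_k(r) ≥ u_l(r) for all r ∈ [0,R_s]. (Lemma 3.3, assertion (3): u_k is monotone non-decreasing in k.) -/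
open Set Real Filter

/-!
For `c ≥ 0` the radial operator `w'' + (c/r) w'` equals `r^{-c} (r^c w')'`. Hence a
supersolution `w'' + (c/r) w' ≤ q w` with `q > 0` and `w'(0) = 0` cannot have a negative
minimum `r₀ < R`: there `w'(r₀) = 0`, and while `w < 0` the weighted slope `r^c w'` strictly
decreases from `0`, so `w` decreases just after `r₀`. This maximum principle gives `u_l ≥ 0`;
then `(r^{c_l} u_l')' = r^{c_l} q u_l ≥ 0` gives `u_l' ≥ 0`, so `u_k - u_l` is a supersolution
for `c_k` because `c_k - c_l = 2(k - l) > 0`, and it vanishes at `R_s`.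
-/

section RadialOperator

variable {c a b : ℝ} {w w' w'' : ℝ → ℝ}

theorem hasDerivAt_rpow_mul_of_hasDerivAt {r : ℝ} (hr : r ≠ 0)
    (hw'' : HasDerivAt w' (w'' r) r) :
    HasDerivAt (fun s => s ^ c * w' s) (r ^ c * (w'' r + c / r * w' r)) r := by
  refine ((hasDerivAt_rpow_const (p := c) (Or.inl hr)).mul hw'').congr_deriv ?_
  rw [rpow_sub_one hr]
  ring

theorem continuousOn_rpow_mul (hc : 0 ≤ c) (hw'' : ∀ r ∈ Icc a b, HasDerivAt w' (w'' r) r) :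
    ContinuousOn (fun r => r ^ c * w' r) (Icc a b) :=
  (continuous_rpow_const hc).continuousOn.mul fun r hr =>
    (hw'' r hr).continuousAt.continuousWithinAt

theorem monotoneOn_rpow_mul_of_radial_nonneg (hc : 0 ≤ c) (ha : 0 ≤ a)
    (hw'' : ∀ r ∈ Icc a b, HasDerivAt w' (w'' r) r)
    (hode : ∀ r ∈ Ioo a b, 0 ≤ w'' r + c / r * w' r) :
    MonotoneOn (fun r => r ^ c * w' r) (Icc a b) := by
  refine monotoneOn_of_hasDerivWithinAt_nonneg (f' := fun r => r ^ c * (w'' r + c / r * w' r))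
    (convex_Icc a b) (continuousOn_rpow_mul hc hw'')
    (fun r hr => ?_) (fun r hr => ?_) <;> rw [interior_Icc] at hr
  · exact (hasDerivAt_rpow_mul_of_hasDerivAt (ha.trans_lt hr.1).ne'
      (hw'' r (Ioo_subset_Icc_self hr))).hasDerivWithinAt
  · exact mul_nonneg (rpow_nonneg (ha.trans hr.1.le) c) (hode r hr)

theorem strictAntiOn_rpow_mul_of_radial_neg (hc : 0 ≤ c) (ha : 0 ≤ a)
    (hw'' : ∀ r ∈ Icc a b, HasDerivAt w' (w'' r) r)
    (hode : ∀ r ∈ Ioo a b, w'' r + c / r * w' r < 0) :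
    StrictAntiOn (fun r => r ^ c * w' r) (Icc a b) := by
  refine strictAntiOn_of_hasDerivWithinAt_neg (f' := fun r => r ^ c * (w'' r + c / r * w' r))
    (convex_Icc a b) (continuousOn_rpow_mul hc hw'')
    (fun r hr => ?_) (fun r hr => ?_) <;> rw [interior_Icc] at hr
  · exact (hasDerivAt_rpow_mul_of_hasDerivAt (ha.trans_lt hr.1).ne'
      (hw'' r (Ioo_subset_Icc_self hr))).hasDerivWithinAt
  · exact mul_neg_of_pos_of_neg (rpow_pos_of_pos (ha.trans_lt hr.1) c) (hode r hr)

theorem nonneg_of_radial_nonneg_of_eq_zero (hc : 0 ≤ c) (ha : 0 ≤ a)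
    (hw'' : ∀ r ∈ Icc a b, HasDerivAt w' (w'' r) r)
    (hode : ∀ r ∈ Ioo a b, 0 ≤ w'' r + c / r * w' r) (hw'a : w' a = 0) :
    ∀ r ∈ Ioc a b, 0 ≤ w' r := by
  intro r hr
  have hmono := monotoneOn_rpow_mul_of_radial_nonneg hc ha hw'' hode
    (left_mem_Icc.2 (hr.1.le.trans hr.2)) (Ioc_subset_Icc_self hr) hr.1.le
  simp only [hw'a, mul_zero] at hmono
  exact (mul_nonneg_iff_of_pos_left (rpow_pos_of_pos (ha.trans_lt hr.1) c)).1 hmono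

theorem neg_of_radial_neg_of_eq_zero (hc : 0 ≤ c) (ha : 0 ≤ a)
    (hw'' : ∀ r ∈ Icc a b, HasDerivAt w' (w'' r) r)
    (hode : ∀ r ∈ Ioo a b, w'' r + c / r * w' r < 0) (hw'a : w' a = 0) :
    ∀ r ∈ Ioc a b, w' r < 0 := by
  intro r hr
  have hanti := strictAntiOn_rpow_mul_of_radial_neg hc ha hw'' hode
    (left_mem_Icc.2 (hr.1.le.trans hr.2)) (Ioc_subset_Icc_self hr) hr.1
  simp only [hw'a, mul_zero] at hanti
  exact neg_of_mul_neg_right hanti (rpow_nonneg (ha.trans hr.1.le) c)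

theorem nonneg_of_radial_supersolution {q : ℝ → ℝ} {R : ℝ} (hc : 0 ≤ c)
    (hq : ∀ r ∈ Ioo 0 R, 0 < q r)
    (hw' : ∀ r ∈ Icc 0 R, HasDerivAt w (w' r) r)
    (hw'' : ∀ r ∈ Icc 0 R, HasDerivAt w' (w'' r) r)
    (hode : ∀ r ∈ Ioo 0 R, w'' r + c / r * w' r ≤ q r * w r)
    (hw'0 : w' 0 = 0) (hwR : 0 ≤ w R) :
    ∀ r ∈ Icc 0 R, 0 ≤ w r := by
  by_contra! ⟨a, ha, hwa⟩
  obtain ⟨r₀, hr₀, hmin⟩ := isCompact_Icc.exists_isMinOn ⟨a, ha⟩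
    fun r hr => (hw' r hr).continuousAt.continuousWithinAt
  have hwr₀ : w r₀ < 0 := (hmin ha).trans_lt hwa
  have hr₀R : r₀ < R := hr₀.2.lt_of_ne (by rintro rfl; linarith)
  have hw'r₀ : w' r₀ = 0 := by
    rcases hr₀.1.eq_or_lt with h | h
    · rwa [← h]
    · exact (hmin.isLocalMin (Icc_mem_nhds h hr₀R)).hasDerivAt_eq_zero (hw' r₀ hr₀)
  obtain ⟨b, hr₀b, hneg⟩ : ∃ b, r₀ < b ∧ Icc r₀ b ⊆ {r | w r < 0} ∩ Iic R :=
    mem_nhdsGE_iff_exists_Icc_subset.1 <| mem_nhdsWithin_of_mem_nhds <| inter_mem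
      ((hw' r₀ hr₀).continuousAt.eventually_lt continuousAt_const hwr₀) (Iic_mem_nhds hr₀R)
  have hsub : Icc r₀ b ⊆ Icc 0 R := Icc_subset_Icc hr₀.1 (hneg (right_mem_Icc.2 hr₀b.le)).2
  have hw'neg : ∀ r ∈ Ioc r₀ b, w' r < 0 := by
    refine neg_of_radial_neg_of_eq_zero hc hr₀.1 (fun r hr => hw'' r (hsub hr))
      (fun r hr => ?_) hw'r₀
    have hr' : r ∈ Ioo 0 R :=
      ⟨hr₀.1.trans_lt hr.1, hr.2.trans_le (hsub (right_mem_Icc.2 hr₀b.le)).2⟩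
    exact (hode r hr').trans_lt <|
      mul_neg_of_pos_of_neg (hq r hr') (hneg (Ioo_subset_Icc_self hr)).1
  have hanti : StrictAntiOn w (Icc r₀ b) :=
    strictAntiOn_of_hasDerivWithinAt_neg (convex_Icc r₀ b)
      (fun r hr => (hw' r (hsub hr)).continuousAt.continuousWithinAt)
      (fun r hr => (hw' r (hsub (interior_subset hr))).hasDerivWithinAt)
      (fun r hr => hw'neg r (Ioo_subset_Ioc_self (by rwa [interior_Icc] at hr)))
  exact (hmin (hsub (right_mem_Icc.2 hr₀b.le))).not_gt
    (hanti (left_mem_Icc.2 hr₀b.le) (right_mem_Icc.2 hr₀b.le) hr₀b)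

end RadialOperator

theorem stmt_3_general
    (n k l : ℕ) (hn : 2 ≤ n) (hkl : l < k) (Rs : ℝ)
    (q : ℝ → ℝ)
    (hq : ∀ r ∈ Icc (0:ℝ) Rs, 0 < q r)
    (uk uk' uk'' ul ul' ul'' : ℝ → ℝ)
    (huk' : ∀ r ∈ Icc (0:ℝ) Rs, HasDerivAt uk (uk' r) r)
    (huk'' : ∀ r ∈ Icc (0:ℝ) Rs, HasDerivAt uk' (uk'' r) r)
    (hul' : ∀ r ∈ Icc (0:ℝ) Rs, HasDerivAt ul (ul' r) r)
    (hul'' : ∀ r ∈ Icc (0:ℝ) Rs, HasDerivAt ul' (ul'' r) r)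
    (hodek : ∀ r ∈ Ioo (0:ℝ) Rs, uk'' r + ((n + 2 * k - 1 : ℝ) / r) * uk' r = q r * uk r)
    (hodel : ∀ r ∈ Ioo (0:ℝ) Rs, ul'' r + ((n + 2 * l - 1 : ℝ) / r) * ul' r = q r * ul r)
    (huk'0 : uk' 0 = 0) (hul'0 : ul' 0 = 0)
    (hukRs : uk Rs = 1) (hulRs : ul Rs = 1) :
    ∀ r ∈ Icc (0:ℝ) Rs, ul r ≤ uk r := by
  have hq' : ∀ r ∈ Ioo 0 Rs, 0 < q r := fun r hr => hq r (Ioo_subset_Icc_self hr)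
  have hkl' : (l : ℝ) < k := by exact_mod_cast hkl
  have hcl : (0 : ℝ) ≤ n + 2 * l - 1 := by
    have : (2 : ℝ) ≤ n := by exact_mod_cast hn
    linarith [l.cast_nonneg (α := ℝ)]
  have hul : ∀ r ∈ Icc 0 Rs, 0 ≤ ul r :=
    nonneg_of_radial_supersolution hcl hq' hul' hul'' (fun r hr => (hodel r hr).le) hul'0
      (hulRs ▸ zero_le_one)
  have hul'_nonneg : ∀ r ∈ Ioc 0 Rs, 0 ≤ ul' r :=
    nonneg_of_radial_nonneg_of_eq_zero hcl le_rfl hul''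
      (fun r hr => hodel r hr ▸ mul_nonneg (hq' r hr).le (hul r (Ioo_subset_Icc_self hr)))
      hul'0
  have hsuper : ∀ r ∈ Ioo 0 Rs, (uk'' r - ul'' r) + ((n + 2 * k - 1 : ℝ) / r) * (uk' r - ul' r)
      ≤ q r * (uk r - ul r) := by
    intro r hr
    have hgap : 0 ≤ (2 * (k - l) : ℝ) / r * ul' r :=
      mul_nonneg (div_nonneg (by linarith) hr.1.le) (hul'_nonneg r (Ioo_subset_Ioc_self hr))
    linear_combination hodek r hr - hodel r hr + hgap
  have hdiff := nonneg_of_radial_supersolution (by linarith) hq'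
    (fun r hr => (huk' r hr).sub (hul' r hr)) (fun r hr => (huk'' r hr).sub (hul'' r hr)) hsuper
    (by simp [huk'0, hul'0]) (by simp [hukRs, hulRs])
  exact fun r hr => sub_nonneg.1 (hdiff r hr)

/-- Lemma 3.3, assertion (3): `u_k` is monotone non-decreasing in `k`. -/
theorem stmt_3
    (n k l : ℕ) (hn : 2 ≤ n) (hkl : l < k) (Rs : ℝ) (hRs : 0 < Rs)
    (q : ℝ → ℝ) (hqcont : ContinuousOn q (Icc 0 Rs))
    (hq : ∀ r ∈ Icc (0:ℝ) Rs, 0 < q r)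
    (uk uk' uk'' ul ul' ul'' : ℝ → ℝ)
    (huk' : ∀ r ∈ Icc (0:ℝ) Rs, HasDerivAt uk (uk' r) r)
    (huk'' : ∀ r ∈ Icc (0:ℝ) Rs, HasDerivAt uk' (uk'' r) r)
    (huk''cont : ContinuousOn uk'' (Icc 0 Rs))
    (hul' : ∀ r ∈ Icc (0:ℝ) Rs, HasDerivAt ul (ul' r) r)
    (hul'' : ∀ r ∈ Icc (0:ℝ) Rs, HasDerivAt ul' (ul'' r) r)
    (hul''cont : ContinuousOn ul'' (Icc 0 Rs))
    (hodek : ∀ r ∈ Ioo (0:ℝ) Rs, uk'' r + ((n + 2 * k - 1 : ℝ) / r) * uk' r = q r * uk r)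
    (hodel : ∀ r ∈ Ioo (0:ℝ) Rs, ul'' r + ((n + 2 * l - 1 : ℝ) / r) * ul' r = q r * ul r)
    (huk'0 : uk' 0 = 0) (hul'0 : ul' 0 = 0)
    (hukRs : uk Rs = 1) (hulRs : ul Rs = 1) :
    ∀ r ∈ Icc (0:ℝ) Rs, ul r ≤ uk r :=
  stmt_3_general n k l hn hkl Rs q hq uk uk' uk'' ul ul' ul'' huk' huk'' hul' hul'' hodek hodel
    huk'0 hul'0 hukRs hulRs
end

section
/- The function u₁(r) = R_s c_s'(r)/(r c_s'(R_s)) for 0 < r ≤ R_s, extended by continuity at r = 0 with value R_s c_s''(0)/c_s'(R_s), is the unique function u ∈ C([0,R_s];ℝ) ∩ C²((0,R_s);ℝ) satisfying u''(r) + ((n+1)/r)u'(r) = F'(c_s(r))u(r) for 0 < r < R_s, lim_{r→0⁺} u'(r) = 0, and u(R_s) = 1. (Lemma 3.3, assertion (4).) -/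
/-!
Differentiating the equation for `c_s` shows that `φ = c_s'` satisfies
`φ'' + ((n-1)/r) φ' - ((n-1)/r²) φ = F'(c_s) φ`, and this is exactly the statement that `φ / r`
solves the linearized equation with coefficient `(n+1)/r`. At the origin, `(φ / r)'` tends to
`φ''(0) / 2` by l'Hôpital, and letting `r → 0` in the differentiated equation forces `φ''(0) = 0`.

Uniqueness is a maximum principle: `r^(n+1) w'` is nondecreasing wherever `w > 0`, because
`(r^(n+1) w')' = r^(n+1) F'(c_s) w`; so the difference of two solutions cannot have a positive
maximum.
-/

open Set Real Filter Topology

lemma exists_last_isMaxOn_Icc {a b : ℝ} (hab : a ≤ b) {f : ℝ → ℝ} (hf : ContinuousOn f (Icc a b)) :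
    ∃ c ∈ Icc a b, IsMaxOn f (Icc a b) c ∧ ∀ x ∈ Ioc c b, f x < f c := by
  obtain ⟨c₀, hc₀, hmax⟩ := isCompact_Icc.exists_isMaxOn (nonempty_Icc.2 hab) hf
  have hS : IsCompact (Icc a b ∩ f ⁻¹' {f c₀}) :=
    isCompact_Icc.of_isClosed_subset
      (hf.preimage_isClosed_of_isClosed isClosed_Icc isClosed_singleton) inter_subset_left
  obtain ⟨c, ⟨hc, hfc⟩, hgreatest⟩ := hS.exists_isGreatest ⟨c₀, hc₀, rfl⟩
  have hfc : f c = f c₀ := hfc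
  have hmax' : IsMaxOn f (Icc a b) c := isMaxOn_iff.2 fun x hx => hfc ▸ isMaxOn_iff.1 hmax x hx
  refine ⟨c, hc, hmax', fun x hx => ?_⟩
  have hxI : x ∈ Icc a b := ⟨hc.1.trans hx.1.le, hx.2⟩
  exact (isMaxOn_iff.1 hmax' x hxI).lt_of_ne fun hfx =>
    hx.1.not_ge (hgreatest ⟨hxI, hfx.trans hfc⟩)

section RadialMaximumPrinciple

variable {c : ℝ} {w w' w'' : ℝ → ℝ}

lemma hasDerivAt_rpow_mul_radial {r : ℝ} (hr : 0 < r) (h : HasDerivAt w' (w'' r) r) :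
    HasDerivAt (fun s => s ^ c * w' s) (r ^ c * (w'' r + c / r * w' r)) r := by
  refine ((Real.hasDerivAt_rpow_const (p := c) (Or.inl hr.ne')).mul h).congr_deriv ?_
  rw [Real.rpow_sub_one hr.ne']
  ring

lemma deriv_nonneg_of_radial_subsolution (hc : 0 ≤ c) {a b : ℝ} (ha : 0 ≤ a)
    (h2 : ∀ r ∈ Ioo a b, HasDerivAt w' (w'' r) r)
    (hsub : ∀ r ∈ Ioo a b, 0 ≤ w'' r + c / r * w' r) (hlim : Tendsto w' (𝓝[>] a) (𝓝 0)) :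
    ∀ r ∈ Ioo a b, 0 ≤ w' r := by
  have hpos : ∀ r ∈ Ioo a b, 0 < r := fun r hr => ha.trans_lt hr.1
  have hderiv := fun r hr => hasDerivAt_rpow_mul_radial (c := c) (hpos r hr) (h2 r hr)
  have hmono : MonotoneOn (fun s => s ^ c * w' s) (Ioo a b) := by
    refine monotoneOn_of_hasDerivWithinAt_nonneg (convex_Ioo a b)
      (f' := fun r => r ^ c * (w'' r + c / r * w' r))
      (fun r hr => (hderiv r hr).continuousAt.continuousWithinAt)
      (fun r hr => ?_) (fun r hr => ?_) <;> rw [interior_Ioo] at hr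
    · exact (hderiv r hr).hasDerivWithinAt
    · exact mul_nonneg (Real.rpow_nonneg (hpos r hr).le c) (hsub r hr)
  have hflux : Tendsto (fun s => s ^ c * w' s) (𝓝[>] a) (𝓝 0) := by
    simpa using ((Real.continuous_rpow_const hc).tendsto a).mono_left nhdsWithin_le_nhds |>.mul hlim
  intro r hr
  have hflux_r : 0 ≤ r ^ c * w' r := by
    refine le_of_tendsto hflux ?_
    filter_upwards [Ioo_mem_nhdsGT hr.1] with s hs
    exact hmono ⟨hs.1, hs.2.trans hr.2⟩ hr hs.2.le
  exact (mul_nonneg_iff_of_pos_left (Real.rpow_pos_of_pos (hpos r hr) c)).1 hflux_r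

theorem radial_maximum_principle (hc : 0 ≤ c) {R : ℝ} (hw : ContinuousOn w (Icc 0 R))
    (h1 : ∀ r ∈ Ioo 0 R, HasDerivAt w (w' r) r) (h2 : ∀ r ∈ Ioo 0 R, HasDerivAt w' (w'' r) r)
    (hsub : ∀ r ∈ Ioo 0 R, 0 < w r → 0 ≤ w'' r + c / r * w' r)
    (hlim : Tendsto w' (𝓝[>] 0) (𝓝 0)) (hR : w R ≤ 0) :
    ∀ r ∈ Icc 0 R, w r ≤ 0 := by
  by_contra! ⟨r, hr, hwr⟩
  obtain ⟨m, hm, hmax, hlast⟩ := exists_last_isMaxOn_Icc (hr.1.trans hr.2) hw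
  have hwm : 0 < w m := hwr.trans_le (hmax hr)
  have hmR : m < R := hm.2.lt_of_ne (by rintro rfl; linarith)
  have hIoo : ∀ {d}, d ≤ R → Ioo m d ⊆ Ioo 0 R := fun hd x hx =>
    ⟨hm.1.trans_lt hx.1, hx.2.trans_le hd⟩
  obtain ⟨d, hd, hwpos⟩ : ∃ d ∈ Ioc m R, Ioo m d ⊆ {x | 0 < w x} := by
    refine (mem_nhdsGT_iff_exists_mem_Ioc_Ioo_subset hmR).1 ?_
    have hIcc : Icc 0 R ∈ 𝓝[>] m :=
      mem_of_superset (Icc_mem_nhdsGT hmR) (Icc_subset_Icc_left hm.1)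
    exact ((hw m hm).mono_of_mem_nhdsWithin hIcc).eventually (lt_mem_nhds hwm)
  have hw'lim : Tendsto w' (𝓝[>] m) (𝓝 0) := by
    rcases hm.1.eq_or_lt with rfl | hm0
    · exact hlim
    · have hw'm := (hmax.isLocalMax (Icc_mem_nhds hm0 hmR)).hasDerivAt_eq_zero (h1 m ⟨hm0, hmR⟩)
      exact hw'm ▸ (h2 m ⟨hm0, hmR⟩).continuousAt.tendsto.mono_left nhdsWithin_le_nhds
  have hw'nonneg : ∀ x ∈ Ioo m d, 0 ≤ w' x :=
    deriv_nonneg_of_radial_subsolution hc hm.1 (fun x hx => h2 x (hIoo hd.2 hx))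
      (fun x hx => hsub x (hIoo hd.2 hx) (hwpos hx)) hw'lim
  have hmono : MonotoneOn w (Icc m d) := by
    refine monotoneOn_of_hasDerivWithinAt_nonneg (convex_Icc m d) (f' := w')
      (hw.mono (Icc_subset_Icc hm.1 hd.2)) (fun x hx => ?_) (fun x hx => ?_) <;>
      rw [interior_Icc] at hx
    · exact (h1 x (hIoo hd.2 hx)).hasDerivWithinAt
    · exact hw'nonneg x hx
  exact (hlast d hd).not_ge (hmono (left_mem_Icc.2 hd.1.le) (right_mem_Icc.2 hd.1.le) hd.1.le)

end RadialMaximumPrinciple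

-- Radial solutions of `Δu = q u` in dimension `c + 1` that are regular at the origin.
structure IsRadialSol (c : ℝ) (q : ℝ → ℝ) (R : ℝ) (u u' u'' : ℝ → ℝ) : Prop where
  continuousOn : ContinuousOn u (Icc 0 R)
  hasDerivAt : ∀ r ∈ Ioo 0 R, HasDerivAt u (u' r) r
  hasDerivAt_deriv : ∀ r ∈ Ioo 0 R, HasDerivAt u' (u'' r) r
  eq : ∀ r ∈ Ioo 0 R, u'' r + c / r * u' r = q r * u r
  tendsto_deriv : Tendsto u' (𝓝[>] 0) (𝓝 0)

namespace IsRadialSol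

variable {c R : ℝ} {q u u' u'' v v' v'' : ℝ → ℝ}

lemma sub (hu : IsRadialSol c q R u u' u'') (hv : IsRadialSol c q R v v' v'') :
    IsRadialSol c q R (u - v) (u' - v') (u'' - v'') where
  continuousOn := hu.continuousOn.sub hv.continuousOn
  hasDerivAt r hr := (hu.hasDerivAt r hr).sub (hv.hasDerivAt r hr)
  hasDerivAt_deriv r hr := (hu.hasDerivAt_deriv r hr).sub (hv.hasDerivAt_deriv r hr)
  eq r hr := by
    simp only [Pi.sub_apply]
    linear_combination hu.eq r hr - hv.eq r hr
  tendsto_deriv := by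
    have h := hu.tendsto_deriv.sub hv.tendsto_deriv
    rw [sub_zero] at h
    exact h

lemma const_mul (hu : IsRadialSol c q R u u' u'') (K : ℝ) :
    IsRadialSol c q R (fun r => K * u r) (fun r => K * u' r) (fun r => K * u'' r) where
  continuousOn := continuousOn_const.mul hu.continuousOn
  hasDerivAt r hr := (hu.hasDerivAt r hr).const_mul K
  hasDerivAt_deriv r hr := (hu.hasDerivAt_deriv r hr).const_mul K
  eq r hr := by linear_combination K * hu.eq r hr
  tendsto_deriv := by simpa using hu.tendsto_deriv.const_mul K

theorem le_zero (hu : IsRadialSol c q R u u' u'') (hc : 0 ≤ c) (hq : ∀ r ∈ Ioo 0 R, 0 ≤ q r)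
    (hR : u R ≤ 0) : ∀ r ∈ Icc 0 R, u r ≤ 0 :=
  radial_maximum_principle hc hu.continuousOn hu.hasDerivAt hu.hasDerivAt_deriv
    (fun r hr hpos => (hu.eq r hr).symm ▸ mul_nonneg (hq r hr) hpos.le) hu.tendsto_deriv hR

theorem eqOn (hu : IsRadialSol c q R u u' u'') (hv : IsRadialSol c q R v v' v'') (hc : 0 ≤ c)
    (hq : ∀ r ∈ Ioo 0 R, 0 ≤ q r) (hR : u R = v R) : EqOn u v (Icc 0 R) := fun r hr =>
  le_antisymm (sub_nonpos.1 ((hu.sub hv).le_zero hc hq (by simp [hR]) r hr))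
    (sub_nonpos.1 ((hv.sub hu).le_zero hc hq (by simp [hR]) r hr))

end IsRadialSol

lemma radial_eq_differentiated {a R : ℝ} {F F' y y' y'' y''' : ℝ → ℝ}
    (hy : ∀ r ∈ Ioo 0 R, HasDerivAt y (y' r) r) (hy' : ∀ r ∈ Ioo 0 R, HasDerivAt y' (y'' r) r)
    (hy'' : ∀ r ∈ Ioo 0 R, HasDerivAt y'' (y''' r) r)
    (hF : ∀ r ∈ Ioo 0 R, HasDerivAt F (F' (y r)) (y r))
    (heq : ∀ r ∈ Ioo 0 R, y'' r + a / r * y' r = F (y r)) :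
    ∀ r ∈ Ioo 0 R, y''' r + a * ((r * y'' r - y' r) / r ^ 2) = F' (y r) * y' r := by
  intro r hr
  have hlhs : HasDerivAt (fun s => y'' s + a * (y' s / s))
      (y''' r + a * ((y'' r * r - y' r * 1) / r ^ 2)) r :=
    (hy'' r hr).add (((hy' r hr).div (hasDerivAt_id r) hr.1.ne').const_mul a)
  have heq' : (fun s => y'' s + a * (y' s / s)) =ᶠ[𝓝 r] fun s => F (y s) := by
    filter_upwards [isOpen_Ioo.mem_nhds hr] with s hs
    rw [← heq s hs, mul_div_assoc']
    ring
  convert hlhs.unique ((heq'.hasDerivAt_iff).2 ((hF r hr).comp r (hy r hr))) using 3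
  ring

lemma tendsto_mul_deriv_sub_div_sq {b L : ℝ} {φ φ' φ'' : ℝ → ℝ} (hb : 0 < b) (hφ0 : φ 0 = 0)
    (hφ : ∀ r ∈ Ico 0 b, HasDerivAt φ (φ' r) r) (hφ' : ∀ r ∈ Ico 0 b, HasDerivAt φ' (φ'' r) r)
    (hφ'' : Tendsto φ'' (𝓝[>] 0) (𝓝 L)) :
    Tendsto (fun r => (r * φ' r - φ r) / r ^ 2) (𝓝[>] 0) (𝓝 (L / 2)) := by
  have hnum : ∀ r ∈ Ico 0 b, HasDerivAt (fun s => s * φ' s - φ s) (r * φ'' r) r := fun r hr =>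
    (((hasDerivAt_id r).mul (hφ' r hr)).sub (hφ r hr)).congr_deriv (by simp)
  refine HasDerivAt.lhopital_zero_right_on_Ico hb (fun r hr => hnum r (Ioo_subset_Ico_self hr))
    (fun r _ => hasDerivAt_pow 2 r) (fun r hr => (hnum r hr).continuousAt.continuousWithinAt)
    (continuous_pow 2).continuousOn (fun r hr => by simp [hr.1.ne']) (by simp [hφ0]) (by simp) ?_
  refine (hφ''.div_const 2).congr' ?_
  filter_upwards [self_mem_nhdsWithin] with r (hr : 0 < r)
  field_simp
  ring

lemma dslope_zero_of_ne {φ : ℝ → ℝ} (hφ0 : φ 0 = 0) {r : ℝ} (hr : r ≠ 0) :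
    dslope φ 0 r = φ r / r := by
  rw [dslope_of_ne _ hr, slope_def_field, hφ0, sub_zero, sub_zero]

lemma continuousOn_dslope_of_differentiableAt {f : ℝ → ℝ} {a : ℝ} {s : Set ℝ}
    (hf : ContinuousOn f s) (ha : DifferentiableAt ℝ f a) : ContinuousOn (dslope f a) s := by
  intro x hx
  rcases eq_or_ne x a with rfl | hxa
  · exact (continuousAt_dslope_same.2 ha).continuousWithinAt
  · exact (continuousWithinAt_dslope_of_ne hxa).2 (hf x hx)

theorem isRadialSol_dslope {a R : ℝ} {φ φ' φ'' Q : ℝ → ℝ} (ha : a + 2 ≠ 0) (hR : 0 < R)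
    (hφ0 : φ 0 = 0) (hφ : ∀ r ∈ Icc 0 R, HasDerivAt φ (φ' r) r)
    (hφ' : ∀ r ∈ Icc 0 R, HasDerivAt φ' (φ'' r) r) (hφ'' : ContinuousWithinAt φ'' (Ioi 0) 0)
    (hQ : ContinuousWithinAt Q (Ioi 0) 0)
    (heq : ∀ r ∈ Ioo 0 R, φ'' r + a * ((r * φ' r - φ r) / r ^ 2) = Q r * φ r) :
    IsRadialSol (a + 2) Q R (dslope φ 0) (fun r => (r * φ' r - φ r) / r ^ 2)
      (fun r => (r ^ 2 * φ'' r - 2 * r * φ' r + 2 * φ r) / r ^ 3) := by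
  have h0 : (0 : ℝ) ∈ Icc 0 R := left_mem_Icc.2 hR.le
  have hdslope : ∀ r ∈ Ioo 0 R, dslope φ 0 =ᶠ[𝓝 r] fun s => φ s / s := fun r hr => by
    filter_upwards [isOpen_Ioi.mem_nhds hr.1] with s hs
    exact dslope_zero_of_ne hφ0 (ne_of_gt hs)
  have hlim := tendsto_mul_deriv_sub_div_sq hR hφ0 (fun r hr => hφ r (Ico_subset_Icc_self hr))
    (fun r hr => hφ' r (Ico_subset_Icc_self hr)) hφ''
  -- letting `r → 0` in `heq` gives `φ''(0) = -a φ''(0) / 2`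
  have hφ''0 : φ'' 0 = 0 := by
    have hrhs : Tendsto (fun r => Q r * φ r - a * ((r * φ' r - φ r) / r ^ 2)) (𝓝[>] 0)
        (𝓝 (Q 0 * φ 0 - a * (φ'' 0 / 2))) :=
      (hQ.tendsto.mul ((hφ 0 h0).continuousAt.tendsto.mono_left nhdsWithin_le_nhds)).sub
        (hlim.const_mul a)
    have hlhs : Tendsto φ'' (𝓝[>] 0) (𝓝 (Q 0 * φ 0 - a * (φ'' 0 / 2))) := by
      refine hrhs.congr' ?_
      filter_upwards [Ioo_mem_nhdsGT hR] with r hr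
      linear_combination -heq r hr
    have := tendsto_nhds_unique hφ''.tendsto hlhs
    rw [hφ0] at this
    exact (mul_eq_zero.1 (by linear_combination 2 * this : (a + 2) * φ'' 0 = 0)).resolve_left ha
  refine ⟨?_, fun r hr => ?_, fun r hr => ?_, fun r hr => ?_, ?_⟩
  · exact continuousOn_dslope_of_differentiableAt
      (fun r hr => (hφ r hr).continuousAt.continuousWithinAt) (hφ 0 h0).differentiableAt
  · refine ((hdslope r hr).hasDerivAt_iff).2 ?_
    exact ((hφ r ⟨hr.1.le, hr.2.le⟩).div (hasDerivAt_id' r) hr.1.ne').congr_deriv (by ring)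
  · have hIcc : r ∈ Icc 0 R := ⟨hr.1.le, hr.2.le⟩
    refine ((((hasDerivAt_id' r).mul (hφ' r hIcc)).sub (hφ r hIcc)).div (hasDerivAt_pow 2 r)
      (pow_ne_zero 2 hr.1.ne')).congr_deriv ?_
    have hr0 := hr.1.ne'
    simp only [Pi.sub_apply, Pi.mul_apply]
    field_simp
    ring
  · rw [dslope_zero_of_ne hφ0 hr.1.ne']
    have := heq r hr
    have hr0 := hr.1.ne'
    field_simp at this ⊢
    linear_combination this
  · simpa [hφ''0] using hlim

theorem stmt_4_general
    (n : ℕ) (Rs : ℝ) (hRs : 0 < Rs)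
    (F F' : ℝ → ℝ) (hF : ∀ x : ℝ, HasDerivAt F (F' x) x) (hF'cont : Continuous F')
    (cs cs' cs'' cs''' : ℝ → ℝ)
    (hcs1 : ∀ r ∈ Icc (0:ℝ) Rs, HasDerivAt cs (cs' r) r)
    (hcs2 : ∀ r ∈ Icc (0:ℝ) Rs, HasDerivAt cs' (cs'' r) r)
    (hcs3 : ∀ r ∈ Icc (0:ℝ) Rs, HasDerivAt cs'' (cs''' r) r)
    (hcs3cont : ContinuousOn cs''' (Icc 0 Rs))
    (hcsode : ∀ r ∈ Ioo (0:ℝ) Rs, cs'' r + ((n - 1 : ℝ) / r) * cs' r = F (cs r))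
    (hcs'0 : cs' 0 = 0)
    (hcs'pos : ∀ r ∈ Ioc (0:ℝ) Rs, 0 < cs' r)
    (hF'pos : ∀ r ∈ Icc (0:ℝ) Rs, 0 < F' (cs r))
    (u₁ : ℝ → ℝ)
    (hu₁def : u₁ = fun r => if r = 0 then Rs * cs'' 0 / cs' Rs
      else Rs * cs' r / (r * cs' Rs)) :
    (ContinuousOn u₁ (Icc 0 Rs) ∧
      ∃ u₁' u₁'' : ℝ → ℝ,
        (∀ r ∈ Ioo (0:ℝ) Rs, HasDerivAt u₁ (u₁' r) r) ∧
        (∀ r ∈ Ioo (0:ℝ) Rs, HasDerivAt u₁' (u₁'' r) r) ∧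
        (∀ r ∈ Ioo (0:ℝ) Rs, u₁'' r + ((n + 1 : ℝ) / r) * u₁' r = F' (cs r) * u₁ r) ∧
        Tendsto u₁' (𝓝[>] (0:ℝ)) (𝓝 0) ∧
        u₁ Rs = 1) ∧
    (∀ u u' u'' : ℝ → ℝ,
      ContinuousOn u (Icc 0 Rs) →
      (∀ r ∈ Ioo (0:ℝ) Rs, HasDerivAt u (u' r) r) →
      (∀ r ∈ Ioo (0:ℝ) Rs, HasDerivAt u' (u'' r) r) →
      (∀ r ∈ Ioo (0:ℝ) Rs, u'' r + ((n + 1 : ℝ) / r) * u' r = F' (cs r) * u r) →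
      Tendsto u' (𝓝[>] (0:ℝ)) (𝓝 0) →
      u Rs = 1 →
      ∀ r ∈ Icc (0:ℝ) Rs, u r = u₁ r) := by
  have h0 : (0 : ℝ) ∈ Icc 0 Rs := left_mem_Icc.2 hRs.le
  have hIoo : ∀ r ∈ Ioo 0 Rs, r ∈ Icc 0 Rs := fun r hr => Ioo_subset_Icc_self hr
  have hcs'Rs : cs' Rs ≠ 0 := (hcs'pos Rs (right_mem_Ioc.2 hRs)).ne'
  have hu₁ : u₁ = fun r => Rs / cs' Rs * dslope cs' 0 r := by
    ext r
    rcases eq_or_ne r 0 with rfl | hr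
    · simp only [hu₁def, if_true, dslope_same, (hcs2 0 h0).deriv]
      ring
    · simp only [hu₁def, if_neg hr, dslope_zero_of_ne hcs'0 hr]
      field_simp
  have hdiff := radial_eq_differentiated (fun r hr => hcs1 r (hIoo r hr))
    (fun r hr => hcs2 r (hIoo r hr)) (fun r hr => hcs3 r (hIoo r hr)) (fun r _ => hF (cs r)) hcsode
  have hsol := (isRadialSol_dslope (by ring_nf; positivity) hRs hcs'0 hcs2 hcs3
    ((hcs3cont 0 h0).mono_of_mem_nhdsWithin (Icc_mem_nhdsGT hRs))
    (hF'cont.continuousAt.comp (hcs1 0 h0).continuousAt).continuousWithinAt hdiff).const_mul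
    (Rs / cs' Rs)
  rw [← hu₁, show (n - 1 : ℝ) + 2 = n + 1 by ring] at hsol
  have hu₁Rs : u₁ Rs = 1 := by
    simp only [hu₁def, if_neg hRs.ne']
    exact div_self (mul_ne_zero hRs.ne' hcs'Rs)
  refine ⟨⟨hsol.continuousOn, _, _, hsol.hasDerivAt, hsol.hasDerivAt_deriv, hsol.eq,
    hsol.tendsto_deriv, hu₁Rs⟩, fun u u' u'' hu hu' hu'' heq hlim huRs => ?_⟩
  exact IsRadialSol.eqOn ⟨hu, hu', hu'', heq, hlim⟩ hsol (by positivity)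
    (fun r hr => (hF'pos r (hIoo r hr)).le) (huRs.trans hu₁Rs.symm)

/-- Lemma 3.3, assertion (4): `u₁(r) = R_s c_s'(r)/(r c_s'(R_s))` (extended by continuity
at `r = 0` with value `R_s c_s''(0)/c_s'(R_s)`) is the unique
`u ∈ C([0,R_s]) ∩ C²((0,R_s))` with `u'' + ((n+1)/r) u' = F'(c_s) u` on `(0,R_s)`,
`lim_{r→0⁺} u'(r) = 0` and `u(R_s) = 1`. -/
theorem stmt_4
    (n : ℕ) (hn : 2 ≤ n) (Rs : ℝ) (hRs : 0 < Rs)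
    (F F' : ℝ → ℝ) (hF : ∀ x : ℝ, HasDerivAt F (F' x) x) (hF'cont : Continuous F')
    (cs cs' cs'' cs''' : ℝ → ℝ)
    (hcs1 : ∀ r ∈ Icc (0:ℝ) Rs, HasDerivAt cs (cs' r) r)
    (hcs2 : ∀ r ∈ Icc (0:ℝ) Rs, HasDerivAt cs' (cs'' r) r)
    (hcs3 : ∀ r ∈ Icc (0:ℝ) Rs, HasDerivAt cs'' (cs''' r) r)
    (hcs3cont : ContinuousOn cs''' (Icc 0 Rs))
    (hcsode : ∀ r ∈ Ioo (0:ℝ) Rs, cs'' r + ((n - 1 : ℝ) / r) * cs' r = F (cs r))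
    (hcs'0 : cs' 0 = 0) (hcsRs : cs Rs = 1)
    (hcs'pos : ∀ r ∈ Ioc (0:ℝ) Rs, 0 < cs' r)
    (hF'pos : ∀ r ∈ Icc (0:ℝ) Rs, 0 < F' (cs r))
    (u₁ : ℝ → ℝ)
    (hu₁def : u₁ = fun r => if r = 0 then Rs * cs'' 0 / cs' Rs
      else Rs * cs' r / (r * cs' Rs)) :
    (ContinuousOn u₁ (Icc 0 Rs) ∧
      ∃ u₁' u₁'' : ℝ → ℝ,
        (∀ r ∈ Ioo (0:ℝ) Rs, HasDerivAt u₁ (u₁' r) r) ∧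
        (∀ r ∈ Ioo (0:ℝ) Rs, HasDerivAt u₁' (u₁'' r) r) ∧
        (∀ r ∈ Ioo (0:ℝ) Rs, u₁'' r + ((n + 1 : ℝ) / r) * u₁' r = F' (cs r) * u₁ r) ∧
        Tendsto u₁' (𝓝[>] (0:ℝ)) (𝓝 0) ∧
        u₁ Rs = 1) ∧
    (∀ u u' u'' : ℝ → ℝ,
      ContinuousOn u (Icc 0 Rs) →
      (∀ r ∈ Ioo (0:ℝ) Rs, HasDerivAt u (u' r) r) →
      (∀ r ∈ Ioo (0:ℝ) Rs, HasDerivAt u' (u'' r) r) →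
      (∀ r ∈ Ioo (0:ℝ) Rs, u'' r + ((n + 1 : ℝ) / r) * u' r = F' (cs r) * u r) →
      Tendsto u' (𝓝[>] (0:ℝ)) (𝓝 0) →
      u Rs = 1 →
      ∀ r ∈ Icc (0:ℝ) Rs, u r = u₁ r) :=
  stmt_4_general n Rs hRs F F' hF hF'cont cs cs' cs'' cs''' hcs1 hcs2 hcs3 hcs3cont hcsode hcs'0
    hcs'pos hF'pos u₁ hu₁def
end

section
/- Suppose in addition u₀ ∈ C²([0,R_s];ℝ) satisfies u₀''(r) + ((n−1)/r)u₀'(r) = F'(c_s(r))u₀(r) for 0 < r < R_s, with u₀'(0) = 0 and u₀(R_s) = 1. Then u₀(r) > r c_s'(r)/(R_s c_s'(R_s)) for all 0 ≤ r < R_s. (Lemma 3.3, assertion (5).) -/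
open Set Real Filter Topology

/-! Write `m = n - 1` and `q = F' ∘ c_s`, so that `u₀'' + (m/r) u₀' = q u₀`, i.e.
`(r^m u₀')' = r^m q u₀`. A minimum principle for the flux `r^m u₀'` gives `u₀ ≥ 0`; then `u₀`
is nondecreasing with `u₀' ≤ A R_s u₀`, and Grönwall's inequality excludes `u₀(0) = 0`.
Differentiating the equation of `c_s` shows that `v = c_s'` solves the same equation with the
larger potential `q + m/r²`, so the Wronskian `r^m (u₀' v - u₀ v')` vanishes at `0` and is
nonincreasing. Hence `u₀ / c_s'` is nonincreasing on `(0, R_s]`, and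
`u₀(r) ≥ c_s'(r) / c_s'(R_s) > r c_s'(r) / (R_s c_s'(R_s))` for `0 < r < R_s`. -/

theorem antitoneOn_div_of_wronskian_nonpos {a b : ℝ} {u u' v v' : ℝ → ℝ}
    (hu : ∀ r ∈ Icc a b, HasDerivAt u (u' r) r) (hv : ∀ r ∈ Icc a b, HasDerivAt v (v' r) r)
    (hv₀ : ∀ r ∈ Icc a b, 0 < v r) (hW : ∀ r ∈ Ioo a b, u' r * v r - u r * v' r ≤ 0) :
    AntitoneOn (fun r => u r / v r) (Icc a b) := by
  refine antitoneOn_of_hasDerivWithinAt_nonpos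
    (f' := fun r => (u' r * v r - u r * v' r) / v r ^ 2) (convex_Icc a b)
    ((HasDerivAt.continuousOn hu).div (HasDerivAt.continuousOn hv) fun r hr => (hv₀ r hr).ne')
    (fun r hr => ?_) (fun r hr => ?_)
  all_goals rw [interior_Icc] at hr
  · have hr' := Ioo_subset_Icc_self hr
    exact ((hu r hr').fun_div (hv r hr') (hv₀ r hr').ne').hasDerivWithinAt
  · exact div_nonpos_of_nonpos_of_nonneg (hW r hr) (sq_nonneg _)

/-- `u'' + (m / r) u' = q u` is `Δu = q u` for a radial function `u(|x|)` on the ball of radius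
`R` in `ℝ^(m+1)`; `u'` and `u''` are the derivatives of `u`. -/
structure RadialSolution (m : ℕ) (R : ℝ) (q u u' u'' : ℝ → ℝ) : Prop where
  hasDerivAt : ∀ r ∈ Icc 0 R, HasDerivAt u (u' r) r
  hasDerivAt_deriv : ∀ r ∈ Icc 0 R, HasDerivAt u' (u'' r) r
  ode : ∀ r ∈ Ioo 0 R, u'' r + m / r * u' r = q r * u r

namespace RadialSolution

variable {m : ℕ} {R A : ℝ} {p q u u' u'' v v' v'' : ℝ → ℝ}

theorem continuousOn (h : RadialSolution m R q u u' u'') : ContinuousOn u (Icc 0 R) :=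
  HasDerivAt.continuousOn h.hasDerivAt

theorem continuousOn_flux (h : RadialSolution m R q u u' u'') :
    ContinuousOn (fun r => r ^ m * u' r) (Icc 0 R) :=
  fun r hr => ((continuousAt_id.pow m).mul
    (h.hasDerivAt_deriv r hr).continuousAt).continuousWithinAt

theorem hasDerivAt_flux (h : RadialSolution m R q u u' u'') {r : ℝ} (hr : r ∈ Ioo 0 R) :
    HasDerivAt (fun s => s ^ m * u' s) (r ^ m * (q r * u r)) r := by
  refine ((hasDerivAt_pow m r).fun_mul
    (h.hasDerivAt_deriv r (Ioo_subset_Icc_self hr))).congr_deriv ?_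
  rw [← h.ode r hr]
  rcases m with _ | k
  · simp
  · field_simp [hr.1.ne']
    push_cast
    ring

theorem strictAntiOn_flux (h : RadialSolution m R q u u' u'') {a b : ℝ} (ha : 0 ≤ a)
    (hb : b ≤ R) (hneg : ∀ r ∈ Ioo a b, q r * u r < 0) :
    StrictAntiOn (fun r => r ^ m * u' r) (Icc a b) := by
  have hsub : Ioo a b ⊆ Ioo 0 R := Ioo_subset_Ioo ha hb
  refine strictAntiOn_of_hasDerivWithinAt_neg (f' := fun r => r ^ m * (q r * u r))
    (convex_Icc a b) (h.continuousOn_flux.mono (Icc_subset_Icc ha hb)) (fun r hr => ?_)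
    (fun r hr => ?_)
  all_goals rw [interior_Icc] at hr
  · exact (h.hasDerivAt_flux (hsub hr)).hasDerivWithinAt
  · exact mul_neg_of_pos_of_neg (pow_pos (hsub hr).1 m) (hneg r hr)

theorem monotoneOn_flux (h : RadialSolution m R q u u' u'')
    (hnonneg : ∀ r ∈ Ioo 0 R, 0 ≤ q r * u r) :
    MonotoneOn (fun r => r ^ m * u' r) (Icc 0 R) := by
  refine monotoneOn_of_hasDerivWithinAt_nonneg (f' := fun r => r ^ m * (q r * u r))
    (convex_Icc 0 R) h.continuousOn_flux (fun r hr => ?_) (fun r hr => ?_)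
  all_goals rw [interior_Icc] at hr
  · exact (h.hasDerivAt_flux hr).hasDerivWithinAt
  · exact mul_nonneg (pow_pos hr.1 m).le (hnonneg r hr)

/-- Minimum principle: at a negative minimum `r₀` the flux `r ^ m * u'` vanishes and then
decreases, so `u` would decrease to the right of `r₀`. -/
theorem nonneg (h : RadialSolution m R q u u' u'') (hq : ∀ r ∈ Ioo 0 R, 0 < q r)
    (h0 : u' 0 = 0) (hR : 0 ≤ u R) : ∀ r ∈ Icc 0 R, 0 ≤ u r := by
  by_contra! ⟨a, ha, hua⟩
  obtain ⟨r₀, hr₀, hmin⟩ :=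
    isCompact_Icc.exists_isMinOn (nonempty_Icc.2 (ha.1.trans ha.2)) h.continuousOn
  have hneg : u r₀ < 0 := (hmin ha).trans_lt hua
  have hr₀R : r₀ < R := hr₀.2.lt_of_ne (by rintro rfl; linarith)
  have hcrit : u' r₀ = 0 := by
    rcases hr₀.1.eq_or_lt with h₀ | h₀
    · rwa [← h₀]
    · exact (hmin.isLocalMin (Icc_mem_nhds h₀ hr₀R)).hasDerivAt_eq_zero
        (h.hasDerivAt r₀ hr₀)
  have hnear : ∀ᶠ r in 𝓝[≥] r₀, u r < 0 ∧ r < R :=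
    nhdsWithin_le_nhds (((h.hasDerivAt r₀ hr₀).continuousAt.eventually (gt_mem_nhds hneg)).and
      (gt_mem_nhds hr₀R))
  obtain ⟨b, hr₀b, hb⟩ := mem_nhdsGE_iff_exists_Icc_subset.1 hnear
  have hbR : b < R := (hb (right_mem_Icc.2 hr₀b.le)).2
  have hflux := h.strictAntiOn_flux hr₀.1 hbR.le fun r hr =>
    mul_neg_of_pos_of_neg (hq r ⟨hr₀.1.trans_lt hr.1, hr.2.trans hbR⟩)
      (hb (Ioo_subset_Icc_self hr)).1
  have hderiv : ∀ r ∈ Ioc r₀ b, u' r < 0 := fun r hr => by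
    have := hflux (left_mem_Icc.2 hr₀b.le) (Ioc_subset_Icc_self hr) hr.1
    simp only [hcrit, mul_zero] at this
    exact neg_of_mul_neg_right this (pow_pos (hr₀.1.trans_lt hr.1) m).le
  have hanti : StrictAntiOn u (Icc r₀ b) := by
    refine strictAntiOn_of_hasDerivWithinAt_neg (f' := u') (convex_Icc r₀ b)
      (h.continuousOn.mono (Icc_subset_Icc hr₀.1 hbR.le)) (fun r hr => ?_) (fun r hr => ?_)
    all_goals rw [interior_Icc] at hr
    · exact (h.hasDerivAt r ⟨hr₀.1.trans hr.1.le, hr.2.le.trans hbR.le⟩).hasDerivWithinAt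
    · exact hderiv r (Ioo_subset_Ioc_self hr)
  exact (hanti (left_mem_Icc.2 hr₀b.le) (right_mem_Icc.2 hr₀b.le) hr₀b).not_ge
    (hmin ⟨hr₀.1.trans hr₀b.le, hbR.le⟩)

theorem deriv_nonneg (h : RadialSolution m R q u u' u'') (hq : ∀ r ∈ Ioo 0 R, 0 ≤ q r)
    (hu : ∀ r ∈ Icc 0 R, 0 ≤ u r) (h0 : u' 0 = 0) : ∀ r ∈ Icc 0 R, 0 ≤ u' r := by
  intro r hr
  rcases hr.1.eq_or_lt with rfl | hr₀
  · exact h0.ge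
  have hflux := h.monotoneOn_flux
    (fun s hs => mul_nonneg (hq s hs) (hu s (Ioo_subset_Icc_self hs)))
    (left_mem_Icc.2 (hr.1.trans hr.2)) hr hr.1
  simp only [h0, mul_zero] at hflux
  exact nonneg_of_mul_nonneg_right hflux (pow_pos hr₀ m)

theorem monotoneOn (h : RadialSolution m R q u u' u'') (hu' : ∀ r ∈ Icc 0 R, 0 ≤ u' r) :
    MonotoneOn u (Icc 0 R) :=
  monotoneOn_of_hasDerivWithinAt_nonneg (convex_Icc 0 R) h.continuousOn
    (fun r hr => (h.hasDerivAt r (interior_subset hr)).hasDerivWithinAt)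
    (fun r hr => hu' r (interior_subset hr))

/-- As `u` is nondecreasing, the flux `s ^ m * u' s` grows with slope at most `r ^ m * A * u r`
on `[0, r]`. -/
theorem deriv_le_mul_self (h : RadialSolution m R q u u' u'') (hq : ∀ r ∈ Ioo 0 R, 0 ≤ q r)
    (hqA : ∀ r ∈ Ioo 0 R, q r ≤ A) (hA : 0 ≤ A) (hu : ∀ r ∈ Icc 0 R, 0 ≤ u r)
    (h0 : u' 0 = 0) : ∀ r ∈ Icc 0 R, u' r ≤ A * R * u r := by
  intro r hr
  rcases hr.1.eq_or_lt with rfl | hr₀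
  · rw [h0]
    exact mul_nonneg (mul_nonneg hA hr.2) (hu 0 hr)
  have hmono := h.monotoneOn (h.deriv_nonneg hq hu h0)
  have hsub : Icc 0 r ⊆ Icc 0 R := Icc_subset_Icc_right hr.2
  have hflux : r ^ m * u' r - 0 ^ m * u' 0 ≤ r ^ m * (A * u r) * (r - 0) := by
    refine (convex_Icc 0 r).image_sub_le_mul_sub_of_deriv_le (h.continuousOn_flux.mono hsub)
      (fun s hs => ?_) (fun s hs => ?_) 0 (left_mem_Icc.2 hr.1) r (right_mem_Icc.2 hr.1) hr.1
    all_goals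
      rw [interior_Icc] at hs
      have hs' : s ∈ Ioo 0 R := ⟨hs.1, hs.2.trans_le hr.2⟩
    · exact (h.hasDerivAt_flux hs').differentiableAt.differentiableWithinAt
    · rw [(h.hasDerivAt_flux hs').deriv]
      have hus := hu s (Ioo_subset_Icc_self hs')
      refine mul_le_mul (pow_le_pow_left₀ hs.1.le hs.2.le m)
        (mul_le_mul (hqA s hs') ?_ hus hA) (mul_nonneg (hq s hs') hus) (pow_nonneg hr.1 m)
      exact hmono (Ioo_subset_Icc_self hs') hr hs.2.le
  simp only [h0, mul_zero, sub_zero] at hflux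
  have : u' r ≤ A * u r * r := by
    rw [mul_assoc] at hflux
    exact le_of_mul_le_mul_left hflux (pow_pos hr₀ m)
  calc u' r ≤ A * u r * r := this
    _ ≤ A * u r * R := mul_le_mul_of_nonneg_left hr.2 (mul_nonneg hA (hu r hr))
    _ = A * R * u r := by ring

/-- If `u 0 = 0`, Grönwall's inequality for `0 ≤ u' ≤ A R u` forces `u = 0` on `[0, R]`. -/
theorem apply_zero_pos (h : RadialSolution m R q u u' u'') (hq : ∀ r ∈ Ioo 0 R, 0 ≤ q r)
    (hqA : ∀ r ∈ Ioo 0 R, q r ≤ A) (hA : 0 ≤ A) (hu : ∀ r ∈ Icc 0 R, 0 ≤ u r)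
    (h0 : u' 0 = 0) (hR₀ : 0 ≤ R) (hR : 0 < u R) : 0 < u 0 := by
  refine (hu 0 (left_mem_Icc.2 hR₀)).lt_of_ne fun hu0 => hR.ne' ?_
  refine eq_zero_of_abs_deriv_le_mul_abs_self_of_eq_zero_right (K := A * R) h.continuousOn
    (fun r hr => (h.hasDerivAt r (Ico_subset_Icc_self hr)).hasDerivWithinAt) hu0.symm
    (fun r hr => ?_) R (right_mem_Icc.2 hR₀)
  have hr := Ico_subset_Icc_self hr
  rw [Real.norm_of_nonneg (h.deriv_nonneg hq hu h0 r hr), Real.norm_of_nonneg (hu r hr)]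
  exact h.deriv_le_mul_self hq hqA hA hu h0 r hr

theorem hasDerivAt_wronskian (hu : RadialSolution m R q u u' u'')
    (hv : RadialSolution m R p v v' v'') {r : ℝ} (hr : r ∈ Ioo 0 R) :
    HasDerivAt (fun s => s ^ m * (u' s * v s - u s * v' s)) (r ^ m * ((q r - p r) * u r * v r))
      r := by
  have hr' := Ioo_subset_Icc_self hr
  have hW : (fun s => s ^ m * (u' s * v s - u s * v' s)) =
      fun s => s ^ m * u' s * v s - u s * (s ^ m * v' s) := by
    funext s
    ring
  rw [hW]
  exact (((hu.hasDerivAt_flux hr).fun_mul (hv.hasDerivAt r hr')).fun_sub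
    ((hu.hasDerivAt r hr').fun_mul (hv.hasDerivAt_flux hr))).congr_deriv (by ring)

theorem wronskian_nonpos (hu : RadialSolution m R q u u' u'')
    (hv : RadialSolution m R p v v' v'') (hm : m ≠ 0)
    (hsign : ∀ r ∈ Ioo 0 R, (q r - p r) * u r * v r ≤ 0) :
    ∀ r ∈ Ioc 0 R, u' r * v r - u r * v' r ≤ 0 := by
  intro r hr
  have hcont : ContinuousOn (fun s => s ^ m * (u' s * v s - u s * v' s)) (Icc 0 R) :=
    fun s hs => ((continuousAt_id.pow m).mul
      (((hu.hasDerivAt_deriv s hs).continuousAt.mul (hv.hasDerivAt s hs).continuousAt).sub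
        ((hu.hasDerivAt s hs).continuousAt.mul
          (hv.hasDerivAt_deriv s hs).continuousAt))).continuousWithinAt
  have hanti : AntitoneOn (fun s => s ^ m * (u' s * v s - u s * v' s)) (Icc 0 R) := by
    refine antitoneOn_of_hasDerivWithinAt_nonpos
      (f' := fun s => s ^ m * ((q s - p s) * u s * v s)) (convex_Icc 0 R) hcont
      (fun s hs => ?_) (fun s hs => ?_)
    all_goals rw [interior_Icc] at hs
    · exact (hu.hasDerivAt_wronskian hv hs).hasDerivWithinAt
    · exact mul_nonpos_of_nonneg_of_nonpos (pow_pos hs.1 m).le (hsign s hs)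
  have hW := hanti (left_mem_Icc.2 (hr.1.le.trans hr.2)) (Ioc_subset_Icc_self hr) hr.1.le
  simp only [zero_pow hm, zero_mul] at hW
  exact nonpos_of_mul_nonpos_right hW (pow_pos hr.1 m)

end RadialSolution

theorem radialSolution_deriv {m : ℕ} {R : ℝ} {F F' c c' c'' c''' : ℝ → ℝ}
    (hF : ∀ x, HasDerivAt F (F' x) x) (hc : ∀ r ∈ Icc 0 R, HasDerivAt c (c' r) r)
    (hc' : ∀ r ∈ Icc 0 R, HasDerivAt c' (c'' r) r)
    (hc'' : ∀ r ∈ Icc 0 R, HasDerivAt c'' (c''' r) r)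
    (hode : ∀ r ∈ Ioo 0 R, c'' r + m / r * c' r = F (c r)) :
    RadialSolution m R (fun r => F' (c r) + m / r ^ 2) c' c'' c''' where
  hasDerivAt := hc'
  hasDerivAt_deriv := hc''
  ode r hr := by
    have hr' := Ioo_subset_Icc_self hr
    have heq : c'' =ᶠ[𝓝 r] fun s => F (c s) - m * s⁻¹ * c' s := by
      filter_upwards [Ioo_mem_nhds hr.1 hr.2] with s hs
      rw [← hode s hs, div_eq_mul_inv]
      ring
    have hd := ((hF (c r)).comp r (hc r hr')).fun_sub
      (((hasDerivAt_inv hr.1.ne').const_mul (m : ℝ)).fun_mul (hc' r hr'))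
    rw [(hc'' r hr').unique (hd.congr_of_eventuallyEq heq)]
    field_simp [hr.1.ne']
    ring

theorem stmt_5_general
    (n : ℕ) (hn : 2 ≤ n) (Rs : ℝ) (hRs : 0 < Rs)
    (F F' : ℝ → ℝ) (hF : ∀ x : ℝ, HasDerivAt F (F' x) x) (hF'cont : Continuous F')
    (cs cs' cs'' cs''' : ℝ → ℝ)
    (hcs1 : ∀ r ∈ Icc (0:ℝ) Rs, HasDerivAt cs (cs' r) r)
    (hcs2 : ∀ r ∈ Icc (0:ℝ) Rs, HasDerivAt cs' (cs'' r) r)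
    (hcs3 : ∀ r ∈ Icc (0:ℝ) Rs, HasDerivAt cs'' (cs''' r) r)
    (hcsode : ∀ r ∈ Ioo (0:ℝ) Rs, cs'' r + ((n - 1 : ℝ) / r) * cs' r = F (cs r))
    (hcs'pos : ∀ r ∈ Ioc (0:ℝ) Rs, 0 < cs' r)
    (hF'pos : ∀ r ∈ Icc (0:ℝ) Rs, 0 < F' (cs r))
    (u₀ u₀' u₀'' : ℝ → ℝ)
    (hu₀1 : ∀ r ∈ Icc (0:ℝ) Rs, HasDerivAt u₀ (u₀' r) r)
    (hu₀2 : ∀ r ∈ Icc (0:ℝ) Rs, HasDerivAt u₀' (u₀'' r) r)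
    (hu₀ode : ∀ r ∈ Ioo (0:ℝ) Rs, u₀'' r + ((n - 1 : ℝ) / r) * u₀' r = F' (cs r) * u₀ r)
    (hu₀'0 : u₀' 0 = 0) (hu₀Rs : u₀ Rs = 1) :
    ∀ r ∈ Ico (0:ℝ) Rs, u₀ r > r * cs' r / (Rs * cs' Rs) := by
  obtain ⟨m, rfl⟩ : ∃ m, n = m + 1 := ⟨n - 1, by omega⟩
  have hm : ((m + 1 : ℕ) : ℝ) - 1 = m := by push_cast; ring
  simp only [hm] at hcsode hu₀ode
  have hu : RadialSolution m Rs (fun r => F' (cs r)) u₀ u₀' u₀'' := ⟨hu₀1, hu₀2, hu₀ode⟩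
  have hv := radialSolution_deriv hF hcs1 hcs2 hcs3 hcsode
  have hq : ∀ r ∈ Ioo 0 Rs, 0 < F' (cs r) := fun r hr => hF'pos r (Ioo_subset_Icc_self hr)
  have hu₀_nonneg := hu.nonneg hq hu₀'0 (hu₀Rs ▸ zero_le_one)
  intro r hr
  rcases hr.1.eq_or_lt with rfl | hr₀
  · obtain ⟨rA, hrA, hmax⟩ := isCompact_Icc.exists_isMaxOn (nonempty_Icc.2 hRs.le)
      (hF'cont.comp_continuousOn (HasDerivAt.continuousOn hcs1))
    simpa using hu.apply_zero_pos (fun s hs => (hq s hs).le)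
      (fun s hs => hmax (Ioo_subset_Icc_self hs)) (hF'pos rA hrA).le hu₀_nonneg hu₀'0 hRs.le (hu₀Rs ▸ zero_lt_one)
  have hW := hu.wronskian_nonpos hv (by omega) fun s hs => by
    rw [sub_add_cancel_left, neg_mul, neg_mul, neg_nonpos]
    exact mul_nonneg (mul_nonneg (by positivity) (hu₀_nonneg s (Ioo_subset_Icc_self hs)))
      (hcs'pos s (Ioo_subset_Ioc_self hs)).le
  have hsub : Icc r Rs ⊆ Icc 0 Rs := Icc_subset_Icc_left hr.1
  have hratio := antitoneOn_div_of_wronskian_nonpos (fun s hs => hu₀1 s (hsub hs))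
    (fun s hs => hcs2 s (hsub hs)) (fun s hs => hcs'pos s ⟨hr₀.trans_le hs.1, hs.2⟩)
    (fun s hs => hW s ⟨hr₀.trans hs.1, hs.2.le⟩) (left_mem_Icc.2 hr.2.le)
    (right_mem_Icc.2 hr.2.le) hr.2.le
  have hcs'r := hcs'pos r ⟨hr₀, hr.2.le⟩
  have hcs'Rs := hcs'pos Rs (right_mem_Ioc.2 hRs)
  calc r * cs' r / (Rs * cs' Rs) < cs' r / cs' Rs := by
        rw [mul_div_mul_comm]
        exact mul_lt_of_lt_one_left (div_pos hcs'r hcs'Rs) ((div_lt_one hRs).2 hr.2)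
    _ = u₀ Rs / cs' Rs * cs' r := by rw [hu₀Rs]; ring
    _ ≤ u₀ r / cs' r * cs' r := mul_le_mul_of_nonneg_right hratio hcs'r.le
    _ = u₀ r := div_mul_cancel₀ _ hcs'r.ne'

/-- Lemma 3.3, assertion (5): if `u₀ ∈ C²([0,R_s])` satisfies
`u₀'' + ((n−1)/r)u₀' = F'(c_s)u₀` on `(0,R_s)` with `u₀'(0) = 0`, `u₀(R_s) = 1`, then
`u₀(r) > r c_s'(r)/(R_s c_s'(R_s))` for `0 ≤ r < R_s`. -/
theorem stmt_5
    (n : ℕ) (hn : 2 ≤ n) (Rs : ℝ) (hRs : 0 < Rs)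
    (F F' : ℝ → ℝ) (hF : ∀ x : ℝ, HasDerivAt F (F' x) x) (hF'cont : Continuous F')
    (cs cs' cs'' cs''' : ℝ → ℝ)
    (hcs1 : ∀ r ∈ Icc (0:ℝ) Rs, HasDerivAt cs (cs' r) r)
    (hcs2 : ∀ r ∈ Icc (0:ℝ) Rs, HasDerivAt cs' (cs'' r) r)
    (hcs3 : ∀ r ∈ Icc (0:ℝ) Rs, HasDerivAt cs'' (cs''' r) r)
    (hcs3cont : ContinuousOn cs''' (Icc 0 Rs))
    (hcsode : ∀ r ∈ Ioo (0:ℝ) Rs, cs'' r + ((n - 1 : ℝ) / r) * cs' r = F (cs r))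
    (hcs'0 : cs' 0 = 0) (hcsRs : cs Rs = 1)
    (hcs'pos : ∀ r ∈ Ioc (0:ℝ) Rs, 0 < cs' r)
    (hF'pos : ∀ r ∈ Icc (0:ℝ) Rs, 0 < F' (cs r))
    (u₀ u₀' u₀'' : ℝ → ℝ)
    (hu₀1 : ∀ r ∈ Icc (0:ℝ) Rs, HasDerivAt u₀ (u₀' r) r)
    (hu₀2 : ∀ r ∈ Icc (0:ℝ) Rs, HasDerivAt u₀' (u₀'' r) r)
    (hu₀2cont : ContinuousOn u₀'' (Icc 0 Rs))
    (hu₀ode : ∀ r ∈ Ioo (0:ℝ) Rs, u₀'' r + ((n - 1 : ℝ) / r) * u₀' r = F' (cs r) * u₀ r)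
    (hu₀'0 : u₀' 0 = 0) (hu₀Rs : u₀ Rs = 1) :
    ∀ r ∈ Ico (0:ℝ) Rs, u₀ r > r * cs' r / (Rs * cs' Rs) :=
  stmt_5_general n hn Rs hRs F F' hF hF'cont cs cs' cs'' cs''' hcs1 hcs2 hcs3 hcsode hcs'pos hF'pos
    u₀ u₀' u₀'' hu₀1 hu₀2 hu₀ode hu₀'0 hu₀Rs
end

section
/- Suppose λ ∈ ℂ with Re λ > λ*(a) := max_{0≤r≤R_s} a(r). Then for every h ∈ C([0,R_s];ℂ), the unique solution φ_λ ∈ C([0,R_s];ℂ) ∩ C¹((0,R_s);ℂ) of λφ − L₀φ = h on (0,R_s) satisfies max_{0≤r≤R_s}|φ_λ(r)| ≤ (Re λ − λ*(a))^{−1} max_{0≤r≤R_s}|h(r)|. (Lemma 4.1, assertion (3), estimate (4.6).) -/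
/-!
Put `ψ = ‖φ‖²` and suppose `‖φ‖` exceeds `M / (Re λ - λ*)` somewhere, hence at a maximum
point `p`. Pairing the equation with `φ` gives
`(-v_s) ⟪φ, φ'⟫ = (Re λ - a) ‖φ‖² - ⟪φ, h⟫ ≥ (Re λ - λ*) ‖φ‖² - M ‖φ‖`,
which is positive near `p`. As `0 < -v_s(r) ≤ c₁ R_s (R_s - r)`, this yields
`ψ' ≥ K / (R_s - r)` near `p` for some `K > 0`. If `p < R_s`, then `ψ` increases to the right
of `p`; if `p = R_s`, then `ψ + K log (R_s - r)` is nondecreasing, so `ψ → ∞` at `R_s`.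
Either way `p` is not a maximum.
-/

open Set Real Filter Topology
open scoped InnerProductSpace

theorem tendsto_atTop_nhdsLT_of_div_sub_le_deriv {ψ ψ' : ℝ → ℝ} {b K : ℝ} (hK : 0 < K)
    (hderiv : ∀ᶠ s in 𝓝[<] b, HasDerivAt ψ (ψ' s) s ∧ K / (b - s) ≤ ψ' s) :
    Tendsto ψ (𝓝[<] b) atTop := by
  obtain ⟨a, hab : a < b, hsub⟩ := mem_nhdsLT_iff_exists_Ioo_subset.1 hderiv
  set F : ℝ → ℝ := fun s => ψ s + K * log (b - s)
  have hF : ∀ s ∈ Ioo a b, HasDerivAt F (ψ' s - K / (b - s)) s := by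
    intro s hs
    have hbs : b - s ≠ 0 := (sub_pos.2 hs.2).ne'
    refine ((hsub hs).1.add ((((hasDerivAt_id s).const_sub b).log hbs).const_mul K)).congr_deriv ?_
    simp only [id]
    ring
  have hFmono : MonotoneOn F (Ioo a b) :=
    monotoneOn_of_deriv_nonneg (convex_Ioo a b)
      (fun s hs => (hF s hs).continuousAt.continuousWithinAt)
      (fun s hs => (hF s (interior_subset hs)).differentiableAt.differentiableWithinAt)
      (fun s hs => by
        rw [interior_Ioo] at hs
        rw [(hF s hs).deriv, sub_nonneg]
        exact (hsub hs).2)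
  obtain ⟨c, hc⟩ := nonempty_Ioo.2 hab
  have hlog : Tendsto (fun s => F c - K * log (b - s)) (𝓝[<] b) atTop := by
    have hgap : Tendsto (fun s => b - s) (𝓝[<] b) (𝓝[>] 0) := by
      refine tendsto_nhdsWithin_iff.2 ⟨?_, ?_⟩
      · have := ((tendsto_const_nhds (x := b)).sub tendsto_id).mono_left
          (nhdsWithin_le_nhds (a := b) (s := Iio b))
        rwa [sub_self] at this
      · filter_upwards [self_mem_nhdsWithin] with s (hs : s < b)
        exact sub_pos.2 hs
    simpa [sub_eq_add_neg] using tendsto_atTop_add_const_left _ (F c)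
      (tendsto_neg_atBot_atTop.comp ((tendsto_log_nhdsGT_zero.comp hgap).const_mul_atBot hK))
  refine tendsto_atTop_mono' _ ?_ hlog
  filter_upwards [Ioo_mem_nhdsLT hc.2] with s hs
  have := hFmono hc ⟨hc.1.trans hs.1, hs.2⟩ hs.1.le
  simp only [F] at this
  linarith

theorem exists_lt_of_deriv_pos_nhdsGT {ψ ψ' : ℝ → ℝ} {p b : ℝ} (hpb : p < b)
    (hψ : ContinuousOn ψ (Icc p b))
    (hderiv : ∀ᶠ s in 𝓝[>] p, HasDerivAt ψ (ψ' s) s ∧ 0 < ψ' s) :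
    ∃ t ∈ Ioc p b, ψ p < ψ t := by
  obtain ⟨u, hpu, hsub⟩ := mem_nhdsGT_iff_exists_Ioo_subset.1 hderiv
  have hpt : p < min u b := lt_min hpu hpb
  have hmono : StrictMonoOn ψ (Icc p (min u b)) := by
    refine strictMonoOn_of_deriv_pos (convex_Icc _ _)
      (hψ.mono (Icc_subset_Icc_right (min_le_right _ _))) fun s hs => ?_
    rw [interior_Icc] at hs
    have hs' := hsub ⟨hs.1, hs.2.trans_le (min_le_left _ _)⟩
    rw [hs'.1.deriv]
    exact hs'.2
  exact ⟨min u b, ⟨hpt, min_le_right _ _⟩,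
    hmono (left_mem_Icc.2 hpt.le) (right_mem_Icc.2 hpt.le) hpt⟩

theorem not_isMaxOn_of_div_sub_le_deriv {ψ ψ' : ℝ → ℝ} {a b p K : ℝ} (hK : 0 < K) (hab : a < b)
    (hp : p ∈ Icc a b) (hψ : ContinuousOn ψ (Icc a b))
    (hderiv : ∀ᶠ s in 𝓝[Ioo a b] p, HasDerivAt ψ (ψ' s) s ∧ K / (b - s) ≤ ψ' s) :
    ¬ IsMaxOn ψ (Icc a b) p := by
  intro hmax
  rcases hp.2.lt_or_eq with hpb | rfl
  · have hright : ∀ᶠ s in 𝓝[>] p, HasDerivAt ψ (ψ' s) s ∧ 0 < ψ' s := by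
      rw [← nhdsWithin_Ioo_eq_nhdsGT hpb]
      filter_upwards [nhdsWithin_mono p (Ioo_subset_Ioo_left hp.1) hderiv,
        self_mem_nhdsWithin] with s hs hsI
      exact ⟨hs.1, (div_pos hK (sub_pos.2 hsI.2)).trans_le hs.2⟩
    obtain ⟨t, ht, hlt⟩ :=
      exists_lt_of_deriv_pos_nhdsGT hpb (hψ.mono (Icc_subset_Icc_left hp.1)) hright
    exact (hmax ⟨hp.1.trans ht.1.le, ht.2⟩).not_gt hlt
  · rw [nhdsWithin_Ioo_eq_nhdsLT hab] at hderiv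
    have hblowup := tendsto_atTop_nhdsLT_of_div_sub_le_deriv hK hderiv
    obtain ⟨s, hs, hsI⟩ := ((hblowup.eventually_gt_atTop (ψ p)).and (Ioc_mem_nhdsLT hab)).exists
    exact (hmax (Ioc_subset_Icc_self hsI)).not_gt hs

theorem neg_mul_inner_eq_of_resolvent_eq {lam z w h : ℂ} {v a : ℝ}
    (heq : lam * z - (-(v : ℂ) * w + (a : ℂ) * z) = h) :
    -v * ⟪z, w⟫_ℝ = (lam.re - a) * ‖z‖ ^ 2 - ⟪z, h⟫_ℝ := by
  subst heq
  simp only [Complex.inner, Complex.sq_norm, Complex.normSq_apply, Complex.mul_re, Complex.mul_im,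
    Complex.sub_re, Complex.sub_im, Complex.add_re, Complex.add_im, Complex.neg_re, Complex.neg_im,
    Complex.ofReal_re, Complex.ofReal_im, Complex.conj_re, Complex.conj_im]
  ring

theorem div_le_inner_of_resolvent_eq {lam z w h : ℂ} {v a μ M ε C : ℝ}
    (heq : lam * z - (-(v : ℂ) * w + (a : ℂ) * z) = h) (ha : a ≤ μ) (hh : ‖h‖ ≤ M)
    (hε : 0 ≤ ε) (hεz : ε ≤ (lam.re - μ) * ‖z‖ ^ 2 - M * ‖z‖) (hv : 0 < -v) (hvC : -v ≤ C) :
    ε / C ≤ ⟪z, w⟫_ℝ := by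
  have hzh : ⟪z, h⟫_ℝ ≤ M * ‖z‖ :=
    (real_inner_le_norm z h).trans (by rw [mul_comm]; gcongr)
  have hvε : ε ≤ -v * ⟪z, w⟫_ℝ := by
    rw [neg_mul_inner_eq_of_resolvent_eq heq]
    nlinarith [sq_nonneg ‖z‖]
  have hzw : 0 ≤ ⟪z, w⟫_ℝ := nonneg_of_mul_nonneg_right (hε.trans hvε) hv
  exact div_le_of_le_mul₀ (hv.le.trans hvC) hzw (by nlinarith)

theorem neg_mem_Ioc_of_quadratic_bounds {v c₁ c₂ R s : ℝ} (hc₂ : 0 < c₂) (hc₁₂ : c₂ ≤ c₁)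
    (hs : s ∈ Ioo 0 R) (hv : -c₁ * s * (R - s) ≤ v ∧ v ≤ -c₂ * s * (R - s)) :
    -v ∈ Ioc 0 (c₁ * R * (R - s)) := by
  obtain ⟨hs0, hsR⟩ := hs
  have hRs : 0 < R - s := sub_pos.2 hsR
  constructor
  · nlinarith [mul_pos (mul_pos hc₂ hs0) hRs]
  · nlinarith [mul_nonneg (mul_nonneg (hc₂.le.trans hc₁₂) hRs.le) hRs.le]

theorem stmt_8_general
    (Rs c₁ c₂ : ℝ) (hRs : 0 < Rs) (hc₂ : 0 < c₂) (hc₁₂ : c₂ ≤ c₁)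
    (vs : ℝ → ℝ)
    (hvsb : ∀ r ∈ Icc (0:ℝ) Rs, -c₁ * r * (Rs - r) ≤ vs r ∧ vs r ≤ -c₂ * r * (Rs - r))
    (a : ℝ → ℝ)
    (lamStar : ℝ) (hlamStar : IsGreatest (a '' Icc (0:ℝ) Rs) lamStar)
    (lam : ℂ) (hlam : lamStar < lam.re)
    (h : ℝ → ℂ)
    (φ φ' : ℝ → ℂ)
    (hφcont : ContinuousOn φ (Icc 0 Rs))
    (hφ' : ∀ r ∈ Ioo (0:ℝ) Rs, HasDerivAt φ (φ' r) r)
    (heq : ∀ r ∈ Ioo (0:ℝ) Rs,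
      lam * φ r - (-(vs r : ℂ) * φ' r + (a r : ℂ) * φ r) = h r) :
    ∀ M : ℝ, (∀ r ∈ Icc (0:ℝ) Rs, ‖h r‖ ≤ M) →
      ∀ r ∈ Icc (0:ℝ) Rs, ‖φ r‖ ≤ (lam.re - lamStar)⁻¹ * M := by
  intro M hM r hr
  by_contra! hlt
  obtain ⟨p, hp, hpmax⟩ := isCompact_Icc.exists_isMaxOn ⟨r, hr⟩ hφcont.norm
  have hβ : 0 < lam.re - lamStar := sub_pos.2 hlam
  have hMp : M < (lam.re - lamStar) * ‖φ p‖ := by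
    rw [← inv_mul_lt_iff₀ hβ]
    exact hlt.trans_le (hpmax hr)
  obtain ⟨ε, hε, hnear⟩ : ∃ ε > 0,
      ∀ᶠ s in 𝓝[Icc 0 Rs] p, ε ≤ (lam.re - lamStar) * ‖φ s‖ ^ 2 - M * ‖φ s‖ := by
    have hφp : 0 < ‖φ p‖ :=
      (mul_pos_iff_of_pos_left hβ).1 (((norm_nonneg _).trans (hM r hr)).trans_lt hMp)
    have hexcess : 0 < (lam.re - lamStar) * ‖φ p‖ ^ 2 - M * ‖φ p‖ := by
      nlinarith [mul_pos hφp (sub_pos.2 hMp)]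
    have hcont : ContinuousOn (fun s => (lam.re - lamStar) * ‖φ s‖ ^ 2 - M * ‖φ s‖)
        (Icc 0 Rs) := by
      fun_prop
    exact ⟨_, half_pos hexcess, (hcont p hp).eventually_const_le (half_lt_self hexcess)⟩
  refine not_isMaxOn_of_div_sub_le_deriv (ψ := fun s => ‖φ s‖ ^ 2)
    (ψ' := fun s => 2 * ⟪φ s, φ' s⟫_ℝ) (K := 2 * ε / (c₁ * Rs))
    (by have := hc₂.trans_le hc₁₂; positivity) hRs hp (hφcont.norm.pow 2) ?_
    (fun s hs => pow_le_pow_left₀ (norm_nonneg _) (hpmax hs) 2)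
  filter_upwards [nhdsWithin_mono p Ioo_subset_Icc_self hnear, self_mem_nhdsWithin] with s hs hsI
  have hsIcc := Ioo_subset_Icc_self hsI
  obtain ⟨hv, hvC⟩ := neg_mem_Ioc_of_quadratic_bounds hc₂ hc₁₂ hsI (hvsb s hsIcc)
  refine ⟨(hφ' s hsI).norm_sq, ?_⟩
  rw [div_div, mul_div_assoc]
  gcongr
  exact div_le_inner_of_resolvent_eq (heq s hsI) (hlamStar.2 ⟨s, hsIcc, rfl⟩) (hM s hsIcc)
    hε.le hs hv hvC

/-- Lemma 4.1, assertion (3), estimate (4.6): if `Re λ > λ*(a) = max_{[0,R_s]} a`, the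
(unique) solution `φ_λ ∈ C([0,R_s]) ∩ C¹((0,R_s))` of `λφ − L₀φ = h` satisfies
`max |φ_λ| ≤ (Re λ − λ*(a))⁻¹ max |h|`. -/
theorem stmt_8
    (Rs c₁ c₂ : ℝ) (hRs : 0 < Rs) (hc₂ : 0 < c₂) (hc₁₂ : c₂ ≤ c₁)
    (vs vs' : ℝ → ℝ)
    (hvs : ∀ r ∈ Icc (0:ℝ) Rs, HasDerivAt vs (vs' r) r)
    (hvs'cont : ContinuousOn vs' (Icc 0 Rs))
    (hvs0 : vs 0 = 0) (hvsRs : vs Rs = 0)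
    (hvsb : ∀ r ∈ Icc (0:ℝ) Rs, -c₁ * r * (Rs - r) ≤ vs r ∧ vs r ≤ -c₂ * r * (Rs - r))
    (a : ℝ → ℝ) (hacont : ContinuousOn a (Icc 0 Rs))
    (lamStar : ℝ) (hlamStar : IsGreatest (a '' Icc (0:ℝ) Rs) lamStar)
    (lam : ℂ) (hlam : lamStar < lam.re)
    (h : ℝ → ℂ) (hhcont : ContinuousOn h (Icc 0 Rs))
    (φ φ' : ℝ → ℂ)
    (hφcont : ContinuousOn φ (Icc 0 Rs))
    (hφ' : ∀ r ∈ Ioo (0:ℝ) Rs, HasDerivAt φ (φ' r) r)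
    (heq : ∀ r ∈ Ioo (0:ℝ) Rs,
      lam * φ r - (-(vs r : ℂ) * φ' r + (a r : ℂ) * φ r) = h r) :
    ∀ M : ℝ, (∀ r ∈ Icc (0:ℝ) Rs, ‖h r‖ ≤ M) →
      ∀ r ∈ Icc (0:ℝ) Rs, ‖φ r‖ ≤ (lam.re - lamStar)⁻¹ * M :=
  stmt_8_general Rs c₁ c₂ hRs hc₂ hc₁₂ vs hvsb a lamStar hlamStar lam hlam h φ φ' hφcont hφ' heq
end

section
/- Let λ₂ = max_{0≤r≤R_s}(g*(r) + a(r)). If φ ∈ C¹([0,R_s]×[0,∞);ℝ) satisfies ∂_t φ(r,t) = −v_s(r)∂_r φ(r,t) + a(r)φ(r,t) for (r,t) ∈ (0,R_s)×(0,∞), then ∫₀^{R_s}|φ(r,t)| r^{n−1} dr ≤ e^{λ₂ t} ∫₀^{R_s}|φ(r,0)| r^{n−1} dr for all t ≥ 0. (Lemma 4.3.) -/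
open Set Real intervalIntegral Filter Topology
open scoped Interval

/-!
The weighted `L¹` norm `∫ |φ| r^(n-1) dr` is regularised to `∫ √(φ² + ε²) r^(n-1) dr`, which is
differentiable in time. Along the equation, the transport term `-v_s ∂_r φ` is integrated by
parts against the flux `v_s r^(n-1)`, which vanishes at both ends and whose derivative is
`g* r^(n-1)`; so the time derivative of the regularised norm is at most `λ₂` times itself plus an
`O(ε)` error. Grönwall's inequality and `ε → 0` give the estimate.
-/

noncomputable section

def smoothAbs (ε x : ℝ) : ℝ := √(x ^ 2 + ε ^ 2)

def smoothSign (ε x : ℝ) : ℝ := x / smoothAbs ε x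

end

namespace SmoothAbs

variable {ε : ℝ}

@[fun_prop]
theorem continuous_smoothAbs (ε : ℝ) : Continuous (smoothAbs ε) := by
  unfold smoothAbs
  fun_prop

theorem smoothAbs_nonneg (ε x : ℝ) : 0 ≤ smoothAbs ε x := sqrt_nonneg _

theorem smoothAbs_pos (hε : ε ≠ 0) (x : ℝ) : 0 < smoothAbs ε x :=
  sqrt_pos.2 (by positivity)

theorem sq_smoothAbs (ε x : ℝ) : smoothAbs ε x ^ 2 = x ^ 2 + ε ^ 2 :=
  sq_sqrt (by positivity)

theorem abs_le_smoothAbs (ε x : ℝ) : |x| ≤ smoothAbs ε x := by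
  rw [← sqrt_sq_eq_abs]
  exact sqrt_le_sqrt (by nlinarith [sq_nonneg ε])

theorem smoothAbs_le_abs_add (x : ℝ) (hε : 0 ≤ ε) : smoothAbs ε x ≤ |x| + ε := by
  rw [smoothAbs, sqrt_le_left (by positivity)]
  nlinarith [sq_abs x, abs_nonneg x]

theorem continuous_smoothSign (hε : ε ≠ 0) : Continuous (smoothSign ε) :=
  continuous_id.div (continuous_smoothAbs ε) fun x => (smoothAbs_pos hε x).ne'

theorem hasDerivAt_smoothAbs (hε : ε ≠ 0) (x : ℝ) :
    HasDerivAt (smoothAbs ε) (smoothSign ε x) x := by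
  have h := ((hasDerivAt_pow 2 x).add_const (ε ^ 2)).sqrt (by positivity : x ^ 2 + ε ^ 2 ≠ 0)
  convert h using 1
  · rfl
  · unfold smoothSign smoothAbs
    field_simp
    push_cast
    ring

/-- The defect is `ε² / smoothAbs ε x`. -/
theorem abs_mul_smoothSign_sub_smoothAbs_le (hε : 0 < ε) (x : ℝ) :
    |x * smoothSign ε x - smoothAbs ε x| ≤ ε := by
  have hpos := smoothAbs_pos hε.ne' x
  have hge : ε ≤ smoothAbs ε x := by
    rw [smoothAbs, le_sqrt hε.le (by positivity)]
    nlinarith [sq_nonneg x]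
  have : x * smoothSign ε x - smoothAbs ε x = -(ε ^ 2 / smoothAbs ε x) := by
    rw [smoothSign, eq_neg_iff_add_eq_zero]
    field_simp
    nlinarith [sq_smoothAbs ε x]
  rw [this, abs_neg, abs_of_nonneg (by positivity), div_le_iff₀ hpos]
  nlinarith

end SmoothAbs

open SmoothAbs

theorem continuous_gronwallBound (K : ℝ) :
    Continuous fun p : ℝ × ℝ × ℝ => gronwallBound p.1 K p.2.1 p.2.2 := by
  by_cases hK : K = 0
  · simp only [hK, gronwallBound_K0]
    fun_prop
  · simp only [gronwallBound_of_K_ne_0 hK]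
    fun_prop

theorem gronwallBound_mono_left (K ε x : ℝ) : Monotone fun δ => gronwallBound δ K ε x := by
  intro δ δ' h
  unfold gronwallBound
  split_ifs
  · linarith
  · have := exp_pos (K * x)
    nlinarith

/-- Unlike `le_gronwallBound_of_liminf_deriv_right_le`, no derivative at the left endpoint is
needed: it is reached by continuity. -/
theorem le_gronwallBound_of_hasDerivAt_Ioo {f f' : ℝ → ℝ} {K ε a b : ℝ} (hab : a ≤ b)
    (hf : ContinuousOn f (Icc a b)) (hf' : ∀ x ∈ Ioo a b, HasDerivAt f (f' x) x)
    (bound : ∀ x ∈ Ioo a b, f' x ≤ K * f x + ε) :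
    f b ≤ gronwallBound (f a) K ε (b - a) := by
  rcases hab.eq_or_lt with rfl | hab
  · simp [gronwallBound_x0]
  have from_later : ∀ c ∈ Ioo a b, f b ≤ gronwallBound (f c) K ε (b - c) := fun c hc =>
    le_gronwallBound_of_liminf_deriv_right_le (hf.mono (Icc_subset_Icc_left hc.1.le))
      (fun x hx _ hr =>
        (hf' x ⟨hc.1.trans_le hx.1, hx.2⟩).hasDerivWithinAt.liminf_right_slope_le hr)
      le_rfl (fun x hx => bound x ⟨hc.1.trans_le hx.1, hx.2⟩) b ⟨hc.2.le, le_rfl⟩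
  have hfa : Tendsto f (𝓝[>] a) (𝓝 (f a)) :=
    (hf a (left_mem_Icc.2 hab.le)).tendsto.mono_left <| by
      rw [← nhdsWithin_Ioo_eq_nhdsGT hab]
      exact nhdsWithin_mono a Ioo_subset_Icc_self
  have hlim : Tendsto (fun c => gronwallBound (f c) K ε (b - c)) (𝓝[>] a)
      (𝓝 (gronwallBound (f a) K ε (b - a))) :=
    (continuous_gronwallBound K).continuousAt.tendsto.comp
      (hfa.prodMk_nhds (tendsto_const_nhds.prodMk_nhds
        ((continuous_const.sub continuous_id).continuousAt.tendsto.mono_left nhdsWithin_le_nhds)))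
  exact ge_of_tendsto hlim (eventually_of_mem (Ioo_mem_nhdsGT hab) from_later)

section ParametricIntegral

variable {F F' : ℝ → ℝ → ℝ} {a b : ℝ}

theorem continuousOn_intervalIntegral_of_continuousOn_prod {K : Set ℝ} (hK : IsCompact K)
    (hF : ContinuousOn (fun p : ℝ × ℝ => F p.1 p.2) ([[a, b]] ×ˢ K)) :
    ContinuousOn (fun t => ∫ r in a..b, F r t) K := by
  obtain ⟨M, hM⟩ := (isCompact_uIcc.prod hK).exists_bound_of_continuousOn hF
  intro t ht
  apply continuousWithinAt_of_dominated_interval (bound := fun _ => M)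
  · filter_upwards [self_mem_nhdsWithin] with s hs
    exact ((hF.uncurry_right _ hs).mono uIoc_subset_uIcc).aestronglyMeasurable measurableSet_uIoc
  · filter_upwards [self_mem_nhdsWithin] with s hs
    exact MeasureTheory.ae_of_all _ fun r hr => hM (r, s) ⟨uIoc_subset_uIcc hr, hs⟩
  · exact intervalIntegrable_const
  · exact MeasureTheory.ae_of_all _ fun r hr => hF.uncurry_left _ (uIoc_subset_uIcc hr) t ht

theorem hasDerivAt_intervalIntegral_of_continuousOn_prod {U : Set ℝ} (hU : IsOpen U) {t₀ : ℝ}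
    (ht₀ : t₀ ∈ U) (hF : ContinuousOn (fun p : ℝ × ℝ => F p.1 p.2) ([[a, b]] ×ˢ U))
    (hF' : ContinuousOn (fun p : ℝ × ℝ => F' p.1 p.2) ([[a, b]] ×ˢ U))
    (hderiv : ∀ r ∈ Ioo (min a b) (max a b), ∀ t ∈ U, HasDerivAt (F r ·) (F' r t) t) :
    HasDerivAt (fun t => ∫ r in a..b, F r t) (∫ r in a..b, F' r t₀) t₀ := by
  obtain ⟨δ, hδ, hδU⟩ := Metric.nhds_basis_closedBall.mem_iff.1 (hU.mem_nhds ht₀)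
  obtain ⟨M, hM⟩ := (isCompact_uIcc.prod (isCompact_closedBall t₀ δ)).exists_bound_of_continuousOn
    (hF'.mono (prod_mono_right hδU))
  refine (hasDerivAt_integral_of_dominated_loc_of_deriv_le (F := fun t r => F r t)
    (F' := fun t r => F' r t) (bound := fun _ => M) (Metric.ball_mem_nhds t₀ hδ) ?_
    (hF.uncurry_right _ ht₀).intervalIntegrable ?_ ?_ intervalIntegrable_const ?_).2
  · filter_upwards [hU.mem_nhds ht₀] with s hs
    exact ((hF.uncurry_right _ hs).mono uIoc_subset_uIcc).aestronglyMeasurable measurableSet_uIoc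
  · exact ((hF'.uncurry_right _ ht₀).mono uIoc_subset_uIcc).aestronglyMeasurable measurableSet_uIoc
  · exact MeasureTheory.ae_of_all _ fun r hr s hs =>
      hM (r, s) ⟨uIoc_subset_uIcc hr, Metric.ball_subset_closedBall hs⟩
  · filter_upwards [MeasureTheory.Measure.ae_ne MeasureTheory.volume (max a b)] with r hr hrI s hs
    exact hderiv r ⟨hrI.1, lt_of_le_of_ne hrI.2 hr⟩ s (hδU (Metric.ball_subset_closedBall hs))

theorem hasDerivAt_integral_smoothAbs_mul {φ φt : ℝ → ℝ → ℝ} {w : ℝ → ℝ} {ε t₀ : ℝ}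
    {U : Set ℝ} (hε : ε ≠ 0) (hU : IsOpen U) (ht₀ : t₀ ∈ U)
    (hφ : ContinuousOn (fun p : ℝ × ℝ => φ p.1 p.2) ([[a, b]] ×ˢ U))
    (hφt : ContinuousOn (fun p : ℝ × ℝ => φt p.1 p.2) ([[a, b]] ×ˢ U))
    (hw : ContinuousOn w [[a, b]])
    (hderiv : ∀ r ∈ Ioo (min a b) (max a b), ∀ t ∈ U, HasDerivAt (φ r ·) (φt r t) t) :
    HasDerivAt (fun t => ∫ r in a..b, smoothAbs ε (φ r t) * w r)
      (∫ r in a..b, smoothSign ε (φ r t₀) * φt r t₀ * w r) t₀ := by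
  have hw' : ContinuousOn (fun p : ℝ × ℝ => w p.1) ([[a, b]] ×ˢ U) :=
    hw.comp continuousOn_fst fun _ hp => hp.1
  exact hasDerivAt_intervalIntegral_of_continuousOn_prod hU ht₀
    (((continuous_smoothAbs ε).comp_continuousOn hφ).mul hw')
    (((continuous_smoothSign hε).comp_continuousOn hφ).mul hφt |>.mul hw')
    fun r hr t ht => ((hasDerivAt_smoothAbs hε _).comp t (hderiv r hr t ht)).mul_const _

end ParametricIntegral

/-- Integrating by parts against the flux `v w`, which vanishes at `0` and `R`, turns the transport
term into `(v w)' · smoothAbs ε u`. -/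
theorem integral_smoothSign_mul_le_of_transport {R ε lam : ℝ} (hR : 0 ≤ R) (hε : 0 < ε)
    {v w m' a u u' ut : ℝ → ℝ}
    (hvw : ContinuousOn (fun r => v r * w r) (Icc 0 R)) (hm' : ContinuousOn m' (Icc 0 R))
    (hvw_deriv : ∀ r ∈ Ioo 0 R, HasDerivAt (fun r => v r * w r) (m' r) r)
    (hv0 : v 0 = 0) (hvR : v R = 0)
    (hw : ContinuousOn w (Icc 0 R)) (hw_nonneg : ∀ r ∈ Ioo 0 R, 0 ≤ w r)
    (ha : ContinuousOn a (Icc 0 R)) (hlam : ∀ r ∈ Ioo 0 R, m' r + a r * w r ≤ lam * w r)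
    (hu : ContinuousOn u (Icc 0 R)) (hu' : ContinuousOn u' (Icc 0 R))
    (hu_deriv : ∀ r ∈ Ioo 0 R, HasDerivAt u (u' r) r)
    (hut : ∀ r ∈ Ioo 0 R, ut r = -v r * u' r + a r * u r) :
    ∫ r in 0..R, smoothSign ε (u r) * ut r * w r ≤
      lam * (∫ r in 0..R, smoothAbs ε (u r) * w r) + ε * ∫ r in 0..R, |a r| * w r := by
  have hint : ∀ f : ℝ → ℝ, ContinuousOn f (Icc 0 R) →
      IntervalIntegrable f MeasureTheory.volume 0 R :=
    fun f hf => (hf.mono (uIcc_of_le hR).le).intervalIntegrable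
  have hψ : ContinuousOn (fun r => smoothAbs ε (u r)) (Icc 0 R) :=
    (continuous_smoothAbs ε).comp_continuousOn hu
  have hsgn : ContinuousOn (fun r => smoothSign ε (u r)) (Icc 0 R) :=
    (continuous_smoothSign hε.ne').comp_continuousOn hu
  have hψ_deriv : ∀ r ∈ Ioo 0 R,
      HasDerivAt (fun r => smoothAbs ε (u r)) (smoothSign ε (u r) * u' r) r :=
    fun r hr => (hasDerivAt_smoothAbs hε.ne' (u r)).comp r (hu_deriv r hr)
  have hibp : ∫ r in 0..R, v r * w r * (smoothSign ε (u r) * u' r) =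
      -∫ r in 0..R, m' r * smoothAbs ε (u r) := by
    rw [integral_mul_deriv_eq_deriv_mul_of_hasDerivAt (v := fun r => smoothAbs ε (u r))
      (v' := fun r => smoothSign ε (u r) * u' r) (uIcc_of_le hR ▸ hvw)
      (uIcc_of_le hR ▸ hψ) (by simpa [hR] using hvw_deriv) (by simpa [hR] using hψ_deriv)
      (hint _ hm') (hint _ (hsgn.mul hu')), hv0, hvR]
    ring
  calc ∫ r in 0..R, smoothSign ε (u r) * ut r * w r
      = (∫ r in 0..R, a r * w r * (u r * smoothSign ε (u r))) -
          ∫ r in 0..R, v r * w r * (smoothSign ε (u r) * u' r) := by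
        rw [← integral_sub (hint _ (by fun_prop)) (hint _ (by fun_prop))]
        refine integral_congr_Ioo_of_le hR fun r hr => ?_
        simp only [hut r hr]
        ring
    _ = ∫ r in 0..R, (m' r * smoothAbs ε (u r) + a r * w r * (u r * smoothSign ε (u r))) := by
        rw [hibp, sub_neg_eq_add, add_comm,
          integral_add (hint _ (by fun_prop)) (hint _ (by fun_prop))]
    _ ≤ ∫ r in 0..R, (lam * (smoothAbs ε (u r) * w r) + ε * (|a r| * w r)) := by
        refine integral_mono_on_of_le_Ioo hR (hint _ (by fun_prop)) (hint _ (by fun_prop))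
          fun r hr => ?_
        have hdefect : a r * (u r * smoothSign ε (u r) - smoothAbs ε (u r)) ≤ |a r| * ε := by
          refine (le_abs_self _).trans ?_
          rw [abs_mul]
          exact mul_le_mul_of_nonneg_left (abs_mul_smoothSign_sub_smoothAbs_le hε _)
            (abs_nonneg _)
        calc m' r * smoothAbs ε (u r) + a r * w r * (u r * smoothSign ε (u r))
            = (m' r + a r * w r) * smoothAbs ε (u r) +
                w r * (a r * (u r * smoothSign ε (u r) - smoothAbs ε (u r))) := by ring
          _ ≤ lam * w r * smoothAbs ε (u r) + w r * (|a r| * ε) :=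
            add_le_add (mul_le_mul_of_nonneg_right (hlam r hr) (smoothAbs_nonneg _ _))
              (mul_le_mul_of_nonneg_left hdefect (hw_nonneg r hr))
          _ = lam * (smoothAbs ε (u r) * w r) + ε * (|a r| * w r) := by ring
    _ = lam * (∫ r in 0..R, smoothAbs ε (u r) * w r) + ε * ∫ r in 0..R, |a r| * w r := by
        rw [integral_add ((hint _ (by fun_prop)).const_mul _) ((hint _ (by fun_prop)).const_mul _),
          integral_const_mul, integral_const_mul]

theorem integral_abs_mul_le_of_forall_smoothAbs {a b K C T : ℝ} (hab : a ≤ b)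
    {u₀ u₁ w : ℝ → ℝ} (hu₀ : ContinuousOn u₀ (Icc a b)) (hu₁ : ContinuousOn u₁ (Icc a b))
    (hw : ContinuousOn w (Icc a b)) (hw_nonneg : ∀ r ∈ Icc a b, 0 ≤ w r)
    (h : ∀ ε > 0, ∫ r in a..b, smoothAbs ε (u₁ r) * w r ≤
      gronwallBound (∫ r in a..b, smoothAbs ε (u₀ r) * w r) K (ε * C) T) :
    ∫ r in a..b, |u₁ r| * w r ≤ exp (K * T) * ∫ r in a..b, |u₀ r| * w r := by
  have hint : ∀ f : ℝ → ℝ, ContinuousOn f (Icc a b) →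
      IntervalIntegrable f MeasureTheory.volume a b :=
    fun f hf => (hf.mono (uIcc_of_le hab).le).intervalIntegrable
  have hε_bound : ∀ ε > 0, ∫ r in a..b, |u₁ r| * w r ≤
      gronwallBound ((∫ r in a..b, |u₀ r| * w r) + ε * ∫ r in a..b, w r) K (ε * C) T := by
    intro ε hε
    have h₁ : ∫ r in a..b, |u₁ r| * w r ≤ ∫ r in a..b, smoothAbs ε (u₁ r) * w r :=
      integral_mono_on hab (hint _ (by fun_prop)) (hint _ (by fun_prop)) fun r hr =>
        mul_le_mul_of_nonneg_right (abs_le_smoothAbs ε _) (hw_nonneg r hr)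
    have h₀ : ∫ r in a..b, smoothAbs ε (u₀ r) * w r ≤
        (∫ r in a..b, |u₀ r| * w r) + ε * ∫ r in a..b, w r := by
      rw [← integral_const_mul, ← integral_add (hint _ (by fun_prop)) (hint _ (by fun_prop))]
      refine integral_mono_on hab (hint _ (by fun_prop)) (hint _ (by fun_prop)) fun r hr => ?_
      rw [← add_mul]
      exact mul_le_mul_of_nonneg_right (smoothAbs_le_abs_add _ hε.le) (hw_nonneg r hr)
    exact h₁.trans ((h ε hε).trans (gronwallBound_mono_left K _ T h₀))
  have hlim : Tendsto (fun ε => gronwallBound ((∫ r in a..b, |u₀ r| * w r) +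
      ε * ∫ r in a..b, w r) K (ε * C) T) (𝓝[>] 0)
      (𝓝 (gronwallBound (∫ r in a..b, |u₀ r| * w r) K 0 T)) := by
    have hcont := (continuous_gronwallBound K).comp (by fun_prop :
      Continuous fun ε : ℝ => ((∫ r in a..b, |u₀ r| * w r) + ε * ∫ r in a..b, w r, ε * C, T))
    exact (hcont.tendsto' 0 _ (by simp)).mono_left nhdsWithin_le_nhds
  rw [mul_comm, ← gronwallBound_ε0]
  exact ge_of_tendsto hlim (eventually_nhdsWithin_of_forall hε_bound)

theorem mul_pow_pred_deriv_eq {n : ℕ} (hn : 1 ≤ n) {r : ℝ} (hr : r ≠ 0) (v v' : ℝ) :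
    v' * r ^ (n - 1) + v * ((n - 1 : ℕ) * r ^ (n - 1 - 1)) =
      (v' + ((n - 1 : ℝ) / r) * v) * r ^ (n - 1) := by
  obtain ⟨k, rfl⟩ := Nat.exists_eq_add_of_le' hn
  rcases k with _ | k
  · simp
  · simp only [Nat.add_sub_cancel, Nat.cast_add, Nat.cast_one, add_sub_cancel_right, pow_succ]
    field_simp

theorem stmt_9_general
    (n : ℕ) (hn : 2 ≤ n) (Rs : ℝ) (hRs : 0 < Rs)
    (vs vs' : ℝ → ℝ)
    (hvs : ∀ r ∈ Icc (0:ℝ) Rs, HasDerivAt vs (vs' r) r)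
    (hvs'cont : ContinuousOn vs' (Icc 0 Rs))
    (hvs0 : vs 0 = 0) (hvsRs : vs Rs = 0)
    (gstar : ℝ → ℝ)
    (hgstar : ∀ r ∈ Ioc (0:ℝ) Rs, gstar r = vs' r + ((n - 1 : ℝ) / r) * vs r)
    (a : ℝ → ℝ) (hacont : ContinuousOn a (Icc 0 Rs))
    (lam₂ : ℝ) (hlam₂ : IsGreatest ((fun r => gstar r + a r) '' Icc (0:ℝ) Rs) lam₂)
    (φ φr φt : ℝ → ℝ → ℝ)
    (hφcont : ContinuousOn (fun p : ℝ × ℝ => φ p.1 p.2) (Icc 0 Rs ×ˢ Ici 0))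
    (hφrcont : ContinuousOn (fun p : ℝ × ℝ => φr p.1 p.2) (Icc 0 Rs ×ˢ Ici 0))
    (hφtcont : ContinuousOn (fun p : ℝ × ℝ => φt p.1 p.2) (Icc 0 Rs ×ˢ Ici 0))
    (hφr : ∀ r ∈ Ioo (0:ℝ) Rs, ∀ t ∈ Ioi (0:ℝ),
      HasDerivAt (fun s => φ s t) (φr r t) r)
    (hφt : ∀ r ∈ Ioo (0:ℝ) Rs, ∀ t ∈ Ioi (0:ℝ),
      HasDerivAt (fun τ => φ r τ) (φt r t) t)
    (heq : ∀ r ∈ Ioo (0:ℝ) Rs, ∀ t ∈ Ioi (0:ℝ),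
      φt r t = -vs r * φr r t + a r * φ r t) :
    ∀ t : ℝ, 0 ≤ t →
      (∫ r in (0:ℝ)..Rs, |φ r t| * r ^ (n - 1)) ≤
        Real.exp (lam₂ * t) * ∫ r in (0:ℝ)..Rs, |φ r 0| * r ^ (n - 1) := by
  intro T hT
  have hIcc : [[0, Rs]] = Icc 0 Rs := uIcc_of_le hRs.le
  have hvs_cont : ContinuousOn vs (Icc 0 Rs) := HasDerivAt.continuousOn hvs
  have hflux : ∀ r ∈ Ioo 0 Rs, (vs' r * r ^ (n - 1) + vs r * ((n - 1 : ℕ) * r ^ (n - 1 - 1))) +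
      a r * r ^ (n - 1) ≤ lam₂ * r ^ (n - 1) := fun r hr => by
    rw [mul_pow_pred_deriv_eq (by omega) hr.1.ne', ← hgstar r (Ioo_subset_Ioc_self hr),
      ← add_mul]
    exact mul_le_mul_of_nonneg_right (hlam₂.2 ⟨r, Ioo_subset_Icc_self hr, rfl⟩)
      (pow_nonneg hr.1.le _)
  refine integral_abs_mul_le_of_forall_smoothAbs hRs.le (hφcont.uncurry_right _ self_mem_Ici)
    (hφcont.uncurry_right _ hT) (by fun_prop) (fun r hr => pow_nonneg hr.1 _)
    (C := ∫ r in (0:ℝ)..Rs, |a r| * r ^ (n - 1)) fun ε hε => ?_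
  have hcont : ContinuousOn (fun t => ∫ r in (0:ℝ)..Rs, smoothAbs ε (φ r t) * r ^ (n - 1))
      (Icc 0 T) := continuousOn_intervalIntegral_of_continuousOn_prod isCompact_Icc <| by
    have := hφcont.mono (prod_mono hIcc.le (Icc_subset_Ici_self : Icc 0 T ⊆ Ici 0))
    fun_prop
  simpa using le_gronwallBound_of_hasDerivAt_Ioo hT hcont
    (fun t ht => hasDerivAt_integral_smoothAbs_mul hε.ne' isOpen_Ioi ht.1
      (hφcont.mono (prod_mono hIcc.le Ioi_subset_Ici_self))
      (hφtcont.mono (prod_mono hIcc.le Ioi_subset_Ici_self)) (by fun_prop)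
      (by simpa [hRs.le] using hφt))
    fun t ht => integral_smoothSign_mul_le_of_transport hRs.le hε (hvs_cont.mul (by fun_prop))
      (by fun_prop) (fun r hr => (hvs r (Ioo_subset_Icc_self hr)).mul (hasDerivAt_pow _ r))
      hvs0 hvsRs (by fun_prop) (fun r hr => pow_nonneg hr.1.le _) hacont hflux
      (hφcont.uncurry_right _ ht.1.le) (hφrcont.uncurry_right _ ht.1.le) (fun r hr => hφr r hr t ht.1)
      fun r hr => heq r hr t ht.1

/-- Lemma 4.3: `L¹`-decay for the transport semigroup. If
`∂_t φ = −v_s ∂_r φ + a φ` on `(0,R_s)×(0,∞)` with `φ ∈ C¹([0,R_s]×[0,∞))`, then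
`∫₀^{R_s} |φ(r,t)| r^{n−1} dr ≤ e^{λ₂ t} ∫₀^{R_s} |φ(r,0)| r^{n−1} dr` where
`λ₂ = max_{[0,R_s]} (g* + a)`. -/
theorem stmt_9
    (n : ℕ) (hn : 2 ≤ n) (Rs : ℝ) (hRs : 0 < Rs)
    (vs vs' : ℝ → ℝ)
    (hvs : ∀ r ∈ Icc (0:ℝ) Rs, HasDerivAt vs (vs' r) r)
    (hvs'cont : ContinuousOn vs' (Icc 0 Rs))
    (hvs0 : vs 0 = 0) (hvsRs : vs Rs = 0)
    (gstar : ℝ → ℝ)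
    (hgstar : ∀ r ∈ Ioc (0:ℝ) Rs, gstar r = vs' r + ((n - 1 : ℝ) / r) * vs r)
    (hgstar0 : gstar 0 = n * vs' 0)
    (a : ℝ → ℝ) (hacont : ContinuousOn a (Icc 0 Rs))
    (lam₂ : ℝ) (hlam₂ : IsGreatest ((fun r => gstar r + a r) '' Icc (0:ℝ) Rs) lam₂)
    (φ φr φt : ℝ → ℝ → ℝ)
    (hφcont : ContinuousOn (fun p : ℝ × ℝ => φ p.1 p.2) (Icc 0 Rs ×ˢ Ici 0))
    (hφrcont : ContinuousOn (fun p : ℝ × ℝ => φr p.1 p.2) (Icc 0 Rs ×ˢ Ici 0))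
    (hφtcont : ContinuousOn (fun p : ℝ × ℝ => φt p.1 p.2) (Icc 0 Rs ×ˢ Ici 0))
    (hφr : ∀ r ∈ Ioo (0:ℝ) Rs, ∀ t ∈ Ioi (0:ℝ),
      HasDerivAt (fun s => φ s t) (φr r t) r)
    (hφt : ∀ r ∈ Ioo (0:ℝ) Rs, ∀ t ∈ Ioi (0:ℝ),
      HasDerivAt (fun τ => φ r τ) (φt r t) t)
    (heq : ∀ r ∈ Ioo (0:ℝ) Rs, ∀ t ∈ Ioi (0:ℝ),
      φt r t = -vs r * φr r t + a r * φ r t) :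
    ∀ t : ℝ, 0 ≤ t →
      (∫ r in (0:ℝ)..Rs, |φ r t| * r ^ (n - 1)) ≤
        Real.exp (lam₂ * t) * ∫ r in (0:ℝ)..Rs, |φ r 0| * r ^ (n - 1) :=
  stmt_9_general n hn Rs hRs vs vs' hvs hvs'cont hvs0 hvsRs gstar hgstar a hacont lam₂ hlam₂ φ φr φt
    hφcont hφrcont hφtcont hφr hφt heq
end

section
/- There exists a constant C > 0, depending only on n, R_s, sup_{[0,R_s]}|p| and sup_{[0,R_s]}|b|, such that for every integer k ≥ 3 and every φ ∈ C([0,R_s];ℝ): max_{0≤r≤R_s}|(𝒦_k φ)(r)| ≤ C k^{−1} max_{0≤r≤R_s}|φ(r)|. (This is the operator bound established in the proof of Lemma 5.1, with p = p_s' and b = g_p*.) -/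
/-! Bounding `|b φ| ≤ B M` under each integral, the three terms of `r ^ (k - 1) * (…)` are at most
`B M r / (k - 2)`, `B M r / (n + k)` and `B M R_s / (n + k)`: the first because
`∫_r^{R_s} ρ^{1-k} dρ ≤ r^{2-k} / (k - 2)`, the other two because `∫_0^s ρ^{n+k-1} dρ = s^{n+k} / (n + k)`
and `r ≤ s`. As `θ_k ∈ [0, 1]` the combination costs a factor 2, and `1 / (k - 2) ≤ 3 / k` for `k ≥ 3`. -/

open Set Real intervalIntegral

lemma integral_inv_pow_succ_le {r R : ℝ} (hr : 0 < r) (hrR : r ≤ R) {j : ℕ} (hj : j ≠ 0) :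
    ∫ ρ in r..R, (ρ ^ (j + 1))⁻¹ ≤ (j * r ^ j)⁻¹ := by
  have h0 : (0 : ℝ) ∉ uIcc r R := by
    rw [uIcc_of_le hrR]
    exact fun h => hr.not_ge h.1
  have hint : ∫ ρ in r..R, (ρ ^ (j + 1))⁻¹ = ((r ^ j)⁻¹ - (R ^ j)⁻¹) / j := by
    simp_rw [← zpow_natCast, ← zpow_neg]
    rw [integral_zpow (Or.inr ⟨by omega, h0⟩)]
    have hj' : (j : ℝ) ≠ 0 := by exact_mod_cast hj
    rw [show -((j + 1 : ℕ) : ℤ) + 1 = -(j : ℤ) by push_cast; ring, zpow_neg, zpow_neg,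
      zpow_natCast, zpow_natCast]
    push_cast
    rw [show -((j : ℝ) + 1) + 1 = -j by ring, div_neg, ← neg_div, neg_sub]
  rw [hint, mul_inv, div_eq_mul_inv, mul_comm (j : ℝ)⁻¹]
  gcongr
  exact sub_le_self _ (inv_nonneg.2 (pow_nonneg (hr.le.trans hrR) _))

lemma abs_pow_mul_integral_div_pow_le {f : ℝ → ℝ} {K r R : ℝ} {j : ℕ} (hj : j ≠ 0)
    (hr : 0 ≤ r) (hrR : r ≤ R) (hf : ∀ x ∈ Icc r R, |f x| ≤ K) :
    |r ^ (j + 1) * ∫ ρ in r..R, f ρ / ρ ^ (j + 1)| ≤ K * r / j := by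
  rcases hr.eq_or_lt with rfl | hr
  · simp
  have hK : 0 ≤ K := (abs_nonneg _).trans (hf r ⟨le_rfl, hrR⟩)
  have hcont : ContinuousOn (fun ρ : ℝ => K * (ρ ^ (j + 1))⁻¹) (uIcc r R) := by
    refine continuousOn_const.mul (continuousOn_id.pow _ |>.inv₀ fun x hx => ?_)
    rw [uIcc_of_le hrR] at hx
    exact pow_ne_zero _ (hr.trans_le hx.1).ne'
  have hbound : |∫ ρ in r..R, f ρ / ρ ^ (j + 1)| ≤ ∫ ρ in r..R, K * (ρ ^ (j + 1))⁻¹ := by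
    refine (Real.norm_eq_abs _).symm.trans_le <|
      norm_integral_le_of_norm_le hrR (MeasureTheory.ae_of_all _ fun x hx => ?_) hcont.intervalIntegrable
    have hx0 : 0 < x := hr.trans hx.1
    rw [Real.norm_eq_abs, abs_div, abs_of_pos (pow_pos hx0 _), div_eq_mul_inv]
    gcongr
    exact hf x ⟨hx.1.le, hx.2⟩
  rw [integral_const_mul] at hbound
  calc |r ^ (j + 1) * ∫ ρ in r..R, f ρ / ρ ^ (j + 1)|
      ≤ r ^ (j + 1) * (K * (j * r ^ j)⁻¹) := by
        rw [abs_mul, abs_of_pos (pow_pos hr _)]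
        gcongr
        exact hbound.trans (by gcongr; exact integral_inv_pow_succ_le hr hrR hj)
    _ = K * r / j := by
        field_simp
        ring

lemma abs_integral_pow_mul_le {f : ℝ → ℝ} {K s : ℝ} (q : ℕ) (hs : 0 ≤ s)
    (hf : ∀ x ∈ Icc 0 s, |f x| ≤ K) :
    |∫ ρ in 0..s, ρ ^ q * f ρ| ≤ K * s ^ (q + 1) / (q + 1) := by
  have hbound : |∫ ρ in 0..s, ρ ^ q * f ρ| ≤ ∫ ρ in 0..s, ρ ^ q * K := by
    refine (Real.norm_eq_abs _).symm.trans_le <|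
      norm_integral_le_of_norm_le hs (MeasureTheory.ae_of_all _ fun x hx => ?_)
        ((by fun_prop : Continuous fun ρ : ℝ => ρ ^ q * K).intervalIntegrable _ _)
    rw [Real.norm_eq_abs, abs_mul, abs_of_nonneg (pow_nonneg hx.1.le _)]
    exact mul_le_mul_of_nonneg_left (hf x ⟨hx.1.le, hx.2⟩) (pow_nonneg hx.1.le _)
  rw [integral_mul_const, integral_pow, zero_pow (Nat.succ_ne_zero q)] at hbound
  refine hbound.trans_eq ?_
  ring

lemma abs_pow_mul_integral_pow_mul_div_le {f : ℝ → ℝ} {K r s : ℝ} (j q : ℕ)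
    (hr : 0 ≤ r) (hrs : r ≤ s) (hf : ∀ x ∈ Icc 0 s, |f x| ≤ K) :
    |r ^ j * (∫ ρ in 0..s, ρ ^ q * f ρ) / s ^ (q + j)| ≤ K * s / (q + 1) := by
  have hs : 0 ≤ s := hr.trans hrs
  rcases hs.eq_or_lt with rfl | hs
  · simp
  have hK : 0 ≤ K := (abs_nonneg _).trans (hf 0 ⟨le_rfl, hs.le⟩)
  calc |r ^ j * (∫ ρ in 0..s, ρ ^ q * f ρ) / s ^ (q + j)|
      = r ^ j * |∫ ρ in 0..s, ρ ^ q * f ρ| / s ^ (q + j) := by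
        rw [abs_div, abs_mul, abs_of_nonneg (pow_nonneg hr _), abs_of_pos (pow_pos hs _)]
    _ ≤ s ^ j * (K * s ^ (q + 1) / (q + 1)) / s ^ (q + j) := by
        gcongr
        exact abs_integral_pow_mul_le q hs.le hf
    _ = K * s / (q + 1) := by
        field_simp
        ring

lemma abs_convex_sub_add_le {θ a b c K : ℝ} (hθ₀ : 0 ≤ θ) (hθ₁ : θ ≤ 1)
    (ha : |a| ≤ K) (hb : |b| ≤ K) (hc : |c| ≤ K) :
    |θ * a - (1 - θ) * b + (1 - θ) * c| ≤ 2 * K := by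
  rw [abs_le] at *
  constructor <;> nlinarith

lemma abs_pow_mul_convex_integrals_le {f : ℝ → ℝ} {θ K r R : ℝ} {j q : ℕ} (hj : j ≠ 0)
    (hjq : j ≤ q + 1) (hθ₀ : 0 ≤ θ) (hθ₁ : θ ≤ 1) (hr : 0 ≤ r) (hrR : r ≤ R)
    (hf : ∀ x ∈ Icc 0 R, |f x| ≤ K) :
    |r ^ (j + 1) * (θ * (∫ ρ in r..R, f ρ / ρ ^ (j + 1))
      - (1 - θ) * (∫ ρ in 0..r, ρ ^ q * f ρ) / r ^ (q + (j + 1))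
      + (1 - θ) * (∫ ρ in 0..R, ρ ^ q * f ρ) / R ^ (q + (j + 1)))| ≤ 2 * (K * R / j) := by
  have hK : 0 ≤ K := (abs_nonneg _).trans (hf r ⟨hr, hrR⟩)
  have hj' : (0 : ℝ) < j := by exact_mod_cast Nat.pos_of_ne_zero hj
  have hqj : K * R / (q + 1) ≤ K * R / j :=
    div_le_div_of_nonneg_left (mul_nonneg hK (hr.trans hrR)) hj' (by exact_mod_cast hjq)
  have h₁ : |r ^ (j + 1) * ∫ ρ in r..R, f ρ / ρ ^ (j + 1)| ≤ K * R / j :=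
    (abs_pow_mul_integral_div_pow_le hj hr hrR fun x hx => hf x ⟨hr.trans hx.1, hx.2⟩).trans
      (by gcongr)
  have h₂ : |r ^ (j + 1) * (∫ ρ in 0..r, ρ ^ q * f ρ) / r ^ (q + (j + 1))| ≤ K * R / j :=
    (abs_pow_mul_integral_pow_mul_div_le _ _ hr le_rfl
      fun x hx => hf x ⟨hx.1, hx.2.trans hrR⟩).trans (le_trans (by gcongr) hqj)
  have h₃ : |r ^ (j + 1) * (∫ ρ in 0..R, ρ ^ q * f ρ) / R ^ (q + (j + 1))| ≤ K * R / j :=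
    (abs_pow_mul_integral_pow_mul_div_le _ _ hr hrR hf).trans hqj
  refine le_of_eq_of_le ?_ (abs_convex_sub_add_le hθ₀ hθ₁ h₁ h₂ h₃)
  congr 1
  ring

theorem stmt_11_general
    (n : ℕ) (Rs : ℝ) (hRs : 0 < Rs)
    (p b : ℝ → ℝ) (hpcont : ContinuousOn p (Icc 0 Rs)) (hbcont : ContinuousOn b (Icc 0 Rs))
    (𝒦 : ℕ → (ℝ → ℝ) → ℝ → ℝ)
    (h𝒦 : ∀ k : ℕ, 2 ≤ k → ∀ φ : ℝ → ℝ, ∀ r : ℝ,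
      𝒦 k φ r = r ^ (k - 1) * p r *
        ((k / (n + 2 * (k - 1) : ℝ)) * (∫ ρ in r..Rs, b ρ * φ ρ / ρ ^ (k - 1))
         - (1 - k / (n + 2 * (k - 1) : ℝ)) *
             (∫ ρ in (0:ℝ)..r, ρ ^ (n + k - 1) * b ρ * φ ρ) / r ^ (n + 2 * (k - 1))
         + (1 - k / (n + 2 * (k - 1) : ℝ)) *
             (∫ ρ in (0:ℝ)..Rs, ρ ^ (n + k - 1) * b ρ * φ ρ) / Rs ^ (n + 2 * (k - 1)))) :
    ∃ C > (0:ℝ), ∀ k : ℕ, 3 ≤ k → ∀ φ : ℝ → ℝ, ContinuousOn φ (Icc 0 Rs) →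
      ∀ M : ℝ, (∀ r ∈ Icc (0:ℝ) Rs, |φ r| ≤ M) →
        ∀ r ∈ Icc (0:ℝ) Rs, |𝒦 k φ r| ≤ C * (k : ℝ)⁻¹ * M := by
  obtain ⟨P, hP⟩ := isCompact_Icc.exists_bound_of_continuousOn hpcont
  obtain ⟨B, hB⟩ := isCompact_Icc.exists_bound_of_continuousOn hbcont
  have h0 : (0 : ℝ) ∈ Icc 0 Rs := ⟨le_rfl, hRs.le⟩
  have hP0 : 0 ≤ P := (norm_nonneg _).trans (hP 0 h0)
  have hB0 : 0 ≤ B := (norm_nonneg _).trans (hB 0 h0)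
  refine ⟨6 * (P + 1) * (B + 1) * Rs, by positivity, ?_⟩
  rintro k hk φ - M hM r ⟨hr0, hrR⟩
  have hM0 : 0 ≤ M := (abs_nonneg _).trans (hM 0 h0)
  have hbφ (x : ℝ) (hx : x ∈ Icc 0 Rs) : |b x * φ x| ≤ B * M := by
    rw [abs_mul]
    exact mul_le_mul (hB x hx) (hM x hx) (abs_nonneg _) hB0
  have hassoc (s : ℝ) : ∫ ρ in (0:ℝ)..s, ρ ^ (n + k - 1) * b ρ * φ ρ =
      ∫ ρ in (0:ℝ)..s, ρ ^ (n + k - 1) * (b ρ * φ ρ) := by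
    simp only [mul_assoc]
  obtain ⟨j, rfl⟩ : ∃ j, k = j + 2 := ⟨k - 2, by omega⟩
  have hj : (1 : ℝ) ≤ j := by exact_mod_cast (by omega : 1 ≤ j)
  have hn : (0 : ℝ) ≤ n := n.cast_nonneg
  have hθ₀ : 0 ≤ ((j + 2 : ℕ) : ℝ) / (n + 2 * (((j + 2 : ℕ) : ℝ) - 1)) :=
    div_nonneg (by positivity) (by push_cast; linarith)
  have hθ₁ : ((j + 2 : ℕ) : ℝ) / (n + 2 * (((j + 2 : ℕ) : ℝ) - 1)) ≤ 1 :=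
    div_le_one_of_le₀ (by push_cast; linarith) (by push_cast; linarith)
  have h3j : (j : ℝ)⁻¹ ≤ 3 * ((j + 2 : ℕ) : ℝ)⁻¹ := by
    rw [← div_eq_mul_inv, ← one_div, div_le_div_iff₀ (by linarith) (by positivity)]
    push_cast
    linarith
  rw [h𝒦 _ (by omega), hassoc, hassoc, show j + 2 - 1 = j + 1 by omega,
    show n + 2 * (j + 1) = (n + j + 2 - 1) + (j + 1) by omega, mul_comm _ (p r), mul_assoc, abs_mul]
  calc _ ≤ P * (2 * (B * M * Rs / j)) :=
        mul_le_mul (hP r ⟨hr0, hrR⟩) (abs_pow_mul_convex_integrals_le (by omega) (by omega)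
          hθ₀ hθ₁ hr0 hrR hbφ) (abs_nonneg _) hP0
    _ ≤ (P + 1) * (2 * ((B + 1) * M * Rs * (3 * ((j + 2 : ℕ) : ℝ)⁻¹))) := by
        rw [div_eq_mul_inv]
        gcongr <;> linarith
    _ = 6 * (P + 1) * (B + 1) * Rs * ((j + 2 : ℕ) : ℝ)⁻¹ * M := by ring

/-- Sup-norm bound for the operator `𝒦_k` from the proof of Lemma 5.1:
there is `C > 0` independent of `k` with `‖𝒦_k φ‖_∞ ≤ C k⁻¹ ‖φ‖_∞` for every `k ≥ 3`. -/
theorem stmt_11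
    (n : ℕ) (hn : 2 ≤ n) (Rs : ℝ) (hRs : 0 < Rs)
    (p b : ℝ → ℝ) (hpcont : ContinuousOn p (Icc 0 Rs)) (hbcont : ContinuousOn b (Icc 0 Rs))
    (𝒦 : ℕ → (ℝ → ℝ) → ℝ → ℝ)
    (h𝒦 : ∀ k : ℕ, 2 ≤ k → ∀ φ : ℝ → ℝ, ∀ r : ℝ,
      𝒦 k φ r = r ^ (k - 1) * p r *
        ((k / (n + 2 * (k - 1) : ℝ)) * (∫ ρ in r..Rs, b ρ * φ ρ / ρ ^ (k - 1))
         - (1 - k / (n + 2 * (k - 1) : ℝ)) *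
             (∫ ρ in (0:ℝ)..r, ρ ^ (n + k - 1) * b ρ * φ ρ) / r ^ (n + 2 * (k - 1))
         + (1 - k / (n + 2 * (k - 1) : ℝ)) *
             (∫ ρ in (0:ℝ)..Rs, ρ ^ (n + k - 1) * b ρ * φ ρ) / Rs ^ (n + 2 * (k - 1)))) :
    ∃ C > (0:ℝ), ∀ k : ℕ, 3 ≤ k → ∀ φ : ℝ → ℝ, ContinuousOn φ (Icc 0 Rs) →
      ∀ M : ℝ, (∀ r ∈ Icc (0:ℝ) Rs, |φ r| ≤ M) →
        ∀ r ∈ Icc (0:ℝ) Rs, |𝒦 k φ r| ≤ C * (k : ℝ)⁻¹ * M :=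
  stmt_11_general n Rs hRs p b hpcont hbcont 𝒦 h𝒦
end

section
/- For every α ∈ [1,∞) there exists a constant C_α > 0, independent of k, such that for every integer k ≥ 3 and every φ ∈ L^α([0,R_s], r^{n−1}dr): (∫₀^{R_s}|(𝒦_k φ)(r)|^α r^{n−1} dr)^{1/α} ≤ C_α k^{−1} (∫₀^{R_s}|φ(r)|^α r^{n−1} dr)^{1/α}. (This is estimate (5.8) used in the proof of Lemma 5.2.) -/
/-!
Since `p` and `b` are bounded on `[0, R]` and the weights `θ_k`, `1 - θ_k` lie in `[0, 1]`,
`|𝒦_k φ (r)|` is dominated by `∫₀ᴿ G(r, ρ) |φ(ρ)| dρ`, where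
`G(r, ρ) = (r/ρ)^(k-1)` for `r ≤ ρ`, `(ρ/r)^(n+k-1)` for `ρ ≤ r`, plus `(r/R)^(k-1) (ρ/R)^(n+k-1)`.
With respect to the measure `r^(n-1) dr` this kernel is `G(r, ρ) / ρ^(n-1)`, and both of its
marginal integrals are at most `3R / (k - 2) ≤ 9R / k`: each piece is a power of a ratio `≤ 1`
whose exponent grows with `k`. Schur's test then bounds the operator on `L^α(r^(n-1) dr)` by
`9 R ‖p‖_∞ ‖b‖_∞ / k`.
-/

open Set Real intervalIntegral MeasureTheory

open scoped ENNReal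

section Schur

variable {X Y : Type*} [MeasurableSpace X] [MeasurableSpace Y]

theorem rpow_lintegral_mul_le {μ : Measure Y} {K f : Y → ℝ≥0∞} (hK : Measurable K)
    (hf : Measurable f) {α : ℝ} (hα : 1 ≤ α) :
    (∫⁻ y, K y * f y ∂μ) ^ α ≤ (∫⁻ y, K y ∂μ) ^ (α - 1) * ∫⁻ y, K y * f y ^ α ∂μ := by
  rcases hα.eq_or_lt with rfl | hα
  · simp
  -- Hölder's inequality for `1 * f` with respect to the measure `K dμ`.
  have hpq : (conjExponent α).HolderConjugate α := (HolderConjugate.conjExponent hα).symm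
  have hHolder := ENNReal.lintegral_mul_le_Lp_mul_Lq (μ.withDensity K) hpq
    (aemeasurable_const (b := 1)) hf.aemeasurable
  simp only [Pi.mul_apply, one_mul, ENNReal.one_rpow] at hHolder
  rw [lintegral_withDensity_eq_lintegral_mul _ hK hf,
    lintegral_withDensity_eq_lintegral_mul _ hK (hf.pow_const α), lintegral_const,
    withDensity_apply _ MeasurableSet.univ, one_mul, Measure.restrict_univ] at hHolder
  calc (∫⁻ y, K y * f y ∂μ) ^ α
      ≤ ((∫⁻ y, K y ∂μ) ^ (1 / conjExponent α) * (∫⁻ y, K y * f y ^ α ∂μ) ^ (1 / α)) ^ α :=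
        ENNReal.rpow_le_rpow hHolder (by linarith)
    _ = (∫⁻ y, K y ∂μ) ^ (α - 1) * ∫⁻ y, K y * f y ^ α ∂μ := by
        rw [ENNReal.mul_rpow_of_nonneg _ _ (by linarith), ← ENNReal.rpow_mul, ← ENNReal.rpow_mul,
          one_div_mul_cancel (by linarith), ENNReal.rpow_one, conjExponent]
        congr 2
        field_simp

/-- Schur's test. -/
theorem lintegral_rpow_lintegral_mul_le {ν : Measure X} [SFinite ν] {μ : Measure Y} [SFinite μ]
    {K : X → Y → ℝ≥0∞} (hK : Measurable (Function.uncurry K)) {f : Y → ℝ≥0∞} (hf : Measurable f)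
    {α : ℝ} (hα : 1 ≤ α) {A B : ℝ≥0∞} (hA : ∀ᵐ x ∂ν, ∫⁻ y, K x y ∂μ ≤ A)
    (hB : ∀ᵐ y ∂μ, ∫⁻ x, K x y ∂ν ≤ B) :
    ∫⁻ x, (∫⁻ y, K x y * f y ∂μ) ^ α ∂ν ≤ A ^ (α - 1) * B * ∫⁻ y, f y ^ α ∂μ := by
  have hKf : Measurable (Function.uncurry fun x y => K x y * f y ^ α) :=
    hK.mul ((hf.pow_const α).comp measurable_snd)
  have hKf_int : Measurable fun x => ∫⁻ y, K x y * f y ^ α ∂μ := hKf.lintegral_prod_right'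
  calc ∫⁻ x, (∫⁻ y, K x y * f y ∂μ) ^ α ∂ν
      ≤ ∫⁻ x, A ^ (α - 1) * ∫⁻ y, K x y * f y ^ α ∂μ ∂ν := by
        refine lintegral_mono_ae (hA.mono fun x hx => ?_)
        grw [rpow_lintegral_mul_le hK.of_uncurry_left hf hα, hx]
        linarith
    _ = A ^ (α - 1) * ∫⁻ y, (∫⁻ x, K x y ∂ν) * f y ^ α ∂μ := by
        rw [lintegral_const_mul _ hKf_int, lintegral_lintegral_swap hKf.aemeasurable]
        simp_rw [lintegral_mul_const _ hK.of_uncurry_right]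
    _ ≤ A ^ (α - 1) * ∫⁻ y, B * f y ^ α ∂μ := by
        gcongr A ^ (α - 1) * ?_
        exact lintegral_mono_ae (hB.mono fun y hy => by gcongr)
    _ = A ^ (α - 1) * B * ∫⁻ y, f y ^ α ∂μ := by
        rw [lintegral_const_mul _ (hf.pow_const α), mul_assoc]

end Schur

theorem setLIntegral_ofReal_ite_le {X : Type*} [MeasurableSpace X] {μ : Measure X} {s t : Set X}
    (hs : MeasurableSet s) (ht : MeasurableSet t) {P : X → Prop} [DecidablePred P] {f : X → ℝ}
    (hst : ∀ y ∈ s, P y → y ∈ t) :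
    ∫⁻ y in s, ENNReal.ofReal (if P y then f y else 0) ∂μ ≤
      ∫⁻ y in t, ENNReal.ofReal (f y) ∂μ := by
  calc ∫⁻ y in s, ENNReal.ofReal (if P y then f y else 0) ∂μ
      ≤ ∫⁻ y in s, t.indicator (fun y => ENNReal.ofReal (f y)) y ∂μ := by
        refine setLIntegral_mono' hs fun y hy => ?_
        split_ifs with hP
        · rw [indicator_of_mem (hst y hy hP)]
        · simp
    _ ≤ ∫⁻ y, t.indicator (fun y => ENNReal.ofReal (f y)) y ∂μ := setLIntegral_le_lintegral _ _
    _ = ∫⁻ y in t, ENNReal.ofReal (f y) ∂μ := lintegral_indicator ht _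

theorem setLIntegral_Icc_ofReal_eq {f : ℝ → ℝ} {a b : ℝ} (hab : a ≤ b)
    (hf : ContinuousOn f (Icc a b)) (hf₀ : ∀ x ∈ Icc a b, 0 ≤ f x) :
    ∫⁻ x in Icc a b, ENNReal.ofReal (f x) = ENNReal.ofReal (∫ x in a..b, f x) := by
  rw [integral_of_le hab, ← integral_Icc_eq_integral_Ioc, ofReal_integral_eq_lintegral_ofReal
    hf.integrableOn_Icc ((ae_restrict_iff' measurableSet_Icc).2 (ae_of_all _ hf₀))]

theorem ofReal_mul_abs_integral_le {u v c M : ℝ} {s : Set ℝ} {g w b φ : ℝ → ℝ} (huv : u ≤ v)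
    (hc : 0 ≤ c) (hs : Ioc u v ⊆ s) (hw : ∀ ρ ∈ Ioc u v, 0 ≤ w ρ)
    (hb : ∀ ρ ∈ Ioc u v, |b ρ| ≤ M) (hg : ∀ ρ ∈ Ioc u v, c * |g ρ| = w ρ * |b ρ| * |φ ρ|) :
    ENNReal.ofReal (c * |∫ ρ in u..v, g ρ|) ≤
      ENNReal.ofReal M * ∫⁻ ρ in s, ENNReal.ofReal (w ρ) * ENNReal.ofReal |φ ρ| := by
  calc ENNReal.ofReal (c * |∫ ρ in u..v, g ρ|)
      = ENNReal.ofReal c * ‖∫ ρ in Ioc u v, g ρ‖ₑ := by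
        rw [ENNReal.ofReal_mul hc, integral_of_le huv, Real.enorm_eq_ofReal_abs]
    _ ≤ ENNReal.ofReal c * ∫⁻ ρ in Ioc u v, ‖g ρ‖ₑ := by
        grw [enorm_integral_le_lintegral_enorm]
    _ = ∫⁻ ρ in Ioc u v, ENNReal.ofReal (c * |g ρ|) := by
        rw [← lintegral_const_mul' _ _ ENNReal.ofReal_ne_top]
        simp_rw [Real.enorm_eq_ofReal_abs, ENNReal.ofReal_mul hc]
    _ ≤ ∫⁻ ρ in Ioc u v, ENNReal.ofReal M * (ENNReal.ofReal (w ρ) * ENNReal.ofReal |φ ρ|) := by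
        refine setLIntegral_mono' measurableSet_Ioc fun ρ hρ => ?_
        have hM : 0 ≤ M := (abs_nonneg _).trans (hb ρ hρ)
        rw [← ENNReal.ofReal_mul (hw ρ hρ), ← ENNReal.ofReal_mul hM, hg ρ hρ]
        refine ENNReal.ofReal_le_ofReal ?_
        have := hw ρ hρ
        nlinarith [hb ρ hρ, mul_nonneg this (abs_nonneg (φ ρ))]
    _ ≤ ENNReal.ofReal M * ∫⁻ ρ in s, ENNReal.ofReal (w ρ) * ENNReal.ofReal |φ ρ| := by
        rw [lintegral_const_mul' _ _ ENNReal.ofReal_ne_top]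
        gcongr

theorem integral_div_pow_eq {x : ℝ} (hx : 0 < x) (b : ℕ) :
    ∫ y in (0:ℝ)..x, (y / x) ^ b = x / (b + 1) := by
  rw [integral_comp_div (fun t => t ^ b) hx.ne', zero_div, div_self hx.ne', integral_pow]
  simp [div_eq_mul_inv]

theorem integral_div_pow_le {x R : ℝ} (hx : 0 < x) (hxR : x ≤ R) {a : ℕ} (ha : 2 ≤ a) :
    ∫ y in x..R, (x / y) ^ a ≤ x / (a - 1) := by
  obtain ⟨m, rfl⟩ : ∃ m, a = m + 2 := ⟨a - 2, by omega⟩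
  have hne : ∀ y ∈ uIcc x R, y ≠ 0 := fun y hy => (hx.trans_le (uIcc_of_le hxR ▸ hy).1).ne'
  have hderiv : ∀ y ∈ uIcc x R, HasDerivAt (fun y => -(x / (m + 1)) * (x / y) ^ (m + 1))
      ((x / y) ^ (m + 2)) y := by
    intro y hy
    have hinv : HasDerivAt (fun y => x / y) (x * -(y ^ 2)⁻¹) y := by
      simpa only [div_eq_mul_inv] using (hasDerivAt_inv (hne y hy)).const_mul x
    refine ((hinv.fun_pow (m + 1)).const_mul (-(x / (m + 1)))).congr_deriv ?_
    rw [Nat.add_sub_cancel, pow_add, div_pow x y 2]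
    have := hne y hy
    push_cast
    field_simp
  have hcont : ContinuousOn (fun y => (x / y) ^ (m + 2)) (uIcc x R) :=
    (continuousOn_const.div continuousOn_id hne).pow _
  rw [integral_eq_sub_of_hasDerivAt hderiv hcont.intervalIntegrable, div_self hx.ne']
  have : 0 ≤ x / (m + 1) * (x / R) ^ (m + 1) := by
    have := hx.trans_le hxR
    positivity
  push_cast
  rw [one_pow, show (m : ℝ) + 2 - 1 = m + 1 by ring]
  linarith

theorem abs_mul_mul_sub_add_le {c P M θ X Y Z d₁ d₂ : ℝ} (hc : 0 ≤ c) (hP : |P| ≤ M)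
    (hθ₀ : 0 ≤ θ) (hθ₁ : θ ≤ 1) (hd₁ : 0 < d₁) (hd₂ : 0 < d₂) :
    |c * P * (θ * X - (1 - θ) * Y / d₁ + (1 - θ) * Z / d₂)| ≤
      M * (c * |X| + c / d₁ * |Y| + c / d₂ * |Z|) := by
  have hsum : |θ * X - (1 - θ) * Y / d₁ + (1 - θ) * Z / d₂| ≤ |X| + |Y| / d₁ + |Z| / d₂ := by
    calc |θ * X - (1 - θ) * Y / d₁ + (1 - θ) * Z / d₂|
        ≤ |θ * X| + |-((1 - θ) * (Y / d₁))| + |(1 - θ) * (Z / d₂)| := by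
          rw [mul_div_assoc, mul_div_assoc, sub_eq_add_neg]
          exact abs_add_three _ _ _
      _ = θ * |X| + (1 - θ) * (|Y| / d₁) + (1 - θ) * (|Z| / d₂) := by
          rw [abs_neg, abs_mul, abs_mul, abs_mul, abs_div, abs_div, abs_of_nonneg hθ₀,
            abs_of_nonneg (sub_nonneg.2 hθ₁), abs_of_pos hd₁, abs_of_pos hd₂]
      _ ≤ |X| + |Y| / d₁ + |Z| / d₂ := by
          have := abs_nonneg X
          have : 0 ≤ |Y| / d₁ := by positivity
          have : 0 ≤ |Z| / d₂ := by positivity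
          nlinarith
  have hM : 0 ≤ M := (abs_nonneg P).trans hP
  calc |c * P * (θ * X - (1 - θ) * Y / d₁ + (1 - θ) * Z / d₂)|
      = c * |P| * |θ * X - (1 - θ) * Y / d₁ + (1 - θ) * Z / d₂| := by
        rw [abs_mul, abs_mul, abs_of_nonneg hc]
    _ ≤ c * M * (|X| + |Y| / d₁ + |Z| / d₂) := by gcongr
    _ = M * (c * |X| + c / d₁ * |Y| + c / d₂ * |Z|) := by ring

/-- With `a = k - 1` and `b = n + k - 1` this dominates the kernel of `𝒦_k` with respect to `dρ`.
Both comparisons are non-strict, so the diagonal is counted twice; this keeps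
`div_pow_mul_radialKernel` an exact identity. -/
noncomputable def radialKernel (R : ℝ) (a b : ℕ) (x y : ℝ) : ℝ :=
  (if x ≤ y then (x / y) ^ a else 0) + (if y ≤ x then (y / x) ^ b else 0) +
    (x / R) ^ a * (y / R) ^ b

theorem measurable_radialKernel (R : ℝ) (a b : ℕ) :
    Measurable (Function.uncurry (radialKernel R a b)) := by
  refine ((Measurable.ite (measurableSet_le measurable_fst measurable_snd) ?_ measurable_const).add
    (Measurable.ite (measurableSet_le measurable_snd measurable_fst) ?_ measurable_const)).add ?_
    <;> fun_prop

theorem ofReal_radialKernel {R x y : ℝ} (hR : 0 ≤ R) (hx : 0 ≤ x) (hy : 0 ≤ y) (a b : ℕ) :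
    ENNReal.ofReal (radialKernel R a b x y) =
      ENNReal.ofReal (if x ≤ y then (x / y) ^ a else 0) +
        ENNReal.ofReal (if y ≤ x then (y / x) ^ b else 0) +
        ENNReal.ofReal ((x / R) ^ a * (y / R) ^ b) := by
  have h₁ : 0 ≤ if x ≤ y then (x / y) ^ a else 0 := by split_ifs <;> positivity
  have h₂ : 0 ≤ if y ≤ x then (y / x) ^ b else 0 := by split_ifs <;> positivity
  rw [radialKernel, ENNReal.ofReal_add (add_nonneg h₁ h₂) (by positivity),
    ENNReal.ofReal_add h₁ h₂]

theorem div_pow_mul_radialKernel {x y : ℝ} (hx : 0 < x) (hy : 0 < y) (R : ℝ) (a b m : ℕ) :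
    (x / y) ^ m * radialKernel R a (b + m) x y = radialKernel R b (a + m) y x := by
  have e₁ : (x / y) ^ m * (x / y) ^ a = (x / y) ^ (a + m) := by ring
  have e₂ : (x / y) ^ m * (y / x) ^ (b + m) = (y / x) ^ b := by
    rw [pow_add, mul_left_comm, ← mul_pow, div_mul_div_cancel₀ hy.ne', div_self hx.ne', one_pow,
      mul_one]
  have e₃ : (x / y) ^ m * ((x / R) ^ a * (y / R) ^ (b + m)) =
      (y / R) ^ b * (x / R) ^ (a + m) := by
    have : (x / y) ^ m * (y / R) ^ m = (x / R) ^ m := by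
      rw [← mul_pow, div_mul_div_cancel₀ hy.ne']
    linear_combination (x / R) ^ a * (y / R) ^ b * this
  unfold radialKernel
  split_ifs <;> [linear_combination e₁ + e₂ + e₃; linear_combination e₁ + e₃;
    linear_combination e₂ + e₃; linear_combination e₃]

theorem setLIntegral_ofReal_ite_le_div_pow_le {R x : ℝ} (hx : x ∈ Ioc 0 R) {a : ℕ} (ha : 2 ≤ a) :
    ∫⁻ y in Ioc 0 R, ENNReal.ofReal (if x ≤ y then (x / y) ^ a else 0) ≤
      ENNReal.ofReal (x / (a - 1)) := by
  obtain ⟨hx₀, hxR⟩ := hx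
  have hne : ∀ y ∈ Icc x R, y ≠ 0 := fun y hy => (hx₀.trans_le hy.1).ne'
  calc ∫⁻ y in Ioc 0 R, ENNReal.ofReal (if x ≤ y then (x / y) ^ a else 0)
      ≤ ∫⁻ y in Icc x R, ENNReal.ofReal ((x / y) ^ a) :=
        setLIntegral_ofReal_ite_le measurableSet_Ioc measurableSet_Icc fun y hy hxy => ⟨hxy, hy.2⟩
    _ = ENNReal.ofReal (∫ y in x..R, (x / y) ^ a) :=
        setLIntegral_Icc_ofReal_eq hxR ((continuousOn_const.div continuousOn_id hne).pow _)
          fun y hy => by have := hx₀.trans_le hy.1; positivity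
    _ ≤ ENNReal.ofReal (x / (a - 1)) := ENNReal.ofReal_le_ofReal (integral_div_pow_le hx₀ hxR ha)

theorem setLIntegral_ofReal_ite_div_pow_le {R x : ℝ} (hx : 0 < x) (b : ℕ) :
    ∫⁻ y in Ioc 0 R, ENNReal.ofReal (if y ≤ x then (y / x) ^ b else 0) ≤
      ENNReal.ofReal (x / (b + 1)) := by
  refine (setLIntegral_ofReal_ite_le measurableSet_Ioc measurableSet_Icc
    fun y hy hyx => ⟨hy.1.le, hyx⟩).trans_eq ?_
  rw [setLIntegral_Icc_ofReal_eq hx.le (by fun_prop) fun y hy => by have := hy.1; positivity,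
    integral_div_pow_eq hx]

theorem setLIntegral_radialKernel_le {R x : ℝ} (hx : x ∈ Ioc 0 R) {a b : ℕ} (ha : 2 ≤ a)
    (hab : a ≤ b + 2) :
    ∫⁻ y in Ioc 0 R, ENNReal.ofReal (radialKernel R a b x y) ≤
      ENNReal.ofReal (3 * R / (a - 1)) := by
  obtain ⟨hx₀, hxR⟩ := hx
  have hR : 0 < R := hx₀.trans_le hxR
  have hglobal : ∫⁻ y in Ioc 0 R, ENNReal.ofReal ((x / R) ^ a * (y / R) ^ b) ≤
      ENNReal.ofReal (R / (b + 1)) := by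
    calc ∫⁻ y in Ioc 0 R, ENNReal.ofReal ((x / R) ^ a * (y / R) ^ b)
        ≤ ∫⁻ y in Ioc 0 R, ENNReal.ofReal ((y / R) ^ b) := by
          refine setLIntegral_mono' measurableSet_Ioc fun y hy => ENNReal.ofReal_le_ofReal ?_
          have := hy.1
          exact mul_le_of_le_one_left (by positivity)
            (pow_le_one₀ (by positivity) ((div_le_one hR).2 hxR))
      _ = ∫⁻ y in Ioc 0 R, ENNReal.ofReal (if y ≤ R then (y / R) ^ b else 0) :=
          setLIntegral_congr_fun measurableSet_Ioc fun y hy => by rw [if_pos hy.2]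
      _ ≤ ENNReal.ofReal (R / (b + 1)) := setLIntegral_ofReal_ite_div_pow_le hR b
  have hb : (a : ℝ) - 1 ≤ b + 1 := by
    have : (a : ℝ) ≤ b + 2 := by exact_mod_cast hab
    linarith
  have ha₁ : (0 : ℝ) < a - 1 := by
    have : (2 : ℝ) ≤ a := by exact_mod_cast ha
    linarith
  calc ∫⁻ y in Ioc 0 R, ENNReal.ofReal (radialKernel R a b x y)
      = ∫⁻ y in Ioc 0 R, (ENNReal.ofReal (if x ≤ y then (x / y) ^ a else 0) +
          ENNReal.ofReal (if y ≤ x then (y / x) ^ b else 0) +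
          ENNReal.ofReal ((x / R) ^ a * (y / R) ^ b)) :=
        setLIntegral_congr_fun measurableSet_Ioc fun y hy =>
          ofReal_radialKernel hR.le hx₀.le hy.1.le a b
    _ ≤ ENNReal.ofReal (x / (a - 1)) + ENNReal.ofReal (x / (b + 1)) +
          ENNReal.ofReal (R / (b + 1)) := by
        rw [lintegral_add_right _ (by fun_prop), lintegral_add_right _
          (Measurable.ite measurableSet_Iic (by fun_prop) measurable_const).ennreal_ofReal]
        gcongr
        · exact setLIntegral_ofReal_ite_le_div_pow_le ⟨hx₀, hxR⟩ ha
        · exact setLIntegral_ofReal_ite_div_pow_le hx₀ b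
    _ ≤ ENNReal.ofReal (R / (a - 1) + R / (a - 1) + R / (a - 1)) := by
        rw [← ENNReal.ofReal_add (by positivity) (by positivity),
          ← ENNReal.ofReal_add (by positivity) (by positivity)]
        gcongr
    _ = ENNReal.ofReal (3 * R / (a - 1)) := by ring_nf

theorem ofReal_abs_le_mul_lintegral_radialKernel {n k : ℕ} (hk : 1 ≤ k) {R θ Mp Mb r : ℝ}
    {p b φ : ℝ → ℝ} (hp : ∀ x ∈ Icc 0 R, |p x| ≤ Mp) (hb : ∀ x ∈ Icc 0 R, |b x| ≤ Mb)
    (hθ₀ : 0 ≤ θ) (hθ₁ : θ ≤ 1) (hr : r ∈ Ioc 0 R) :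
    ENNReal.ofReal |r ^ (k - 1) * p r * (θ * (∫ ρ in r..R, b ρ * φ ρ / ρ ^ (k - 1))
        - (1 - θ) * (∫ ρ in (0:ℝ)..r, ρ ^ (n + k - 1) * b ρ * φ ρ) / r ^ (n + 2 * (k - 1))
        + (1 - θ) * (∫ ρ in (0:ℝ)..R, ρ ^ (n + k - 1) * b ρ * φ ρ) / R ^ (n + 2 * (k - 1)))| ≤
      ENNReal.ofReal (Mp * Mb) * ∫⁻ ρ in Ioc 0 R,
        ENNReal.ofReal (radialKernel R (k - 1) (n + k - 1) r ρ) * ENNReal.ofReal |φ ρ| := by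
  obtain ⟨hr₀, hrR⟩ := hr
  have hR : 0 < R := hr₀.trans_le hrR
  have hMp : 0 ≤ Mp := (abs_nonneg _).trans (hp r ⟨hr₀.le, hrR⟩)
  have hsplit : ∀ t : ℝ, t ^ (n + 2 * (k - 1)) = t ^ (k - 1) * t ^ (n + k - 1) := fun t => by
    rw [← pow_add]
    congr 1
    omega
  have hT₁ := ofReal_mul_abs_integral_le (c := r ^ (k - 1)) (b := b)
    (φ := φ) (g := fun ρ => b ρ * φ ρ / ρ ^ (k - 1))
    (w := fun ρ => if r ≤ ρ then (r / ρ) ^ (k - 1) else 0) hrR (by positivity)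
    (Ioc_subset_Ioc_left hr₀.le)
    (fun ρ hρ => by rw [if_pos hρ.1.le]; have := hr₀.trans hρ.1; positivity)
    (fun ρ hρ => hb ρ ⟨(hr₀.trans hρ.1).le, hρ.2⟩) (fun ρ hρ => by
      rw [if_pos hρ.1.le, abs_div, abs_mul, abs_of_pos (pow_pos (hr₀.trans hρ.1) _), div_pow]
      ring)
  have hT₂ := ofReal_mul_abs_integral_le (c := r ^ (k - 1) / r ^ (n + 2 * (k - 1))) (b := b)
    (φ := φ) (g := fun ρ => ρ ^ (n + k - 1) * b ρ * φ ρ)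
    (w := fun ρ => if ρ ≤ r then (ρ / r) ^ (n + k - 1) else 0) hr₀.le (by positivity)
    (Ioc_subset_Ioc_right hrR) (fun ρ hρ => by rw [if_pos hρ.2]; have := hρ.1; positivity)
    (fun ρ hρ => hb ρ ⟨hρ.1.le, hρ.2.trans hrR⟩) (fun ρ hρ => by
      rw [if_pos hρ.2, abs_mul, abs_mul, abs_of_pos (pow_pos hρ.1 _), hsplit, div_pow]
      field_simp)
  have hT₃ := ofReal_mul_abs_integral_le (c := r ^ (k - 1) / R ^ (n + 2 * (k - 1))) (b := b)
    (φ := φ) (g := fun ρ => ρ ^ (n + k - 1) * b ρ * φ ρ)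
    (w := fun ρ => (r / R) ^ (k - 1) * (ρ / R) ^ (n + k - 1)) hR.le (by positivity)
    subset_rfl (fun ρ hρ => by have := hρ.1; positivity)
    (fun ρ hρ => hb ρ ⟨hρ.1.le, hρ.2⟩) (fun ρ hρ => by
      rw [abs_mul, abs_mul, abs_of_pos (pow_pos hρ.1 _), hsplit, div_pow, div_pow]
      field_simp)
  refine (ENNReal.ofReal_le_ofReal (abs_mul_mul_sub_add_le (pow_nonneg hr₀.le _)
    (hp r ⟨hr₀.le, hrR⟩) hθ₀ hθ₁ (pow_pos hr₀ _) (pow_pos hR _))).trans ?_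
  rw [ENNReal.ofReal_mul hMp, ENNReal.ofReal_add (by positivity) (by positivity),
    ENNReal.ofReal_add (by positivity) (by positivity), ENNReal.ofReal_mul hMp, mul_assoc]
  grw [hT₁, hT₂, hT₃, ← mul_add, ← mul_add, le_lintegral_add, le_lintegral_add]
  gcongr ENNReal.ofReal Mp * (ENNReal.ofReal Mb * ?_)
  refine (setLIntegral_congr_fun measurableSet_Ioc fun ρ hρ => ?_).le
  rw [ofReal_radialKernel hR.le hr₀.le hρ.1.le, add_mul, add_mul]

noncomputable def radialMeasure (n : ℕ) (R : ℝ) : Measure ℝ :=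
  (volume.restrict (Ioc 0 R)).withDensity fun r => ENNReal.ofReal (r ^ (n - 1))

instance (n : ℕ) (R : ℝ) : SFinite (radialMeasure n R) := by
  unfold radialMeasure
  infer_instance

theorem lintegral_radialMeasure (n : ℕ) (R : ℝ) (g : ℝ → ℝ≥0∞) :
    ∫⁻ r, g r ∂radialMeasure n R = ∫⁻ r in Ioc 0 R, ENNReal.ofReal (r ^ (n - 1)) * g r :=
  lintegral_withDensity_eq_lintegral_mul_non_measurable _ (by fun_prop)
    (ae_of_all _ fun _ => ENNReal.ofReal_lt_top) g

theorem ae_mem_radialMeasure (n : ℕ) (R : ℝ) : ∀ᵐ r ∂radialMeasure n R, r ∈ Ioc 0 R :=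
  (withDensity_absolutelyContinuous _ _).ae_le (ae_restrict_mem measurableSet_Ioc)

theorem ofReal_integral_abs_rpow_mul_pow_eq {n : ℕ} {R α : ℝ} (hR : 0 ≤ R) (hα : 0 ≤ α)
    {g : ℝ → ℝ} (hg : IntegrableOn (fun r => |g r| ^ α * r ^ (n - 1)) (Ioc 0 R)) :
    ENNReal.ofReal (∫ r in (0:ℝ)..R, |g r| ^ α * r ^ (n - 1)) =
      ∫⁻ r, ENNReal.ofReal |g r| ^ α ∂radialMeasure n R := by
  rw [integral_of_le hR, ofReal_integral_eq_lintegral_ofReal hg ((ae_restrict_iff'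
    measurableSet_Ioc).2 (ae_of_all _ fun r hr => by have := hr.1; positivity)),
    lintegral_radialMeasure]
  refine setLIntegral_congr_fun measurableSet_Ioc fun r hr => ?_
  rw [ENNReal.ofReal_mul (by positivity), ENNReal.ofReal_rpow_of_nonneg (abs_nonneg _) hα,
    mul_comm]

/-- The kernel of `radialKernel R (k - 1) (n + k - 1)` with respect to `radialMeasure n R`. -/
noncomputable def radialSchurKernel (n k : ℕ) (R r ρ : ℝ) : ℝ≥0∞ :=
  ENNReal.ofReal (radialKernel R (k - 1) (n + k - 1) r ρ / ρ ^ (n - 1))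

theorem measurable_radialSchurKernel (n k : ℕ) (R : ℝ) :
    Measurable (Function.uncurry (radialSchurKernel n k R)) :=
  ((measurable_radialKernel _ _ _).div (measurable_snd.pow_const _)).ennreal_ofReal

theorem lintegral_radialSchurKernel_mul (n k : ℕ) (R r : ℝ) (f : ℝ → ℝ≥0∞) :
    ∫⁻ ρ, radialSchurKernel n k R r ρ * f ρ ∂radialMeasure n R =
      ∫⁻ ρ in Ioc 0 R, ENNReal.ofReal (radialKernel R (k - 1) (n + k - 1) r ρ) * f ρ := by
  rw [lintegral_radialMeasure]
  refine setLIntegral_congr_fun measurableSet_Ioc fun ρ hρ => ?_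
  have := hρ.1
  rw [radialSchurKernel, ← mul_assoc, ← ENNReal.ofReal_mul (by positivity),
    mul_div_cancel₀ _ (by positivity)]

theorem lintegral_radialSchurKernel_right_le {n k : ℕ} (hk : 3 ≤ k) {R r : ℝ} (hr : r ∈ Ioc 0 R) :
    ∫⁻ ρ, radialSchurKernel n k R r ρ ∂radialMeasure n R ≤ ENNReal.ofReal (9 * R / k) := by
  have hk₃ : (3 : ℝ) ≤ k := by exact_mod_cast hk
  have h := lintegral_radialSchurKernel_mul n k R r fun _ => 1
  simp only [mul_one] at h
  rw [h]
  refine (setLIntegral_radialKernel_le hr (by omega) (by omega)).trans (ENNReal.ofReal_le_ofReal ?_)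
  rw [Nat.cast_sub (by omega), div_le_div_iff₀ (by push_cast; linarith) (by linarith)]
  push_cast
  nlinarith [hr.1.trans_le hr.2]

theorem lintegral_radialSchurKernel_left_le {n k : ℕ} (hn : 1 ≤ n) (hk : 3 ≤ k) {R ρ : ℝ}
    (hρ : ρ ∈ Ioc 0 R) :
    ∫⁻ r, radialSchurKernel n k R r ρ ∂radialMeasure n R ≤ ENNReal.ofReal (9 * R / k) := by
  have hk₃ : (3 : ℝ) ≤ k := by exact_mod_cast hk
  rw [lintegral_radialMeasure]
  -- Against `r ^ (n - 1) dr` the transposed kernel is again a `radialKernel`, with exponents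
  -- `k` and `n + k - 2`.
  refine (setLIntegral_congr_fun measurableSet_Ioc fun r hr => ?_).trans_le
    ((setLIntegral_radialKernel_le hρ (a := k) (b := n + k - 2) (by omega) (by omega)).trans
      (ENNReal.ofReal_le_ofReal ?_))
  · have h := div_pow_mul_radialKernel hr.1 hρ.1 R (k - 1) k (n - 1)
    rw [show k + (n - 1) = n + k - 1 by omega, show k - 1 + (n - 1) = n + k - 2 by omega] at h
    have := hr.1
    rw [← h, radialSchurKernel, ← ENNReal.ofReal_mul (by positivity), div_pow]
    congr 1
    field_simp [(pow_pos hρ.1 (n - 1)).ne']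
  · rw [div_le_div_iff₀ (by linarith) (by linarith)]
    nlinarith [hρ.1.trans_le hρ.2]

theorem lintegral_rpow_le_of_le_lintegral_radialKernel {n k : ℕ} (hn : 1 ≤ n) (hk : 3 ≤ k)
    {R M α : ℝ} (hM : 0 ≤ M) (hα : 1 ≤ α) {ψ φ : ℝ → ℝ} (hφ : Measurable φ)
    (hψ : ∀ r ∈ Ioc 0 R, ENNReal.ofReal |ψ r| ≤ ENNReal.ofReal M * ∫⁻ ρ in Ioc 0 R,
      ENNReal.ofReal (radialKernel R (k - 1) (n + k - 1) r ρ) * ENNReal.ofReal |φ ρ|) :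
    ∫⁻ r, ENNReal.ofReal |ψ r| ^ α ∂radialMeasure n R ≤
      ENNReal.ofReal (9 * R * M / k) ^ α * ∫⁻ r, ENNReal.ofReal |φ r| ^ α ∂radialMeasure n R := by
  set ν := radialMeasure n R
  set D := ENNReal.ofReal (9 * R / k)
  have hα₀ : 0 ≤ α := by linarith
  have hD : D ^ (α - 1) * D = D ^ α := by
    conv_rhs => rw [← sub_add_cancel α 1,
      ENNReal.rpow_add_of_nonneg _ _ (by linarith) zero_le_one, ENNReal.rpow_one]
  have hψK : ∀ᵐ r ∂ν, ENNReal.ofReal |ψ r| ≤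
      ENNReal.ofReal M * ∫⁻ ρ, radialSchurKernel n k R r ρ * ENNReal.ofReal |φ ρ| ∂ν := by
    filter_upwards [ae_mem_radialMeasure n R] with r hr
    rw [lintegral_radialSchurKernel_mul]
    exact hψ r hr
  calc ∫⁻ r, ENNReal.ofReal |ψ r| ^ α ∂ν
      ≤ ∫⁻ r, (ENNReal.ofReal M *
          ∫⁻ ρ, radialSchurKernel n k R r ρ * ENNReal.ofReal |φ ρ| ∂ν) ^ α ∂ν :=
        lintegral_mono_ae (hψK.mono fun r hr => by gcongr)
    _ = ENNReal.ofReal M ^ α *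
          ∫⁻ r, (∫⁻ ρ, radialSchurKernel n k R r ρ * ENNReal.ofReal |φ ρ| ∂ν) ^ α ∂ν := by
        simp_rw [ENNReal.mul_rpow_of_nonneg _ _ hα₀]
        exact lintegral_const_mul' _ _ (ENNReal.rpow_ne_top_of_nonneg hα₀ ENNReal.ofReal_ne_top)
    _ ≤ ENNReal.ofReal M ^ α * (D ^ (α - 1) * D * ∫⁻ r, ENNReal.ofReal |φ r| ^ α ∂ν) := by
        gcongr
        exact lintegral_rpow_lintegral_mul_le (measurable_radialSchurKernel n k R)
          hφ.abs.ennreal_ofReal hα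
          ((ae_mem_radialMeasure n R).mono fun r => lintegral_radialSchurKernel_right_le hk)
          ((ae_mem_radialMeasure n R).mono fun ρ => lintegral_radialSchurKernel_left_le hn hk)
    _ = ENNReal.ofReal (9 * R * M / k) ^ α * ∫⁻ r, ENNReal.ofReal |φ r| ^ α ∂ν := by
        rw [hD, ← mul_assoc, ← ENNReal.mul_rpow_of_nonneg _ _ hα₀, ← ENNReal.ofReal_mul hM]
        ring_nf

theorem rpow_one_div_le_of_ofReal_le {x y c α : ℝ} (hx : 0 ≤ x) (hy : 0 ≤ y) (hc : 0 ≤ c)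
    (hα : 0 < α) (h : ENNReal.ofReal x ≤ ENNReal.ofReal c ^ α * ENNReal.ofReal y) :
    x ^ (1 / α) ≤ c * y ^ (1 / α) := by
  rw [ENNReal.ofReal_rpow_of_nonneg hc hα.le, ← ENNReal.ofReal_mul (by positivity),
    ENNReal.ofReal_le_ofReal_iff (by positivity)] at h
  calc x ^ (1 / α) ≤ (c ^ α * y) ^ (1 / α) := rpow_le_rpow hx h (by positivity)
    _ = c * y ^ (1 / α) := by
      rw [mul_rpow (by positivity) hy, ← rpow_mul hc, mul_one_div_cancel hα.ne', rpow_one]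

theorem exists_pos_abs_le_of_continuousOn {f : ℝ → ℝ} {s : Set ℝ} (hs : IsCompact s)
    (hf : ContinuousOn f s) : ∃ M > 0, ∀ x ∈ s, |f x| ≤ M := by
  obtain ⟨M, hM⟩ := hs.exists_bound_of_continuousOn hf
  exact ⟨max M 1, by positivity, fun x hx => (hM x hx).trans (le_max_left _ _)⟩

/-- Estimate (5.8) from the proof of Lemma 5.2: for every `α ≥ 1` there is `C_α > 0`
independent of `k` such that `‖𝒦_k φ‖_{L^α(r^{n−1}dr)} ≤ C_α k⁻¹ ‖φ‖_{L^α(r^{n−1}dr)}`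
for every `k ≥ 3`. -/
theorem stmt_12
    (n : ℕ) (hn : 2 ≤ n) (Rs : ℝ) (hRs : 0 < Rs)
    (p b : ℝ → ℝ) (hpcont : ContinuousOn p (Icc 0 Rs)) (hbcont : ContinuousOn b (Icc 0 Rs))
    (𝒦 : ℕ → (ℝ → ℝ) → ℝ → ℝ)
    (h𝒦 : ∀ k : ℕ, 2 ≤ k → ∀ φ : ℝ → ℝ, ∀ r : ℝ,
      𝒦 k φ r = r ^ (k - 1) * p r *
        ((k / (n + 2 * (k - 1) : ℝ)) * (∫ ρ in r..Rs, b ρ * φ ρ / ρ ^ (k - 1))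
         - (1 - k / (n + 2 * (k - 1) : ℝ)) *
             (∫ ρ in (0:ℝ)..r, ρ ^ (n + k - 1) * b ρ * φ ρ) / r ^ (n + 2 * (k - 1))
         + (1 - k / (n + 2 * (k - 1) : ℝ)) *
             (∫ ρ in (0:ℝ)..Rs, ρ ^ (n + k - 1) * b ρ * φ ρ) / Rs ^ (n + 2 * (k - 1)))) :
    ∀ α : ℝ, 1 ≤ α →
      ∃ C > (0:ℝ), ∀ k : ℕ, 3 ≤ k → ∀ φ : ℝ → ℝ, Measurable φ →
        IntervalIntegrable (fun r => |φ r| ^ α * r ^ (n - 1)) volume 0 Rs →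
        (∫ r in (0:ℝ)..Rs, |𝒦 k φ r| ^ α * r ^ (n - 1)) ^ (1 / α) ≤
          C * (k : ℝ)⁻¹ * (∫ r in (0:ℝ)..Rs, |φ r| ^ α * r ^ (n - 1)) ^ (1 / α) := by
  intro α hα
  obtain ⟨Mp, hMp, hp⟩ := exists_pos_abs_le_of_continuousOn isCompact_Icc hpcont
  obtain ⟨Mb, hMb, hb⟩ := exists_pos_abs_le_of_continuousOn isCompact_Icc hbcont
  refine ⟨9 * Rs * (Mp * Mb), by positivity, fun k hk φ hφ hφint => ?_⟩
  have hα₀ : 0 < α := by linarith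
  have hnonneg : ∀ g : ℝ → ℝ, 0 ≤ ∫ r in (0:ℝ)..Rs, |g r| ^ α * r ^ (n - 1) := fun g =>
    integral_nonneg hRs.le fun r hr => by have := hr.1; positivity
  by_cases h𝒦int : IntervalIntegrable (fun r => |𝒦 k φ r| ^ α * r ^ (n - 1)) volume 0 Rs
  swap
  · rw [integral_undef h𝒦int, zero_rpow (by positivity)]
    exact mul_nonneg (by positivity) (rpow_nonneg (hnonneg φ) _)
  have hθ : (k / (n + 2 * (k - 1)) : ℝ) ∈ Icc 0 1 := by
    have : (3 : ℝ) ≤ k := by exact_mod_cast hk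
    have : (2 : ℝ) ≤ n := by exact_mod_cast hn
    exact ⟨div_nonneg (by positivity) (by linarith), (div_le_one (by linarith)).2 (by linarith)⟩
  have key := lintegral_rpow_le_of_le_lintegral_radialKernel (by omega) hk (by positivity) hα hφ
    fun r hr => (h𝒦 k (by omega) φ r).symm ▸
      ofReal_abs_le_mul_lintegral_radialKernel (by omega) hp hb hθ.1 hθ.2 hr
  rw [← ofReal_integral_abs_rpow_mul_pow_eq hRs.le hα₀.le h𝒦int.1,
    ← ofReal_integral_abs_rpow_mul_pow_eq hRs.le hα₀.le hφint.1] at key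
  rw [← div_eq_mul_inv]
  exact rpow_one_div_le_of_ofReal_le (hnonneg _) (hnonneg φ) (by positivity) hα₀ key
end
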